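/- arXiv:1108.3368 — 5 statements merged into one kernel-verified Lean document; each statement's English description precedes it below -/
import Mathlib

section
/- Let F₁,…,F₅ be pairwise non-proportional linear forms in ℂ[x,y,z], and for each i let Gᵢ = (F₁⋯F₅)/Fᵢ. Then every degree-1 syzygy (L₁,…,L₅) ∈ (S₁)⁵ with L₁G₁+⋯+L₅G₅ = 0 satisfies Fᵢ ∣ Lᵢ for all i; consequently the space of degree-1 syzygies of (G₁,…,G₅) has dimension exactly 4. -/
/-!
Linear forms are prime, and a linear form dividing another one is proportional to it.
In a syzygy `∑ Lⱼ Gⱼ = 0` every `Gⱼ` with `j ≠ i` is divisible by `Fᵢ`, so `Fᵢ ∣ Lᵢ Gᵢ`;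
as `Gᵢ` is a product of forms not proportional to `Fᵢ`, primality gives `Fᵢ ∣ Lᵢ`.
Hence `Lᵢ = cᵢ Fᵢ`, and the syzygy condition becomes `(∑ cᵢ) F₁⋯F₅ = 0`: the syzygies are
the image of the hyperplane `∑ cᵢ = 0` under the injective map `c ↦ (cᵢ Fᵢ)ᵢ`.
-/

open MvPolynomial Finset

namespace MvPolynomial

variable {σ K : Type*} [Field K]

theorem irreducible_of_totalDegree_eq_one_of_field {p : MvPolynomial σ K}
    (hp : p.totalDegree = 1) : Irreducible p := by
  refine irreducible_of_totalDegree_eq_one hp fun x hx => isUnit_iff_ne_zero.2 ?_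
  rintro rfl
  have hp0 : p = 0 := ext _ _ fun d => zero_dvd_iff.1 (hx d)
  rw [hp0, totalDegree_zero] at hp
  exact zero_ne_one hp

theorem exists_eq_smul_of_dvd_of_totalDegree_le {p q : MvPolynomial σ K} (hpq : p ∣ q)
    (hdeg : q.totalDegree ≤ p.totalDegree) : ∃ c : K, q = c • p := by
  obtain ⟨r, rfl⟩ := hpq
  rcases eq_or_ne (p * r) 0 with h0 | h0
  · exact ⟨0, by rw [h0, zero_smul]⟩
  rw [totalDegree_mul_of_isDomain (left_ne_zero_of_mul h0) (right_ne_zero_of_mul h0)] at hdeg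
  have hr : r = C (r.coeff 0) := totalDegree_eq_zero_iff_eq_C.1 (by omega)
  exact ⟨r.coeff 0, by rw [smul_eq_C_mul, mul_comm, ← hr]⟩

end MvPolynomial

theorem dvd_of_sum_mul_prod_erase_eq_zero {R ι : Type*} [CommRing R] [Fintype ι] [DecidableEq ι]
    {F L : ι → R} (hL : ∑ i, L i * ∏ j ∈ univ.erase i, F j = 0) {i : ι} (hi : Prime (F i))
    (hndvd : ∀ j ≠ i, ¬ F i ∣ F j) : F i ∣ L i := by
  have hdvd_others : F i ∣ ∑ j ∈ univ.erase i, L j * ∏ k ∈ univ.erase j, F k :=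
    dvd_sum fun j hj => dvd_mul_of_dvd_right
      (dvd_prod_of_mem _ (mem_erase.2 ⟨(ne_of_mem_erase hj).symm, mem_univ i⟩)) _
  have hdvd : F i ∣ L i * ∏ j ∈ univ.erase i, F j := by
    rw [← add_sum_erase _ _ (mem_univ i), add_eq_zero_iff_eq_neg] at hL
    rw [hL, dvd_neg]
    exact hdvd_others
  refine (hi.dvd_or_dvd hdvd).resolve_right fun h => ?_
  obtain ⟨j, hj, hij⟩ := (hi.dvd_finsetProd_iff _).1 h
  exact hndvd j (ne_of_mem_erase hj) hij

noncomputable section Syzygies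

open LinearMap Module

variable {σ K ι : Type*} [Field K] {F : ι → MvPolynomial σ K}

def smulForms (hF1 : ∀ i, (F i).IsHomogeneous 1) :
    (ι → K) →ₗ[K] (ι → homogeneousSubmodule σ K 1) :=
  piMap fun i => toSpanSingleton K _ ⟨F i, hF1 i⟩

theorem smulForms_apply (hF1 : ∀ i, (F i).IsHomogeneous 1) (c : ι → K) (i : ι) :
    (smulForms hF1 c i : MvPolynomial σ K) = c i • F i := rfl

theorem smulForms_injective (hF1 : ∀ i, (F i).IsHomogeneous 1) (hF0 : ∀ i, F i ≠ 0) :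
    Function.Injective (smulForms hF1) := by
  intro c d hcd
  funext i
  have h : c i • F i = d i • F i := by
    rw [← smulForms_apply hF1, ← smulForms_apply hF1, hcd]
  exact smul_left_injective K (hF0 i) h

variable [Fintype ι]

variable (σ K) in
def linearSyzygyMap (G : ι → MvPolynomial σ K) :
    (ι → homogeneousSubmodule σ K 1) →ₗ[K] MvPolynomial σ K :=
  ∑ i, (mulRight K (G i)).comp ((homogeneousSubmodule σ K 1).subtype.comp (proj i))

theorem linearSyzygyMap_apply (G : ι → MvPolynomial σ K) (L : ι → homogeneousSubmodule σ K 1) :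
    linearSyzygyMap σ K G L = ∑ i, (L i : MvPolynomial σ K) * G i := by
  simp [linearSyzygyMap]

variable [DecidableEq ι]

theorem dvd_of_sum_mul_prod_erase_eq_zero_of_totalDegree_eq_one
    (hF : ∀ i, (F i).totalDegree = 1) (hFdist : ∀ i j, i ≠ j → ∀ c : K, F j ≠ c • F i)
    {L : ι → MvPolynomial σ K} (hL : ∑ i, L i * ∏ j ∈ univ.erase i, F j = 0) (i : ι) :
    F i ∣ L i := by
  refine dvd_of_sum_mul_prod_erase_eq_zero hL
    (irreducible_of_totalDegree_eq_one_of_field (hF i)).prime fun j hji hdvd => ?_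
  obtain ⟨c, hc⟩ := exists_eq_smul_of_dvd_of_totalDegree_le hdvd (by rw [hF i, hF j])
  exact hFdist i j hji.symm c hc

theorem linearSyzygyMap_smulForms (hF1 : ∀ i, (F i).IsHomogeneous 1) (c : ι → K) :
    linearSyzygyMap σ K (fun i => ∏ j ∈ univ.erase i, F j) (smulForms hF1 c) =
      (∑ i, c i) • ∏ j, F j := by
  simp_rw [linearSyzygyMap_apply, smulForms_apply, smul_mul_assoc, mul_prod_erase _ _ (mem_univ _),
    sum_smul]

theorem ker_linearSyzygyMap (hF1 : ∀ i, (F i).IsHomogeneous 1) (hF0 : ∀ i, F i ≠ 0)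
    (hFdist : ∀ i j, i ≠ j → ∀ c : K, F j ≠ c • F i) :
    ker (linearSyzygyMap σ K fun i => ∏ j ∈ univ.erase i, F j) =
      (ker (∑ i, proj i : (ι → K) →ₗ[K] K)).map (smulForms hF1) := by
  have hprod : ∏ j, F j ≠ 0 := prod_ne_zero_iff.2 fun j _ => hF0 j
  ext L
  simp only [mem_ker, Submodule.mem_map]
  constructor
  · intro hL
    have hdvd := dvd_of_sum_mul_prod_erase_eq_zero_of_totalDegree_eq_one
      (fun i => (hF1 i).totalDegree (hF0 i)) hFdist ((linearSyzygyMap_apply _ L).symm.trans hL)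
    choose c hc using fun i => exists_eq_smul_of_dvd_of_totalDegree_le (hdvd i)
      (((L i).2.totalDegree_le).trans ((hF1 i).totalDegree (hF0 i)).ge)
    have hL' : L = smulForms hF1 c := funext fun i => Subtype.ext (hc i)
    refine ⟨c, ?_, hL'.symm⟩
    rw [hL', linearSyzygyMap_smulForms] at hL
    simpa [hprod] using hL
  · rintro ⟨c, hc, rfl⟩
    rw [linearSyzygyMap_smulForms]
    simp_all

theorem finrank_ker_linearSyzygyMap_add_one [Nonempty ι] (hF1 : ∀ i, (F i).IsHomogeneous 1)
    (hF0 : ∀ i, F i ≠ 0) (hFdist : ∀ i j, i ≠ j → ∀ c : K, F j ≠ c • F i) :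
    finrank K (ker (linearSyzygyMap σ K fun i => ∏ j ∈ univ.erase i, F j)) + 1 =
      Fintype.card ι := by
  have hsum : (∑ i, proj i : (ι → K) →ₗ[K] K) ≠ 0 := by
    obtain ⟨i⟩ := ‹Nonempty ι›
    intro h
    simpa using LinearMap.congr_fun h (Pi.single i 1)
  rw [ker_linearSyzygyMap hF1 hF0 hFdist,
    ← LinearEquiv.finrank_eq (Submodule.equivMapOfInjective _ (smulForms_injective hF1 hF0) _),
    Dual.finrank_ker_add_one_of_ne_zero hsum, finrank_fintype_fun_eq_card]

end Syzygies

/-- If `F₁,…,F₅` are pairwise non-proportional linear forms in `ℂ[x,y,z]` and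
`Gᵢ = (F₁⋯F₅)/Fᵢ`, then every degree-1 syzygy `(L₁,…,L₅)` of `(G₁,…,G₅)` satisfies
`Fᵢ ∣ Lᵢ` for all `i`, and the space of degree-1 syzygies has dimension exactly 4. -/
theorem degree_one_syzygies
    (F G : Fin 5 → MvPolynomial (Fin 3) ℂ)
    (hF1 : ∀ i, (F i).IsHomogeneous 1) (hF0 : ∀ i, F i ≠ 0)
    (hFdist : ∀ i j, i ≠ j → ∀ c : ℂ, F j ≠ c • F i)
    (hG : ∀ i, G i = ∏ j ∈ Finset.univ.erase i, F j) :
    (∀ L : Fin 5 → ↥(homogeneousSubmodule (Fin 3) ℂ 1),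
        (∑ i, (L i : MvPolynomial (Fin 3) ℂ) * G i) = 0 → ∀ i, F i ∣ (L i : MvPolynomial (Fin 3) ℂ)) ∧
    Module.finrank ℂ
      ↥(LinearMap.ker
        (∑ i : Fin 5,
          (LinearMap.mulRight ℂ (G i)).comp
            (((MvPolynomial.homogeneousSubmodule (Fin 3) ℂ 1).subtype).comp
              (LinearMap.proj (R := ℂ) i)))) = 4 := by
  obtain rfl : G = fun i => ∏ j ∈ univ.erase i, F j := funext hG
  refine ⟨fun L hL => dvd_of_sum_mul_prod_erase_eq_zero_of_totalDegree_eq_one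
    (fun i => (hF1 i).totalDegree (hF0 i)) hFdist hL, ?_⟩
  have hrank := finrank_ker_linearSyzygyMap_add_one hF1 hF0 hFdist
  rw [Fintype.card_fin] at hrank
  exact Nat.add_right_cancel hrank
end

section
/- Let F₁,…,F₅ be pairwise non-proportional linear forms in ℂ[x,y,z] and Gᵢ = (F₁⋯F₅)/Fᵢ. Then the degree-5 graded piece of the ideal I = (G₁,…,G₅) has ℂ-vector-space dimension exactly 11. -/
open MvPolynomial Finset

/-!
For `Gᵢ = ∏_{j ≠ i} Fⱼ` of degree `n - 1`, the degree-`n` piece of `(G₁,…,Gₙ)` is the image of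
`(L₁,…,Lₙ) ↦ ∑ Lᵢ Gᵢ` on `n`-tuples of linear forms. In a syzygy `∑ Lᵢ Gᵢ = 0` the prime `Fᵢ`
divides every `Gₖ` with `k ≠ i` but not `Gᵢ` (the `Fⱼ` are non-proportional), so it divides `Lᵢ`:
`Lᵢ = cᵢ Fᵢ`, and then `(∑ cᵢ) ∏ Fⱼ = 0` gives `∑ cᵢ = 0`. The syzygies thus form a space of
dimension `n - 1`, and the piece has dimension `n · dim S₁ - (n - 1)`, here `5 · 3 - 4 = 11`.
-/

lemma Prime.dvd_of_sum_mul_eq_zero {R ι : Type*} [CommRing R] [Fintype ι] [DecidableEq ι]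
    {p : R} (hp : Prime p) {l g : ι → R} (hsum : ∑ k, l k * g k = 0) {i : ι} (hgi : ¬p ∣ g i)
    (hg : ∀ k, k ≠ i → p ∣ g k) : p ∣ l i := by
  have h : l i * g i = -∑ k ∈ univ.erase i, l k * g k := by
    rw [eq_neg_iff_add_eq_zero, add_sum_erase univ (fun k ↦ l k * g k) (mem_univ i), hsum]
  have hdvd : p ∣ l i * g i :=
    h ▸ (dvd_neg.mpr (dvd_sum fun k hk ↦ (hg k (ne_of_mem_erase hk)).mul_left _))
  exact (hp.dvd_or_dvd hdvd).resolve_right hgi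

namespace MvPolynomial

section CommSemiring

variable {σ R ι : Type*} [CommSemiring R] [Fintype ι]

attribute [local instance] gradedAlgebra in
lemma homogeneousComponent_add_mul_of_isHomogeneous {m : ℕ} {g : MvPolynomial σ R}
    (hg : g.IsHomogeneous m) (k : ℕ) (p : MvPolynomial σ R) :
    homogeneousComponent (k + m) (p * g) = homogeneousComponent k p * g := by
  simpa only [← DirectSum.Decomposition.decompose'_eq, decomposition.decompose'_apply] using
    DirectSum.coe_decompose_mul_add_of_right_mem (homogeneousSubmodule σ R)
      (a := p) (i := k) ((mem_homogeneousSubmodule m g).mpr hg)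

lemma IsHomogeneous.exists_eq_smul_of_dvd {n : ℕ} {f p : MvPolynomial σ R}
    (hf : f.IsHomogeneous n) (hp : p.IsHomogeneous n) (hfp : f ∣ p) : ∃ c : R, p = c • f := by
  obtain ⟨q, rfl⟩ := hfp
  refine ⟨coeff 0 q, ?_⟩
  rw [← homogeneousComponent_eq_self hp, mul_comm, ← zero_add n,
    homogeneousComponent_add_mul_of_isHomogeneous hf, homogeneousComponent_zero, smul_eq_C_mul]

noncomputable def sumMulOfDegree (g : ι → MvPolynomial σ R) (k : ℕ) :
    (ι → homogeneousSubmodule σ R k) →ₗ[R] MvPolynomial σ R :=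
  ∑ i, LinearMap.mulRight R (g i) ∘ₗ (homogeneousSubmodule σ R k).subtype ∘ₗ LinearMap.proj i

lemma sumMulOfDegree_apply (g : ι → MvPolynomial σ R) (k : ℕ)
    (a : ι → homogeneousSubmodule σ R k) :
    sumMulOfDegree g k a = ∑ i, (a i : MvPolynomial σ R) * g i := by
  simp [sumMulOfDegree]

lemma range_sumMulOfDegree {m : ℕ} {g : ι → MvPolynomial σ R}
    (hg : ∀ i, (g i).IsHomogeneous m) (k : ℕ) :
    LinearMap.range (sumMulOfDegree g k) =
      (Ideal.span (Set.range g)).restrictScalars R ⊓ homogeneousSubmodule σ R (k + m) := by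
  apply le_antisymm
  · rintro _ ⟨a, rfl⟩
    rw [sumMulOfDegree_apply]
    refine ⟨sum_mem fun i _ ↦ Ideal.mul_mem_left _ _ (Ideal.subset_span ⟨i, rfl⟩),
      sum_mem fun i _ ↦ ?_⟩
    exact ((mem_homogeneousSubmodule k _).mp (a i).2).mul (hg i)
  · rintro p ⟨hp_span, hp_deg⟩
    obtain ⟨c, rfl⟩ := (Ideal.mem_span_range_iff_exists_fun (R := MvPolynomial σ R)).mp hp_span
    refine ⟨fun i ↦ ⟨homogeneousComponent k (c i), homogeneousComponent_mem k (c i)⟩, ?_⟩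
    rw [sumMulOfDegree_apply, ← homogeneousComponent_eq_self hp_deg, map_sum]
    simp only [homogeneousComponent_add_mul_of_isHomogeneous (hg _)]

end CommSemiring

section Field

variable {σ K ι : Type*} [Field K]

lemma IsHomogeneous.prime_of_degree_one {f : MvPolynomial σ K} (hf : f.IsHomogeneous 1)
    (hf0 : f ≠ 0) : Prime f := by
  refine (irreducible_of_totalDegree_eq_one (hf.totalDegree hf0) fun x hx ↦ ?_).prime
  refine isUnit_iff_ne_zero.mpr fun hx0 ↦ hf0 (MvPolynomial.ext _ _ fun d ↦ ?_)
  simpa [hx0] using hx d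

lemma finrank_homogeneousSubmodule_one [Fintype σ] :
    Module.finrank K (homogeneousSubmodule σ K 1) = Fintype.card σ := by
  rw [homogeneousSubmodule_one_eq_span_X, finrank_span_eq_card (linearIndependent_X σ K)]

variable [Fintype ι] [DecidableEq ι] {F : ι → MvPolynomial σ K}

lemma not_dvd_prod_erase_of_pairwise (hF1 : ∀ i, (F i).IsHomogeneous 1) (hF0 : ∀ i, F i ≠ 0)
    (hF : Pairwise fun i j ↦ ∀ c : K, F j ≠ c • F i) (i : ι) :
    ¬F i ∣ ∏ j ∈ univ.erase i, F j := by
  intro h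
  obtain ⟨j, hj, hij⟩ := ((hF1 i).prime_of_degree_one (hF0 i)).exists_mem_finset_dvd h
  obtain ⟨c, hc⟩ := (hF1 i).exists_eq_smul_of_dvd (hF1 j) hij
  exact hF (ne_of_mem_erase hj).symm c hc

lemma ker_sumMulOfDegree_prod_erase (hF1 : ∀ i, (F i).IsHomogeneous 1) (hF0 : ∀ i, F i ≠ 0)
    (hF : Pairwise fun i j ↦ ∀ c : K, F j ≠ c • F i) :
    LinearMap.ker (sumMulOfDegree (fun i ↦ ∏ j ∈ univ.erase i, F j) 1) =
      (LinearMap.ker (∑ i, LinearMap.proj i : (ι → K) →ₗ[K] K)).map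
        (LinearMap.pi fun i ↦ (LinearMap.proj i).smulRight ⟨F i, hF1 i⟩) := by
  apply le_antisymm
  · intro a ha
    rw [LinearMap.mem_ker, sumMulOfDegree_apply] at ha
    have hdvd (i : ι) : F i ∣ a i :=
      ((hF1 i).prime_of_degree_one (hF0 i)).dvd_of_sum_mul_eq_zero ha
        (not_dvd_prod_erase_of_pairwise hF1 hF0 hF i)
        fun k hk ↦ dvd_prod_of_mem F (mem_erase.mpr ⟨Ne.symm hk, mem_univ i⟩)
    choose c hc using fun i ↦ (hF1 i).exists_eq_smul_of_dvd (a i).2 (hdvd i)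
    have hsum : (∑ i, c i) • ∏ j, F j = 0 := by
      rw [← ha, sum_smul]
      refine sum_congr rfl fun i _ ↦ ?_
      rw [hc i, smul_mul_assoc, mul_prod_erase _ _ (mem_univ i)]
    refine ⟨c, ?_, _root_.funext fun i ↦ Subtype.ext (hc i).symm⟩
    simpa [prod_ne_zero_iff.mpr fun i _ ↦ hF0 i] using hsum
  · rintro _ ⟨c, hc, rfl⟩
    have hc : ∑ i, c i = 0 := by simpa using hc
    simp [sumMulOfDegree_apply, mul_prod_erase, ← sum_smul, hc]

lemma finrank_ker_sum_proj [Nonempty ι] :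
    Module.finrank K (LinearMap.ker (∑ i, LinearMap.proj i : (ι → K) →ₗ[K] K)) + 1 =
      Fintype.card ι := by
  have hsurj : Function.Surjective (∑ i, LinearMap.proj i : (ι → K) →ₗ[K] K) := fun x ↦
    ⟨Pi.single (Classical.arbitrary ι) x, by simp⟩
  have := LinearMap.finrank_range_add_finrank_ker (∑ i, LinearMap.proj i : (ι → K) →ₗ[K] K)
  rw [LinearMap.range_eq_top.mpr hsurj, finrank_top, Module.finrank_self,
    Module.finrank_fintype_fun_eq_card] at this
  omega

lemma finrank_ker_sumMulOfDegree_prod_erase [Nonempty ι] (hF1 : ∀ i, (F i).IsHomogeneous 1)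
    (hF0 : ∀ i, F i ≠ 0) (hF : Pairwise fun i j ↦ ∀ c : K, F j ≠ c • F i) :
    Module.finrank K (LinearMap.ker (sumMulOfDegree (fun i ↦ ∏ j ∈ univ.erase i, F j) 1)) + 1 =
      Fintype.card ι := by
  have hinj : Function.Injective
      (LinearMap.pi fun i ↦ (LinearMap.proj i).smulRight ⟨F i, hF1 i⟩ :
        (ι → K) →ₗ[K] ι → homogeneousSubmodule σ K 1) := by
    rw [← LinearMap.ker_eq_bot, LinearMap.ker_eq_bot']
    intro c hc
    funext i
    simpa [hF0 i] using congr_arg (fun a ↦ (a i : MvPolynomial σ K)) hc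
  rw [ker_sumMulOfDegree_prod_erase hF1 hF0 hF,
    ← LinearEquiv.finrank_eq (Submodule.equivMapOfInjective _ hinj _), finrank_ker_sum_proj]

theorem finrank_span_prod_erase_inf_homogeneousSubmodule [Fintype σ] [Nonempty ι]
    (hF1 : ∀ i, (F i).IsHomogeneous 1) (hF0 : ∀ i, F i ≠ 0)
    (hF : Pairwise fun i j ↦ ∀ c : K, F j ≠ c • F i) :
    Module.finrank K ↥((Ideal.span (Set.range fun i ↦ ∏ j ∈ univ.erase i, F j)).restrictScalars K
        ⊓ homogeneousSubmodule σ K (Fintype.card ι)) + (Fintype.card ι - 1) =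
      Fintype.card ι * Fintype.card σ := by
  have hG (i : ι) : (∏ j ∈ univ.erase i, F j).IsHomogeneous (Fintype.card ι - 1) := by
    simpa [card_erase_of_mem] using IsHomogeneous.prod (univ.erase i) F (fun _ ↦ 1) fun j _ ↦ hF1 j
  have hdeg : 1 + (Fintype.card ι - 1) = Fintype.card ι := by
    have := Fintype.card_pos (α := ι)
    omega
  have : Module.Finite K (homogeneousSubmodule σ K 1) :=
    Module.Finite.iff_fg.mpr (homogeneousSubmodule_fg σ K 1)
  have hrank := LinearMap.finrank_range_add_finrank_ker
    (sumMulOfDegree (fun i ↦ ∏ j ∈ univ.erase i, F j) 1)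
  rw [range_sumMulOfDegree hG, hdeg, Module.finrank_pi_fintype, finrank_homogeneousSubmodule_one,
    sum_const, card_univ, smul_eq_mul] at hrank
  have := finrank_ker_sumMulOfDegree_prod_erase hF1 hF0 hF
  omega

end Field

end MvPolynomial

/-- If `F₁,…,F₅` are pairwise non-proportional linear forms in `ℂ[x,y,z]` and
`Gᵢ = (F₁⋯F₅)/Fᵢ`, then the degree-5 graded piece of the ideal `I = (G₁,…,G₅)`
has ℂ-dimension exactly 11. -/
theorem degree_five_piece_of_ideal
    (F G : Fin 5 → MvPolynomial (Fin 3) ℂ)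
    (hF1 : ∀ i, (F i).IsHomogeneous 1) (hF0 : ∀ i, F i ≠ 0)
    (hFdist : ∀ i j, i ≠ j → ∀ c : ℂ, F j ≠ c • F i)
    (hG : ∀ i, G i = ∏ j ∈ Finset.univ.erase i, F j) :
    Module.finrank ℂ
      ↥((Submodule.restrictScalars ℂ
          (Ideal.span (Set.range G) : Ideal (MvPolynomial (Fin 3) ℂ))) ⊓
        (MvPolynomial.homogeneousSubmodule (Fin 3) ℂ 5)) = 11 := by
  obtain rfl : G = fun i ↦ ∏ j ∈ univ.erase i, F j := funext hG
  have := finrank_span_prod_erase_inf_homogeneousSubmodule hF1 hF0 hFdist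
  rw [Fintype.card_fin, Fintype.card_fin] at this
  omega
end

section
/- Let C₁ and C₂ be plane cubic curves in ℙ²(ℂ) meeting in exactly 9 distinct points P₁,…,P₉, with defining cubics F₁, F₂. Then no 4 of the points P₁,…,P₈ are collinear. -/
open MvPolynomial

private lemma degree_one_single {d : Fin 3 →₀ ℕ} (hd : Finsupp.degree d = 1) :
    ∃ m : Fin 3, d = Finsupp.single m 1 := by
  have hsum : d 0 + d 1 + d 2 = 1 := by
    have h : ∑ m : Fin 3, d m = Finsupp.degree d := by
      rw [Finsupp.degree]
      exact (Finset.sum_subset (Finset.subset_univ d.support)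
        (fun x _ hx => by simpa using hx)).symm
    rw [hd] at h; simpa [Fin.sum_univ_three] using h
  rcases (show (d 0 = 1 ∧ d 1 = 0 ∧ d 2 = 0) ∨ (d 0 = 0 ∧ d 1 = 1 ∧ d 2 = 0) ∨
      (d 0 = 0 ∧ d 1 = 0 ∧ d 2 = 1) by omega) with h | h | h
  · exact ⟨0, Finsupp.ext fun n => by
      fin_cases n <;> simp [Finsupp.single_apply, h.1, h.2.1, h.2.2]⟩
  · exact ⟨1, Finsupp.ext fun n => by
      fin_cases n <;> simp [Finsupp.single_apply, h.1, h.2.1, h.2.2]⟩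
  · exact ⟨2, Finsupp.ext fun n => by
      fin_cases n <;> simp [Finsupp.single_apply, h.1, h.2.1, h.2.2]⟩

private lemma eval_smul_hom {φ : MvPolynomial (Fin 3) ℂ} {n : ℕ}
    (h : φ.IsHomogeneous n) (c : ℂ) (w : Fin 3 → ℂ) :
    eval (c • w) φ = c ^ n * eval w φ := by
  rw [eval_eq', eval_eq', Finset.mul_sum]
  refine Finset.sum_congr rfl fun d hd => ?_
  have hdeg : Finsupp.degree d = n := by
    rw [Finsupp.degree_eq_weight_one]
    exact h (mem_support_iff.mp hd)
  have hsum : ∑ m : Fin 3, d m = n := by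
    rw [← hdeg, Finsupp.degree]
    exact (Finset.sum_subset (Finset.subset_univ d.support)
      (fun x _ hx => by simpa using hx)).symm
  have hprod : ∏ m : Fin 3, (c • w) m ^ d m = c ^ n * ∏ m : Fin 3, w m ^ d m := by
    calc ∏ m : Fin 3, (c • w) m ^ d m = ∏ m : Fin 3, (c ^ d m * w m ^ d m) := by
          refine Finset.prod_congr rfl fun m _ => ?_
          simp [mul_pow]
      _ = (∏ m : Fin 3, c ^ d m) * ∏ m : Fin 3, w m ^ d m := Finset.prod_mul_distrib
      _ = c ^ n * ∏ m : Fin 3, w m ^ d m := by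
          rw [Finset.prod_pow_eq_pow_sum, hsum]
  rw [hprod]; ring

private lemma hom1_rep {L : MvPolynomial (Fin 3) ℂ} (hL : L.IsHomogeneous 1) :
    L = ∑ m : Fin 3, monomial (Finsupp.single m 1) (coeff (Finsupp.single m 1) L) := by
  ext d
  rw [coeff_sum]
  simp only [coeff_monomial]
  by_cases hd : coeff d L = 0
  · rw [hd]
    refine (Finset.sum_eq_zero fun m _ => ?_).symm
    split_ifs with h
    · rw [h, hd]
    · rfl
  · obtain ⟨m₀, rfl⟩ := degree_one_single
      (by rw [Finsupp.degree_eq_weight_one]; exact hL hd)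
    rw [Finset.sum_eq_single m₀]
    · simp
    · intro b _ hb
      rw [if_neg]
      exact fun hcontra => hb (Finsupp.single_left_injective one_ne_zero hcontra)
    · simp


/-- If two plane cubics meet in exactly 9 distinct points `P₁,…,P₉` of ℙ²(ℂ),
then no 4 of the points `P₁,…,P₈` are collinear. -/
theorem no_four_of_eight_collinear
    (F₁ F₂ : MvPolynomial (Fin 3) ℂ)
    (h₁ : F₁.IsHomogeneous 3) (h₂ : F₂.IsHomogeneous 3)
    (h₁0 : F₁ ≠ 0) (h₂0 : F₂ ≠ 0)
    (P : Fin 9 → (Fin 3 → ℂ))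
    (hP0 : ∀ i, P i ≠ 0)
    (hPdist : ∀ i j, i ≠ j → ∀ c : ℂ, P j ≠ c • P i)
    (hPF₁ : ∀ i, eval (P i) F₁ = 0)
    (hPF₂ : ∀ i, eval (P i) F₂ = 0)
    (hexact : ∀ v : Fin 3 → ℂ, v ≠ 0 → eval v F₁ = 0 → eval v F₂ = 0 →
      ∃ i, ∃ c : ℂ, c ≠ 0 ∧ v = c • P i) :
    ¬ ∃ (i j k l : Fin 9) (L : MvPolynomial (Fin 3) ℂ),
        i ≠ j ∧ i ≠ k ∧ i ≠ l ∧ j ≠ k ∧ j ≠ l ∧ k ≠ l ∧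
        i ≠ 8 ∧ j ≠ 8 ∧ k ≠ 8 ∧ l ≠ 8 ∧
        L.IsHomogeneous 1 ∧ L ≠ 0 ∧
        eval (P i) L = 0 ∧ eval (P j) L = 0 ∧ eval (P k) L = 0 ∧ eval (P l) L = 0 := by
  rintro ⟨i, j, k, l, L, hij, hik, hil, hjk, hjl, hkl, -, -, -, -, hL1, hL0, hLi, hLj, hLk, hLl⟩
  classical
  set a : Fin 3 → ℂ := fun m => coeff (Finsupp.single m 1) L with ha
  have hrep : ∀ w : Fin 3 → ℂ, eval w L = ∑ m : Fin 3, a m * w m := by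
    intro w
    conv_lhs => rw [hom1_rep hL1]
    simp [eval_monomial, Finsupp.prod_single_index, ha]
  have ha0 : a ≠ 0 := by
    intro h
    apply hL0
    rw [hom1_rep hL1]
    refine Finset.sum_eq_zero fun m _ => ?_
    have hm : a m = 0 := congrFun h m
    rw [show coeff (Finsupp.single m 1) L = a m from rfl, hm, monomial_zero]
  let f : (Fin 3 → ℂ) →ₗ[ℂ] ℂ :=
    { toFun := fun w => ∑ m : Fin 3, a m * w m
      map_add' := fun w w' => by
        simp [mul_add, Finset.sum_add_distrib]
      map_smul' := fun r w => by
        simp only [Pi.smul_apply, smul_eq_mul, RingHom.id_apply, Finset.mul_sum]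
        exact Finset.sum_congr rfl fun m _ => by ring }
  have hker : ∀ w, eval w L = 0 → w ∈ LinearMap.ker f := by
    intro w hw
    rw [LinearMap.mem_ker]
    show ∑ m : Fin 3, a m * w m = 0
    rw [← hrep w]; exact hw
  have hf0 : f ≠ 0 := by
    obtain ⟨m, hm⟩ : ∃ m, a m ≠ 0 := by
      by_contra h; push_neg at h; exact ha0 (funext h)
    intro h
    apply hm
    have hval := DFunLike.congr_fun h (Pi.single m 1)
    simpa [f, Pi.single_apply, mul_ite, Finset.sum_ite_eq'] using hval
  have hrange : Module.finrank ℂ (LinearMap.range f) = 1 := by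
    have h1 : Module.finrank ℂ (LinearMap.range f) ≤ 1 := by
      simpa using Submodule.finrank_le (LinearMap.range f)
    have h2 : LinearMap.range f ≠ ⊥ := by rwa [ne_eq, LinearMap.range_eq_bot]
    have h3 : Module.finrank ℂ (LinearMap.range f) ≠ 0 := by
      rwa [ne_eq, Submodule.finrank_eq_zero]
    omega
  have hkerrank : Module.finrank ℂ (LinearMap.ker f) = 2 := by
    have hrn := LinearMap.finrank_range_add_finrank_ker f
    rw [hrange] at hrn
    have h3 : Module.finrank ℂ (Fin 3 → ℂ) = 3 := by simp
    omega
  have hpair : ∀ (s t : ℂ), s • P i + t • P j = 0 → s = 0 ∧ t = 0 := by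
    intro s t hst
    have ht : t = 0 := by
      by_contra ht
      refine hPdist i j hij (-(s/t)) (funext fun m => ?_)
      have h1 := congrFun hst m
      simp only [Pi.add_apply, Pi.smul_apply, smul_eq_mul, Pi.zero_apply] at h1
      simp only [Pi.smul_apply, smul_eq_mul]
      field_simp
      linear_combination h1
    subst ht
    have hs0 : s • P i = 0 := by simpa using hst
    rcases smul_eq_zero.mp hs0 with h | h
    · exact ⟨h, rfl⟩
    · exact absurd h (hP0 i)
  have hLI : LinearIndependent ℂ ![P i, P j] := by
    rw [LinearIndependent.pair_iff]
    exact fun s t hst => hpair s t hst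
  have hspan : Submodule.span ℂ ({P i, P j} : Set (Fin 3 → ℂ)) = LinearMap.ker f := by
    apply Submodule.eq_of_le_of_finrank_le
    · rw [Submodule.span_le]
      intro w hw
      rcases Set.mem_insert_iff.mp hw with rfl | hw
      · exact hker _ hLi
      · rw [Set.mem_singleton_iff] at hw; subst hw
        exact hker _ hLj
    · rw [hkerrank]
      have hr : Set.range ![P i, P j] = ({P i, P j} : Set (Fin 3 → ℂ)) := by
        ext w
        simp only [Set.mem_range, Fin.exists_fin_two]
        constructor <;> rintro (rfl | rfl) <;> simp
      have h2 : Module.finrank ℂ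
          ↥(Submodule.span ℂ (Set.range ![P i, P j])) = 2 := by
        rw [finrank_span_eq_card hLI]; simp
      rw [← hr, h2]
  have hcoords : ∀ m : Fin 9, eval (P m) L = 0 → ∃ α β : ℂ, α • P i + β • P j = P m := by
    intro m hm
    have hmem : P m ∈ Submodule.span ℂ ({P i, P j} : Set (Fin 3 → ℂ)) := by
      rw [hspan]; exact hker _ hm
    exact Submodule.mem_span_pair.mp hmem
  obtain ⟨αk, βk, hk⟩ := hcoords k hLk
  obtain ⟨αl, βl, hl⟩ := hcoords l hLl
  obtain ⟨c', hc'⟩ := Infinite.exists_notMem_finset ({0, βk * αk⁻¹, βl * αl⁻¹} : Finset ℂ)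
  have hcne : ∀ x ∈ ({0, βk * αk⁻¹, βl * αl⁻¹} : Finset ℂ), c' ≠ x :=
    fun x hx h => hc' (h ▸ hx)
  have hc'0 : c' ≠ 0 := hcne 0 (by simp)
  have hc'k : c' ≠ βk * αk⁻¹ := hcne _ (by simp)
  have hc'l : c' ≠ βl * αl⁻¹ := hcne _ (by simp)
  -- denominators
  have hdi : c' * 1 - 0 ≠ 0 := by simpa using hc'0
  have hdj : c' * 0 - 1 ≠ 0 := by norm_num
  have hdk : c' * αk - βk ≠ 0 := by
    intro h
    by_cases hα : αk = 0
    · have hβ : βk = 0 := by linear_combination c' * hα - h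
      apply hP0 k; rw [← hk, hα, hβ]; simp
    · apply hc'k
      field_simp
      linear_combination h
  have hdl : c' * αl - βl ≠ 0 := by
    intro h
    by_cases hα : αl = 0
    · have hβ : βl = 0 := by linear_combination c' * hα - h
      apply hP0 l; rw [← hl, hα, hβ]; simp
    · apply hc'l
      field_simp
      linear_combination h
  -- the restriction of a cubic to the line through P i, P j
  let g : Fin 3 → Polynomial ℂ := fun n =>
    Polynomial.C (P i n) + Polynomial.C (P i n + c' * P j n) * Polynomial.X
  have hgdeg : ∀ n, (g n).natDegree ≤ 1 := by
    intro n
    refine (Polynomial.natDegree_add_le _ _).trans (max_le (by simp) ?_)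
    exact (Polynomial.natDegree_C_mul_le _ _).trans (by simp)
  have hqeval : ∀ (F : MvPolynomial (Fin 3) ℂ) (t : ℂ),
      (MvPolynomial.aeval g F).eval t
        = eval (fun n => P i n + (P i n + c' * P j n) * t) F := by
    intro F t
    rw [← Polynomial.coe_aeval_eq_eval, comp_aeval_apply g (Polynomial.aeval t) F]
    have hfe : (fun n => (Polynomial.aeval t) (g n))
        = fun n => P i n + (P i n + c' * P j n) * t := by
      funext n; simp [g]
    rw [hfe, ← MvPolynomial.coe_aeval_eq_eval]
    rfl
  have hroot : ∀ (F : MvPolynomial (Fin 3) ℂ), F.IsHomogeneous 3 →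
      ∀ (m : Fin 9) (α β : ℂ), α • P i + β • P j = P m → eval (P m) F = 0 →
      c' * α - β ≠ 0 →
      (MvPolynomial.aeval g F).eval (β / (c' * α - β)) = 0 := by
    intro F hF m α β hco hFm hden
    rw [hqeval]
    have hfun : (fun n => P i n + (P i n + c' * P j n) * (β / (c' * α - β)))
        = (c' / (c' * α - β)) • P m := by
      funext n
      have hcn := congrFun hco n
      simp only [Pi.add_apply, Pi.smul_apply, smul_eq_mul] at hcn
      simp only [Pi.smul_apply, smul_eq_mul]
      rw [← hcn]
      field_simp
      ring
    rw [hfun, eval_smul_hom hF, hFm, mul_zero]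
  -- distinctness of the root parameters
  have tdist : ∀ (m m' : Fin 9) (α β α' β' : ℂ), m ≠ m' →
      α • P i + β • P j = P m → α' • P i + β' • P j = P m' →
      c' * α - β ≠ 0 → c' * α' - β' ≠ 0 →
      β / (c' * α - β) ≠ β' / (c' * α' - β') := by
    intro m m' α β α' β' hne hco hco' hd hd' heq
    rw [div_eq_div_iff hd hd'] at heq
    have h0 : c' * (β * α' - β' * α) = 0 := by linear_combination heq
    have hcross : β * α' = β' * α := by
      rcases mul_eq_zero.mp h0 with h | h
      · exact absurd h hc'0
      · linear_combination h
    by_cases hα : α = 0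
    · have hβ : β ≠ 0 := by
        intro hβ; apply hP0 m; rw [← hco, hα, hβ]; simp
      have hα' : α' = 0 := by
        have hba : β * α' = 0 := by rw [hcross, hα, mul_zero]
        rcases mul_eq_zero.mp hba with h | h
        · exact absurd h hβ
        · exact h
      refine hPdist m m' hne (β' * β⁻¹) ?_
      rw [← hco, ← hco', hα, hα']
      funext n
      simp only [Pi.add_apply, Pi.smul_apply, smul_eq_mul]
      field_simp
      ring
    · refine hPdist m m' hne (α' * α⁻¹) ?_
      rw [← hco, ← hco']
      funext n
      simp only [Pi.add_apply, Pi.smul_apply, smul_eq_mul]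
      field_simp
      linear_combination (-(P j n)) * hcross
  have hki : (1:ℂ) • P i + (0:ℂ) • P j = P i := by simp
  have hkj : (0:ℂ) • P i + (1:ℂ) • P j = P j := by simp
  have hmj : (1:ℂ) / (c' * 0 - 1) = -1 := by norm_num
  -- pairwise distinctness of the four roots 0, -1, τk, τl
  have ht01 : (0:ℂ) ≠ -1 := by norm_num
  have ht0k : (0:ℂ) ≠ βk / (c' * αk - βk) := by
    have := tdist i k 1 0 αk βk hik hki hk hdi hdk
    simpa using this
  have ht0l : (0:ℂ) ≠ βl / (c' * αl - βl) := by
    have := tdist i l 1 0 αl βl hil hki hl hdi hdl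
    simpa using this
  have ht1k : (-1:ℂ) ≠ βk / (c' * αk - βk) := by
    have := tdist j k 0 1 αk βk hjk hkj hk hdj hdk
    rwa [hmj] at this
  have ht1l : (-1:ℂ) ≠ βl / (c' * αl - βl) := by
    have := tdist j l 0 1 αl βl hjl hkj hl hdj hdl
    rwa [hmj] at this
  have htkl : βk / (c' * αk - βk) ≠ βl / (c' * αl - βl) :=
    tdist k l αk βk αl βl hkl hk hl hdk hdl
  -- the restricted cubic vanishes identically
  have hzero : ∀ (F : MvPolynomial (Fin 3) ℂ), F.IsHomogeneous 3 →
      eval (P i) F = 0 → eval (P j) F = 0 → eval (P k) F = 0 → eval (P l) F = 0 →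
      ∀ t : ℂ, eval (fun n => P i n + (P i n + c' * P j n) * t) F = 0 := by
    intro F hF hFi hFj hFk hFl t
    have hq0 : MvPolynomial.aeval g F = 0 := by
      apply Polynomial.eq_zero_of_natDegree_lt_card_of_eval_eq_zero' _
        ({0, -1, βk / (c' * αk - βk), βl / (c' * αl - βl)} : Finset ℂ)
      · intro x hx
        simp only [Finset.mem_insert, Finset.mem_singleton] at hx
        rcases hx with rfl | rfl | rfl | rfl
        · have := hroot F hF i 1 0 hki hFi hdi
          simpa using this
        · have := hroot F hF j 0 1 hkj hFj hdj
          rwa [hmj] at this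
        · exact hroot F hF k αk βk hk hFk hdk
        · exact hroot F hF l αl βl hl hFl hdl
      · have hcard : ({0, -1, βk / (c' * αk - βk), βl / (c' * αl - βl)} : Finset ℂ).card
            = 4 := by
          rw [Finset.card_insert_of_notMem (by simp [ht01, ht0k, ht0l]),
            Finset.card_insert_of_notMem (by simp [ht1k, ht1l]),
            Finset.card_insert_of_notMem (by simp [htkl]),
            Finset.card_singleton]
        rw [hcard]
        have := MvPolynomial.aeval_natDegree_le F (hF.totalDegree_le) g hgdeg
        omega
    rw [← hqeval, hq0, Polynomial.eval_zero]
  -- every point of the line lies on both cubics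
  have hall : ∀ (t : ℂ), ∃ (m : Fin 9) (d : ℂ), d ≠ 0 ∧
      (fun n => P i n + (P i n + c' * P j n) * t) = d • P m := by
    intro t
    obtain ⟨m, d, hd, hv⟩ := hexact (fun n => P i n + (P i n + c' * P j n) * t)
      (by
        intro h0
        have hp := hpair (1 + t) (t * c') (funext fun n => by
          have h1 := congrFun h0 n
          simp only [Pi.zero_apply] at h1
          simp only [Pi.add_apply, Pi.smul_apply, smul_eq_mul, Pi.zero_apply]
          linear_combination h1)
        rcases hp with ⟨h1, h2⟩
        rcases mul_eq_zero.mp h2 with h | h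
        · rw [h] at h1; norm_num at h1
        · exact hc'0 h)
      (hzero F₁ h₁ (hPF₁ i) (hPF₁ j) (hPF₁ k) (hPF₁ l) t)
      (hzero F₂ h₂ (hPF₂ i) (hPF₂ j) (hPF₂ k) (hPF₂ l) t)
    exact ⟨m, d, hd, hv⟩
  choose idx coef hcoef0 hcoef using fun t : Fin 10 => hall ((t : ℕ) : ℂ)
  obtain ⟨s, t, hst, hidx⟩ := Fintype.exists_ne_map_eq_of_card_lt idx (by simp)
  set ts : ℂ := ((s : ℕ) : ℂ) with hts
  set tt : ℂ := ((t : ℕ) : ℂ) with htt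
  have hs := hcoef s
  have ht := hcoef t
  rw [hidx] at hs
  have hp := hpair (coef t * (1 + ts) - coef s * (1 + tt))
      (c' * (coef t * ts - coef s * tt))
      (funext fun n => by
        have h1 := congrFun hs n
        have h2 := congrFun ht n
        simp only [Pi.smul_apply, smul_eq_mul] at h1 h2
        simp only [Pi.add_apply, Pi.smul_apply, smul_eq_mul, Pi.zero_apply]
        linear_combination coef t * h1 - coef s * h2)
  rcases hp with ⟨h1, h2⟩
  have h3 : coef t * ts - coef s * tt = 0 := by
    rcases mul_eq_zero.mp h2 with h | h
    · exact absurd h hc'0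
    · exact h
  have h4 : coef t = coef s := by linear_combination h1 - h3
  have h5 : ts = tt := by
    have h6 : coef t * (ts - tt) = 0 := by linear_combination h3 - tt * h4
    rcases mul_eq_zero.mp h6 with h | h
    · exact absurd h (hcoef0 t)
    · linear_combination h
  apply hst
  have : (s : ℕ) = (t : ℕ) := Nat.cast_injective h5
  omega
end

section
/- Pascal's theorem: Let A, B, C, a, b, c be six distinct points on an irreducible conic in ℙ²(ℂ). Then the three points (Aa ∩ bC), (Bb ∩ cA), (Cc ∩ aB) — intersections of the indicated pairs of lines, assumed to be genuine points off the conic — are collinear. -/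
set_option linter.unreachableTactic false
set_option linter.unnecessarySeqFocus false
set_option linter.unusedTactic false
set_option linter.unusedVariables false

open MvPolynomial Matrix

section DetExpansion
open Finset
variable {R : Type*} [CommRing R]

private lemma sa4_0_0 : ((0:Fin 4).succAbove (0:Fin 3)) = (1:Fin 4) := by decide
private lemma sa4_0_1 : ((0:Fin 4).succAbove (1:Fin 3)) = (2:Fin 4) := by decide
private lemma sa4_0_2 : ((0:Fin 4).succAbove (2:Fin 3)) = (3:Fin 4) := by decide
private lemma sa4_1_0 : ((1:Fin 4).succAbove (0:Fin 3)) = (0:Fin 4) := by decide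
private lemma sa4_1_1 : ((1:Fin 4).succAbove (1:Fin 3)) = (2:Fin 4) := by decide
private lemma sa4_1_2 : ((1:Fin 4).succAbove (2:Fin 3)) = (3:Fin 4) := by decide
private lemma sa4_2_0 : ((2:Fin 4).succAbove (0:Fin 3)) = (0:Fin 4) := by decide
private lemma sa4_2_1 : ((2:Fin 4).succAbove (1:Fin 3)) = (1:Fin 4) := by decide
private lemma sa4_2_2 : ((2:Fin 4).succAbove (2:Fin 3)) = (3:Fin 4) := by decide
private lemma sa4_3_0 : ((3:Fin 4).succAbove (0:Fin 3)) = (0:Fin 4) := by decide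
private lemma sa4_3_1 : ((3:Fin 4).succAbove (1:Fin 3)) = (1:Fin 4) := by decide
private lemma sa4_3_2 : ((3:Fin 4).succAbove (2:Fin 3)) = (2:Fin 4) := by decide
private lemma fs4_0 : Fin.succ (0:Fin 3) = (1:Fin 4) := by decide
private lemma fs4_1 : Fin.succ (1:Fin 3) = (2:Fin 4) := by decide
private lemma fs4_2 : Fin.succ (2:Fin 3) = (3:Fin 4) := by decide
private lemma fv4_0 : (((0:Fin 4):ℕ)) = 0 := rfl
private lemma fv4_1 : (((1:Fin 4):ℕ)) = 1 := rfl
private lemma fv4_2 : (((2:Fin 4):ℕ)) = 2 := rfl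
private lemma fv4_3 : (((3:Fin 4):ℕ)) = 3 := rfl
private lemma sa5_0_0 : ((0:Fin 5).succAbove (0:Fin 4)) = (1:Fin 5) := by decide
private lemma sa5_0_1 : ((0:Fin 5).succAbove (1:Fin 4)) = (2:Fin 5) := by decide
private lemma sa5_0_2 : ((0:Fin 5).succAbove (2:Fin 4)) = (3:Fin 5) := by decide
private lemma sa5_0_3 : ((0:Fin 5).succAbove (3:Fin 4)) = (4:Fin 5) := by decide
private lemma sa5_1_0 : ((1:Fin 5).succAbove (0:Fin 4)) = (0:Fin 5) := by decide
private lemma sa5_1_1 : ((1:Fin 5).succAbove (1:Fin 4)) = (2:Fin 5) := by decide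
private lemma sa5_1_2 : ((1:Fin 5).succAbove (2:Fin 4)) = (3:Fin 5) := by decide
private lemma sa5_1_3 : ((1:Fin 5).succAbove (3:Fin 4)) = (4:Fin 5) := by decide
private lemma sa5_2_0 : ((2:Fin 5).succAbove (0:Fin 4)) = (0:Fin 5) := by decide
private lemma sa5_2_1 : ((2:Fin 5).succAbove (1:Fin 4)) = (1:Fin 5) := by decide
private lemma sa5_2_2 : ((2:Fin 5).succAbove (2:Fin 4)) = (3:Fin 5) := by decide
private lemma sa5_2_3 : ((2:Fin 5).succAbove (3:Fin 4)) = (4:Fin 5) := by decide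
private lemma sa5_3_0 : ((3:Fin 5).succAbove (0:Fin 4)) = (0:Fin 5) := by decide
private lemma sa5_3_1 : ((3:Fin 5).succAbove (1:Fin 4)) = (1:Fin 5) := by decide
private lemma sa5_3_2 : ((3:Fin 5).succAbove (2:Fin 4)) = (2:Fin 5) := by decide
private lemma sa5_3_3 : ((3:Fin 5).succAbove (3:Fin 4)) = (4:Fin 5) := by decide
private lemma sa5_4_0 : ((4:Fin 5).succAbove (0:Fin 4)) = (0:Fin 5) := by decide
private lemma sa5_4_1 : ((4:Fin 5).succAbove (1:Fin 4)) = (1:Fin 5) := by decide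
private lemma sa5_4_2 : ((4:Fin 5).succAbove (2:Fin 4)) = (2:Fin 5) := by decide
private lemma sa5_4_3 : ((4:Fin 5).succAbove (3:Fin 4)) = (3:Fin 5) := by decide
private lemma fs5_0 : Fin.succ (0:Fin 4) = (1:Fin 5) := by decide
private lemma fs5_1 : Fin.succ (1:Fin 4) = (2:Fin 5) := by decide
private lemma fs5_2 : Fin.succ (2:Fin 4) = (3:Fin 5) := by decide
private lemma fs5_3 : Fin.succ (3:Fin 4) = (4:Fin 5) := by decide
private lemma fv5_0 : (((0:Fin 5):ℕ)) = 0 := rfl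
private lemma fv5_1 : (((1:Fin 5):ℕ)) = 1 := rfl
private lemma fv5_2 : (((2:Fin 5):ℕ)) = 2 := rfl
private lemma fv5_3 : (((3:Fin 5):ℕ)) = 3 := rfl
private lemma fv5_4 : (((4:Fin 5):ℕ)) = 4 := rfl
private lemma sa6_0_0 : ((0:Fin 6).succAbove (0:Fin 5)) = (1:Fin 6) := by decide
private lemma sa6_0_1 : ((0:Fin 6).succAbove (1:Fin 5)) = (2:Fin 6) := by decide
private lemma sa6_0_2 : ((0:Fin 6).succAbove (2:Fin 5)) = (3:Fin 6) := by decide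
private lemma sa6_0_3 : ((0:Fin 6).succAbove (3:Fin 5)) = (4:Fin 6) := by decide
private lemma sa6_0_4 : ((0:Fin 6).succAbove (4:Fin 5)) = (5:Fin 6) := by decide
private lemma sa6_1_0 : ((1:Fin 6).succAbove (0:Fin 5)) = (0:Fin 6) := by decide
private lemma sa6_1_1 : ((1:Fin 6).succAbove (1:Fin 5)) = (2:Fin 6) := by decide
private lemma sa6_1_2 : ((1:Fin 6).succAbove (2:Fin 5)) = (3:Fin 6) := by decide
private lemma sa6_1_3 : ((1:Fin 6).succAbove (3:Fin 5)) = (4:Fin 6) := by decide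
private lemma sa6_1_4 : ((1:Fin 6).succAbove (4:Fin 5)) = (5:Fin 6) := by decide
private lemma sa6_2_0 : ((2:Fin 6).succAbove (0:Fin 5)) = (0:Fin 6) := by decide
private lemma sa6_2_1 : ((2:Fin 6).succAbove (1:Fin 5)) = (1:Fin 6) := by decide
private lemma sa6_2_2 : ((2:Fin 6).succAbove (2:Fin 5)) = (3:Fin 6) := by decide
private lemma sa6_2_3 : ((2:Fin 6).succAbove (3:Fin 5)) = (4:Fin 6) := by decide
private lemma sa6_2_4 : ((2:Fin 6).succAbove (4:Fin 5)) = (5:Fin 6) := by decide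
private lemma sa6_3_0 : ((3:Fin 6).succAbove (0:Fin 5)) = (0:Fin 6) := by decide
private lemma sa6_3_1 : ((3:Fin 6).succAbove (1:Fin 5)) = (1:Fin 6) := by decide
private lemma sa6_3_2 : ((3:Fin 6).succAbove (2:Fin 5)) = (2:Fin 6) := by decide
private lemma sa6_3_3 : ((3:Fin 6).succAbove (3:Fin 5)) = (4:Fin 6) := by decide
private lemma sa6_3_4 : ((3:Fin 6).succAbove (4:Fin 5)) = (5:Fin 6) := by decide
private lemma sa6_4_0 : ((4:Fin 6).succAbove (0:Fin 5)) = (0:Fin 6) := by decide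
private lemma sa6_4_1 : ((4:Fin 6).succAbove (1:Fin 5)) = (1:Fin 6) := by decide
private lemma sa6_4_2 : ((4:Fin 6).succAbove (2:Fin 5)) = (2:Fin 6) := by decide
private lemma sa6_4_3 : ((4:Fin 6).succAbove (3:Fin 5)) = (3:Fin 6) := by decide
private lemma sa6_4_4 : ((4:Fin 6).succAbove (4:Fin 5)) = (5:Fin 6) := by decide
private lemma sa6_5_0 : ((5:Fin 6).succAbove (0:Fin 5)) = (0:Fin 6) := by decide
private lemma sa6_5_1 : ((5:Fin 6).succAbove (1:Fin 5)) = (1:Fin 6) := by decide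
private lemma sa6_5_2 : ((5:Fin 6).succAbove (2:Fin 5)) = (2:Fin 6) := by decide
private lemma sa6_5_3 : ((5:Fin 6).succAbove (3:Fin 5)) = (3:Fin 6) := by decide
private lemma sa6_5_4 : ((5:Fin 6).succAbove (4:Fin 5)) = (4:Fin 6) := by decide
private lemma fs6_0 : Fin.succ (0:Fin 5) = (1:Fin 6) := by decide
private lemma fs6_1 : Fin.succ (1:Fin 5) = (2:Fin 6) := by decide
private lemma fs6_2 : Fin.succ (2:Fin 5) = (3:Fin 6) := by decide
private lemma fs6_3 : Fin.succ (3:Fin 5) = (4:Fin 6) := by decide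
private lemma fs6_4 : Fin.succ (4:Fin 5) = (5:Fin 6) := by decide
private lemma fv6_0 : (((0:Fin 6):ℕ)) = 0 := rfl
private lemma fv6_1 : (((1:Fin 6):ℕ)) = 1 := rfl
private lemma fv6_2 : (((2:Fin 6):ℕ)) = 2 := rfl
private lemma fv6_3 : (((3:Fin 6):ℕ)) = 3 := rfl
private lemma fv6_4 : (((4:Fin 6):ℕ)) = 4 := rfl
private lemma fv6_5 : (((5:Fin 6):ℕ)) = 5 := rfl

private theorem det_fin_four' (M : Matrix (Fin 4) (Fin 4) R) : M.det = M 0 0*M 1 1*M 2 2*M 3 3 - M 0 0*M 1 1*M 2 3*M 3 2 - M 0 0*M 1 2*M 2 1*M 3 3 + M 0 0*M 1 2*M 2 3*M 3 1 + M 0 0*M 1 3*M 2 1*M 3 2 - M 0 0*M 1 3*M 2 2*M 3 1 - M 0 1*M 1 0*M 2 2*M 3 3 + M 0 1*M 1 0*M 2 3*M 3 2 + M 0 1*M 1 2*M 2 0*M 3 3 - M 0 1*M 1 2*M 2 3*M 3 0 - M 0 1*M 1 3*M 2 0*M 3 2 + M 0 1*M 1 3*M 2 2*M 3 0 + M 0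 2*M 1 0*M 2 1*M 3 3 - M 0 2*M 1 0*M 2 3*M 3 1 - M 0 2*M 1 1*M 2 0*M 3 3 + M 0 2*M 1 1*M 2 3*M 3 0 + M 0 2*M 1 3*M 2 0*M 3 1 - M 0 2*M 1 3*M 2 1*M 3 0 - M 0 3*M 1 0*M 2 1*M 3 2 + M 0 3*M 1 0*M 2 2*M 3 1 + M 0 3*M 1 1*M 2 0*M 3 2 - M 0 3*M 1 1*M 2 2*M 3 0 - M 0 3*M 1 2*M 2 0*M 3 1 + M 0 3*M 1 2*M 2 1*M 3 0 := by
  rw [det_succ_row_zero, Fin.sum_univ_four]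
  simp only [Matrix.det_fin_three, submatrix_apply, sa4_0_0, sa4_0_1, sa4_0_2, sa4_1_0, sa4_1_1, sa4_1_2, sa4_2_0, sa4_2_1, sa4_2_2, sa4_3_0, sa4_3_1, sa4_3_2, fs4_0, fs4_1, fs4_2, fv4_0, fv4_1, fv4_2, fv4_3]
  norm_num
  ring

private theorem det_fin_five' (M : Matrix (Fin 5) (Fin 5) R) : M.det = M 0 0*M 1 1*M 2 2*M 3 3*M 4 4 - M 0 0*M 1 1*M 2 2*M 3 4*M 4 3 - M 0 0*M 1 1*M 2 3*M 3 2*M 4 4 + M 0 0*M 1 1*M 2 3*M 3 4*M 4 2 + M 0 0*M 1 1*M 2 4*M 3 2*M 4 3 - M 0 0*M 1 1*M 2 4*M 3 3*M 4 2 - M 0 0*M 1 2*M 2 1*M 3 3*M 4 4 + M 0 0*M 1 2*M 2 1*M 3 4*M 4 3 + M 0 0*M 1 2*M 2 3*M 3 1*M 4 4 - M 0 0*M 1 2*M 2 3*M 3 4*M 4 1 - M 0 0*M 1 2*M 2 4*M 3 1*M 4 3 + M 0 0*M 1 2*M 2 4*M 3 3*M 4 1 + M 0 0*M 1 3*M 2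 1*M 3 2*M 4 4 - M 0 0*M 1 3*M 2 1*M 3 4*M 4 2 - M 0 0*M 1 3*M 2 2*M 3 1*M 4 4 + M 0 0*M 1 3*M 2 2*M 3 4*M 4 1 + M 0 0*M 1 3*M 2 4*M 3 1*M 4 2 - M 0 0*M 1 3*M 2 4*M 3 2*M 4 1 - M 0 0*M 1 4*M 2 1*M 3 2*M 4 3 + M 0 0*M 1 4*M 2 1*M 3 3*M 4 2 + M 0 0*M 1 4*M 2 2*M 3 1*M 4 3 - M 0 0*M 1 4*M 2 2*M 3 3*M 4 1 - M 0 0*M 1 4*M 2 3*M 3 1*M 4 2 + M 0 0*M 1 4*M 2 3*M 3 2*M 4 1 - M 0 1*M 1 0*M 2 2*M 3 3*M 4 4 + M 0 1*M 1 0*M 2 2*M 3 4*M 4 3 + M 0 1*M 1 0*M 2 3*M 3 2*M 4 4 - M 0 1*M 1 0*M 2 3*M 3 4*M 4 2 - M 0 1*M 1 0*M 2 4*M 3 2*M 4 3 + M 0 1*M 1 0*M 2 4*M 3 3*M 4 2 + M 0 1*M 1 2*M 2 0*M 3 3*M 4 4 - M 0 1*M 1 2*M 2 0*M 3 4*M 4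 3 - M 0 1*M 1 2*M 2 3*M 3 0*M 4 4 + M 0 1*M 1 2*M 2 3*M 3 4*M 4 0 + M 0 1*M 1 2*M 2 4*M 3 0*M 4 3 - M 0 1*M 1 2*M 2 4*M 3 3*M 4 0 - M 0 1*M 1 3*M 2 0*M 3 2*M 4 4 + M 0 1*M 1 3*M 2 0*M 3 4*M 4 2 + M 0 1*M 1 3*M 2 2*M 3 0*M 4 4 - M 0 1*M 1 3*M 2 2*M 3 4*M 4 0 - M 0 1*M 1 3*M 2 4*M 3 0*M 4 2 + M 0 1*M 1 3*M 2 4*M 3 2*M 4 0 + M 0 1*M 1 4*M 2 0*M 3 2*M 4 3 - M 0 1*M 1 4*M 2 0*M 3 3*M 4 2 - M 0 1*M 1 4*M 2 2*M 3 0*M 4 3 + M 0 1*M 1 4*M 2 2*M 3 3*M 4 0 + M 0 1*M 1 4*M 2 3*M 3 0*M 4 2 - M 0 1*M 1 4*M 2 3*M 3 2*M 4 0 + M 0 2*M 1 0*M 2 1*M 3 3*M 4 4 - M 0 2*M 1 0*M 2 1*M 3 4*M 4 3 - M 0 2*M 1 0*M 2 3*M 3 1*M 4 4 + M 0 2*M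 1 0*M 2 3*M 3 4*M 4 1 + M 0 2*M 1 0*M 2 4*M 3 1*M 4 3 - M 0 2*M 1 0*M 2 4*M 3 3*M 4 1 - M 0 2*M 1 1*M 2 0*M 3 3*M 4 4 + M 0 2*M 1 1*M 2 0*M 3 4*M 4 3 + M 0 2*M 1 1*M 2 3*M 3 0*M 4 4 - M 0 2*M 1 1*M 2 3*M 3 4*M 4 0 - M 0 2*M 1 1*M 2 4*M 3 0*M 4 3 + M 0 2*M 1 1*M 2 4*M 3 3*M 4 0 + M 0 2*M 1 3*M 2 0*M 3 1*M 4 4 - M 0 2*M 1 3*M 2 0*M 3 4*M 4 1 - M 0 2*M 1 3*M 2 1*M 3 0*M 4 4 + M 0 2*M 1 3*M 2 1*M 3 4*M 4 0 + M 0 2*M 1 3*M 2 4*M 3 0*M 4 1 - M 0 2*M 1 3*M 2 4*M 3 1*M 4 0 - M 0 2*M 1 4*M 2 0*M 3 1*M 4 3 + M 0 2*M 1 4*M 2 0*M 3 3*M 4 1 + M 0 2*M 1 4*M 2 1*M 3 0*M 4 3 - M 0 2*M 1 4*M 2 1*M 3 3*M 4 0 - M 0 2*M 1 4*M 2 3*M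 3 0*M 4 1 + M 0 2*M 1 4*M 2 3*M 3 1*M 4 0 - M 0 3*M 1 0*M 2 1*M 3 2*M 4 4 + M 0 3*M 1 0*M 2 1*M 3 4*M 4 2 + M 0 3*M 1 0*M 2 2*M 3 1*M 4 4 - M 0 3*M 1 0*M 2 2*M 3 4*M 4 1 - M 0 3*M 1 0*M 2 4*M 3 1*M 4 2 + M 0 3*M 1 0*M 2 4*M 3 2*M 4 1 + M 0 3*M 1 1*M 2 0*M 3 2*M 4 4 - M 0 3*M 1 1*M 2 0*M 3 4*M 4 2 - M 0 3*M 1 1*M 2 2*M 3 0*M 4 4 + M 0 3*M 1 1*M 2 2*M 3 4*M 4 0 + M 0 3*M 1 1*M 2 4*M 3 0*M 4 2 - M 0 3*M 1 1*M 2 4*M 3 2*M 4 0 - M 0 3*M 1 2*M 2 0*M 3 1*M 4 4 + M 0 3*M 1 2*M 2 0*M 3 4*M 4 1 + M 0 3*M 1 2*M 2 1*M 3 0*M 4 4 - M 0 3*M 1 2*M 2 1*M 3 4*M 4 0 - M 0 3*M 1 2*M 2 4*M 3 0*M 4 1 + M 0 3*M 1 2*M 2 4*M 3 1*M 4 0 +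 M 0 3*M 1 4*M 2 0*M 3 1*M 4 2 - M 0 3*M 1 4*M 2 0*M 3 2*M 4 1 - M 0 3*M 1 4*M 2 1*M 3 0*M 4 2 + M 0 3*M 1 4*M 2 1*M 3 2*M 4 0 + M 0 3*M 1 4*M 2 2*M 3 0*M 4 1 - M 0 3*M 1 4*M 2 2*M 3 1*M 4 0 + M 0 4*M 1 0*M 2 1*M 3 2*M 4 3 - M 0 4*M 1 0*M 2 1*M 3 3*M 4 2 - M 0 4*M 1 0*M 2 2*M 3 1*M 4 3 + M 0 4*M 1 0*M 2 2*M 3 3*M 4 1 + M 0 4*M 1 0*M 2 3*M 3 1*M 4 2 - M 0 4*M 1 0*M 2 3*M 3 2*M 4 1 - M 0 4*M 1 1*M 2 0*M 3 2*M 4 3 + M 0 4*M 1 1*M 2 0*M 3 3*M 4 2 + M 0 4*M 1 1*M 2 2*M 3 0*M 4 3 - M 0 4*M 1 1*M 2 2*M 3 3*M 4 0 - M 0 4*M 1 1*M 2 3*M 3 0*M 4 2 + M 0 4*M 1 1*M 2 3*M 3 2*M 4 0 + M 0 4*M 1 2*M 2 0*M 3 1*M 4 3 - M 0 4*M 1 2*M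 2 0*M 3 3*M 4 1 - M 0 4*M 1 2*M 2 1*M 3 0*M 4 3 + M 0 4*M 1 2*M 2 1*M 3 3*M 4 0 + M 0 4*M 1 2*M 2 3*M 3 0*M 4 1 - M 0 4*M 1 2*M 2 3*M 3 1*M 4 0 - M 0 4*M 1 3*M 2 0*M 3 1*M 4 2 + M 0 4*M 1 3*M 2 0*M 3 2*M 4 1 + M 0 4*M 1 3*M 2 1*M 3 0*M 4 2 - M 0 4*M 1 3*M 2 1*M 3 2*M 4 0 - M 0 4*M 1 3*M 2 2*M 3 0*M 4 1 + M 0 4*M 1 3*M 2 2*M 3 1*M 4 0 := by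
  rw [det_succ_row_zero, Fin.sum_univ_five]
  simp only [det_fin_four', submatrix_apply, sa5_0_0, sa5_0_1, sa5_0_2, sa5_0_3, sa5_1_0, sa5_1_1, sa5_1_2, sa5_1_3, sa5_2_0, sa5_2_1, sa5_2_2, sa5_2_3, sa5_3_0, sa5_3_1, sa5_3_2, sa5_3_3, sa5_4_0, sa5_4_1, sa5_4_2, sa5_4_3, fs5_0, fs5_1, fs5_2, fs5_3, fv5_0, fv5_1, fv5_2, fv5_3, fv5_4]
  norm_num
  ring

set_option maxHeartbeats 3000000 in
set_option maxRecDepth 40000 in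
private theorem det_fin_six' (M : Matrix (Fin 6) (Fin 6) R) : M.det = M 0 0*M 1 1*M 2 2*M 3 3*M 4 4*M 5 5 - M 0 0*M 1 1*M 2 2*M 3 3*M 4 5*M 5 4 - M 0 0*M 1 1*M 2 2*M 3 4*M 4 3*M 5 5 + M 0 0*M 1 1*M 2 2*M 3 4*M 4 5*M 5 3 + M 0 0*M 1 1*M 2 2*M 3 5*M 4 3*M 5 4 - M 0 0*M 1 1*M 2 2*M 3 5*M 4 4*M 5 3 - M 0 0*M 1 1*M 2 3*M 3 2*M 4 4*M 5 5 + M 0 0*M 1 1*M 2 3*M 3 2*M 4 5*M 5 4 + M 0 0*M 1 1*M 2 3*M 3 4*M 4 2*M 5 5 - M 0 0*M 1 1*M 2 3*M 3 4*M 4 5*M 5 2 - M 0 0*M 1 1*M 2 3*M 3 5*M 4 2*M 5 4 + M 0 0*M 1 1*M 2 3*M 3 5*M 4 4*M 5 2 + M 0 0*M 1 1*M 2 4*M 3 2*M 4 3*M 5 5 - M 0 0*M 1 1*M 2 4*M 3 2*M 4 5*M 5 3 - M 0 0*M 1 1*M 2 4*M 3 3*M 4 2*M 5 5 + M 0 0*M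 1 1*M 2 4*M 3 3*M 4 5*M 5 2 + M 0 0*M 1 1*M 2 4*M 3 5*M 4 2*M 5 3 - M 0 0*M 1 1*M 2 4*M 3 5*M 4 3*M 5 2 - M 0 0*M 1 1*M 2 5*M 3 2*M 4 3*M 5 4 + M 0 0*M 1 1*M 2 5*M 3 2*M 4 4*M 5 3 + M 0 0*M 1 1*M 2 5*M 3 3*M 4 2*M 5 4 - M 0 0*M 1 1*M 2 5*M 3 3*M 4 4*M 5 2 - M 0 0*M 1 1*M 2 5*M 3 4*M 4 2*M 5 3 + M 0 0*M 1 1*M 2 5*M 3 4*M 4 3*M 5 2 - M 0 0*M 1 2*M 2 1*M 3 3*M 4 4*M 5 5 + M 0 0*M 1 2*M 2 1*M 3 3*M 4 5*M 5 4 + M 0 0*M 1 2*M 2 1*M 3 4*M 4 3*M 5 5 - M 0 0*M 1 2*M 2 1*M 3 4*M 4 5*M 5 3 - M 0 0*M 1 2*M 2 1*M 3 5*M 4 3*M 5 4 + M 0 0*M 1 2*M 2 1*M 3 5*M 4 4*M 5 3 + M 0 0*M 1 2*M 2 3*M 3 1*M 4 4*M 5 5 - M 0 0*M 1 2*M 2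 3*M 3 1*M 4 5*M 5 4 - M 0 0*M 1 2*M 2 3*M 3 4*M 4 1*M 5 5 + M 0 0*M 1 2*M 2 3*M 3 4*M 4 5*M 5 1 + M 0 0*M 1 2*M 2 3*M 3 5*M 4 1*M 5 4 - M 0 0*M 1 2*M 2 3*M 3 5*M 4 4*M 5 1 - M 0 0*M 1 2*M 2 4*M 3 1*M 4 3*M 5 5 + M 0 0*M 1 2*M 2 4*M 3 1*M 4 5*M 5 3 + M 0 0*M 1 2*M 2 4*M 3 3*M 4 1*M 5 5 - M 0 0*M 1 2*M 2 4*M 3 3*M 4 5*M 5 1 - M 0 0*M 1 2*M 2 4*M 3 5*M 4 1*M 5 3 + M 0 0*M 1 2*M 2 4*M 3 5*M 4 3*M 5 1 + M 0 0*M 1 2*M 2 5*M 3 1*M 4 3*M 5 4 - M 0 0*M 1 2*M 2 5*M 3 1*M 4 4*M 5 3 - M 0 0*M 1 2*M 2 5*M 3 3*M 4 1*M 5 4 + M 0 0*M 1 2*M 2 5*M 3 3*M 4 4*M 5 1 + M 0 0*M 1 2*M 2 5*M 3 4*M 4 1*M 5 3 - M 0 0*M 1 2*M 2 5*M 3 4*M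 4 3*M 5 1 + M 0 0*M 1 3*M 2 1*M 3 2*M 4 4*M 5 5 - M 0 0*M 1 3*M 2 1*M 3 2*M 4 5*M 5 4 - M 0 0*M 1 3*M 2 1*M 3 4*M 4 2*M 5 5 + M 0 0*M 1 3*M 2 1*M 3 4*M 4 5*M 5 2 + M 0 0*M 1 3*M 2 1*M 3 5*M 4 2*M 5 4 - M 0 0*M 1 3*M 2 1*M 3 5*M 4 4*M 5 2 - M 0 0*M 1 3*M 2 2*M 3 1*M 4 4*M 5 5 + M 0 0*M 1 3*M 2 2*M 3 1*M 4 5*M 5 4 + M 0 0*M 1 3*M 2 2*M 3 4*M 4 1*M 5 5 - M 0 0*M 1 3*M 2 2*M 3 4*M 4 5*M 5 1 - M 0 0*M 1 3*M 2 2*M 3 5*M 4 1*M 5 4 + M 0 0*M 1 3*M 2 2*M 3 5*M 4 4*M 5 1 + M 0 0*M 1 3*M 2 4*M 3 1*M 4 2*M 5 5 - M 0 0*M 1 3*M 2 4*M 3 1*M 4 5*M 5 2 - M 0 0*M 1 3*M 2 4*M 3 2*M 4 1*M 5 5 + M 0 0*M 1 3*M 2 4*M 3 2*M 4 5*M 5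 1 + M 0 0*M 1 3*M 2 4*M 3 5*M 4 1*M 5 2 - M 0 0*M 1 3*M 2 4*M 3 5*M 4 2*M 5 1 - M 0 0*M 1 3*M 2 5*M 3 1*M 4 2*M 5 4 + M 0 0*M 1 3*M 2 5*M 3 1*M 4 4*M 5 2 + M 0 0*M 1 3*M 2 5*M 3 2*M 4 1*M 5 4 - M 0 0*M 1 3*M 2 5*M 3 2*M 4 4*M 5 1 - M 0 0*M 1 3*M 2 5*M 3 4*M 4 1*M 5 2 + M 0 0*M 1 3*M 2 5*M 3 4*M 4 2*M 5 1 - M 0 0*M 1 4*M 2 1*M 3 2*M 4 3*M 5 5 + M 0 0*M 1 4*M 2 1*M 3 2*M 4 5*M 5 3 + M 0 0*M 1 4*M 2 1*M 3 3*M 4 2*M 5 5 - M 0 0*M 1 4*M 2 1*M 3 3*M 4 5*M 5 2 - M 0 0*M 1 4*M 2 1*M 3 5*M 4 2*M 5 3 + M 0 0*M 1 4*M 2 1*M 3 5*M 4 3*M 5 2 + M 0 0*M 1 4*M 2 2*M 3 1*M 4 3*M 5 5 - M 0 0*M 1 4*M 2 2*M 3 1*M 4 5*M 5 3 - M 0 0*M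 1 4*M 2 2*M 3 3*M 4 1*M 5 5 + M 0 0*M 1 4*M 2 2*M 3 3*M 4 5*M 5 1 + M 0 0*M 1 4*M 2 2*M 3 5*M 4 1*M 5 3 - M 0 0*M 1 4*M 2 2*M 3 5*M 4 3*M 5 1 - M 0 0*M 1 4*M 2 3*M 3 1*M 4 2*M 5 5 + M 0 0*M 1 4*M 2 3*M 3 1*M 4 5*M 5 2 + M 0 0*M 1 4*M 2 3*M 3 2*M 4 1*M 5 5 - M 0 0*M 1 4*M 2 3*M 3 2*M 4 5*M 5 1 - M 0 0*M 1 4*M 2 3*M 3 5*M 4 1*M 5 2 + M 0 0*M 1 4*M 2 3*M 3 5*M 4 2*M 5 1 + M 0 0*M 1 4*M 2 5*M 3 1*M 4 2*M 5 3 - M 0 0*M 1 4*M 2 5*M 3 1*M 4 3*M 5 2 - M 0 0*M 1 4*M 2 5*M 3 2*M 4 1*M 5 3 + M 0 0*M 1 4*M 2 5*M 3 2*M 4 3*M 5 1 + M 0 0*M 1 4*M 2 5*M 3 3*M 4 1*M 5 2 - M 0 0*M 1 4*M 2 5*M 3 3*M 4 2*M 5 1 + M 0 0*M 1 5*M 2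 1*M 3 2*M 4 3*M 5 4 - M 0 0*M 1 5*M 2 1*M 3 2*M 4 4*M 5 3 - M 0 0*M 1 5*M 2 1*M 3 3*M 4 2*M 5 4 + M 0 0*M 1 5*M 2 1*M 3 3*M 4 4*M 5 2 + M 0 0*M 1 5*M 2 1*M 3 4*M 4 2*M 5 3 - M 0 0*M 1 5*M 2 1*M 3 4*M 4 3*M 5 2 - M 0 0*M 1 5*M 2 2*M 3 1*M 4 3*M 5 4 + M 0 0*M 1 5*M 2 2*M 3 1*M 4 4*M 5 3 + M 0 0*M 1 5*M 2 2*M 3 3*M 4 1*M 5 4 - M 0 0*M 1 5*M 2 2*M 3 3*M 4 4*M 5 1 - M 0 0*M 1 5*M 2 2*M 3 4*M 4 1*M 5 3 + M 0 0*M 1 5*M 2 2*M 3 4*M 4 3*M 5 1 + M 0 0*M 1 5*M 2 3*M 3 1*M 4 2*M 5 4 - M 0 0*M 1 5*M 2 3*M 3 1*M 4 4*M 5 2 - M 0 0*M 1 5*M 2 3*M 3 2*M 4 1*M 5 4 + M 0 0*M 1 5*M 2 3*M 3 2*M 4 4*M 5 1 + M 0 0*M 1 5*M 2 3*M 3 4*M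 4 1*M 5 2 - M 0 0*M 1 5*M 2 3*M 3 4*M 4 2*M 5 1 - M 0 0*M 1 5*M 2 4*M 3 1*M 4 2*M 5 3 + M 0 0*M 1 5*M 2 4*M 3 1*M 4 3*M 5 2 + M 0 0*M 1 5*M 2 4*M 3 2*M 4 1*M 5 3 - M 0 0*M 1 5*M 2 4*M 3 2*M 4 3*M 5 1 - M 0 0*M 1 5*M 2 4*M 3 3*M 4 1*M 5 2 + M 0 0*M 1 5*M 2 4*M 3 3*M 4 2*M 5 1 - M 0 1*M 1 0*M 2 2*M 3 3*M 4 4*M 5 5 + M 0 1*M 1 0*M 2 2*M 3 3*M 4 5*M 5 4 + M 0 1*M 1 0*M 2 2*M 3 4*M 4 3*M 5 5 - M 0 1*M 1 0*M 2 2*M 3 4*M 4 5*M 5 3 - M 0 1*M 1 0*M 2 2*M 3 5*M 4 3*M 5 4 + M 0 1*M 1 0*M 2 2*M 3 5*M 4 4*M 5 3 + M 0 1*M 1 0*M 2 3*M 3 2*M 4 4*M 5 5 - M 0 1*M 1 0*M 2 3*M 3 2*M 4 5*M 5 4 - M 0 1*M 1 0*M 2 3*M 3 4*M 4 2*M 5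 5 + M 0 1*M 1 0*M 2 3*M 3 4*M 4 5*M 5 2 + M 0 1*M 1 0*M 2 3*M 3 5*M 4 2*M 5 4 - M 0 1*M 1 0*M 2 3*M 3 5*M 4 4*M 5 2 - M 0 1*M 1 0*M 2 4*M 3 2*M 4 3*M 5 5 + M 0 1*M 1 0*M 2 4*M 3 2*M 4 5*M 5 3 + M 0 1*M 1 0*M 2 4*M 3 3*M 4 2*M 5 5 - M 0 1*M 1 0*M 2 4*M 3 3*M 4 5*M 5 2 - M 0 1*M 1 0*M 2 4*M 3 5*M 4 2*M 5 3 + M 0 1*M 1 0*M 2 4*M 3 5*M 4 3*M 5 2 + M 0 1*M 1 0*M 2 5*M 3 2*M 4 3*M 5 4 - M 0 1*M 1 0*M 2 5*M 3 2*M 4 4*M 5 3 - M 0 1*M 1 0*M 2 5*M 3 3*M 4 2*M 5 4 + M 0 1*M 1 0*M 2 5*M 3 3*M 4 4*M 5 2 + M 0 1*M 1 0*M 2 5*M 3 4*M 4 2*M 5 3 - M 0 1*M 1 0*M 2 5*M 3 4*M 4 3*M 5 2 + M 0 1*M 1 2*M 2 0*M 3 3*M 4 4*M 5 5 - M 0 1*M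 1 2*M 2 0*M 3 3*M 4 5*M 5 4 - M 0 1*M 1 2*M 2 0*M 3 4*M 4 3*M 5 5 + M 0 1*M 1 2*M 2 0*M 3 4*M 4 5*M 5 3 + M 0 1*M 1 2*M 2 0*M 3 5*M 4 3*M 5 4 - M 0 1*M 1 2*M 2 0*M 3 5*M 4 4*M 5 3 - M 0 1*M 1 2*M 2 3*M 3 0*M 4 4*M 5 5 + M 0 1*M 1 2*M 2 3*M 3 0*M 4 5*M 5 4 + M 0 1*M 1 2*M 2 3*M 3 4*M 4 0*M 5 5 - M 0 1*M 1 2*M 2 3*M 3 4*M 4 5*M 5 0 - M 0 1*M 1 2*M 2 3*M 3 5*M 4 0*M 5 4 + M 0 1*M 1 2*M 2 3*M 3 5*M 4 4*M 5 0 + M 0 1*M 1 2*M 2 4*M 3 0*M 4 3*M 5 5 - M 0 1*M 1 2*M 2 4*M 3 0*M 4 5*M 5 3 - M 0 1*M 1 2*M 2 4*M 3 3*M 4 0*M 5 5 + M 0 1*M 1 2*M 2 4*M 3 3*M 4 5*M 5 0 + M 0 1*M 1 2*M 2 4*M 3 5*M 4 0*M 5 3 - M 0 1*M 1 2*M 2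 4*M 3 5*M 4 3*M 5 0 - M 0 1*M 1 2*M 2 5*M 3 0*M 4 3*M 5 4 + M 0 1*M 1 2*M 2 5*M 3 0*M 4 4*M 5 3 + M 0 1*M 1 2*M 2 5*M 3 3*M 4 0*M 5 4 - M 0 1*M 1 2*M 2 5*M 3 3*M 4 4*M 5 0 - M 0 1*M 1 2*M 2 5*M 3 4*M 4 0*M 5 3 + M 0 1*M 1 2*M 2 5*M 3 4*M 4 3*M 5 0 - M 0 1*M 1 3*M 2 0*M 3 2*M 4 4*M 5 5 + M 0 1*M 1 3*M 2 0*M 3 2*M 4 5*M 5 4 + M 0 1*M 1 3*M 2 0*M 3 4*M 4 2*M 5 5 - M 0 1*M 1 3*M 2 0*M 3 4*M 4 5*M 5 2 - M 0 1*M 1 3*M 2 0*M 3 5*M 4 2*M 5 4 + M 0 1*M 1 3*M 2 0*M 3 5*M 4 4*M 5 2 + M 0 1*M 1 3*M 2 2*M 3 0*M 4 4*M 5 5 - M 0 1*M 1 3*M 2 2*M 3 0*M 4 5*M 5 4 - M 0 1*M 1 3*M 2 2*M 3 4*M 4 0*M 5 5 + M 0 1*M 1 3*M 2 2*M 3 4*M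 4 5*M 5 0 + M 0 1*M 1 3*M 2 2*M 3 5*M 4 0*M 5 4 - M 0 1*M 1 3*M 2 2*M 3 5*M 4 4*M 5 0 - M 0 1*M 1 3*M 2 4*M 3 0*M 4 2*M 5 5 + M 0 1*M 1 3*M 2 4*M 3 0*M 4 5*M 5 2 + M 0 1*M 1 3*M 2 4*M 3 2*M 4 0*M 5 5 - M 0 1*M 1 3*M 2 4*M 3 2*M 4 5*M 5 0 - M 0 1*M 1 3*M 2 4*M 3 5*M 4 0*M 5 2 + M 0 1*M 1 3*M 2 4*M 3 5*M 4 2*M 5 0 + M 0 1*M 1 3*M 2 5*M 3 0*M 4 2*M 5 4 - M 0 1*M 1 3*M 2 5*M 3 0*M 4 4*M 5 2 - M 0 1*M 1 3*M 2 5*M 3 2*M 4 0*M 5 4 + M 0 1*M 1 3*M 2 5*M 3 2*M 4 4*M 5 0 + M 0 1*M 1 3*M 2 5*M 3 4*M 4 0*M 5 2 - M 0 1*M 1 3*M 2 5*M 3 4*M 4 2*M 5 0 + M 0 1*M 1 4*M 2 0*M 3 2*M 4 3*M 5 5 - M 0 1*M 1 4*M 2 0*M 3 2*M 4 5*M 5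 3 - M 0 1*M 1 4*M 2 0*M 3 3*M 4 2*M 5 5 + M 0 1*M 1 4*M 2 0*M 3 3*M 4 5*M 5 2 + M 0 1*M 1 4*M 2 0*M 3 5*M 4 2*M 5 3 - M 0 1*M 1 4*M 2 0*M 3 5*M 4 3*M 5 2 - M 0 1*M 1 4*M 2 2*M 3 0*M 4 3*M 5 5 + M 0 1*M 1 4*M 2 2*M 3 0*M 4 5*M 5 3 + M 0 1*M 1 4*M 2 2*M 3 3*M 4 0*M 5 5 - M 0 1*M 1 4*M 2 2*M 3 3*M 4 5*M 5 0 - M 0 1*M 1 4*M 2 2*M 3 5*M 4 0*M 5 3 + M 0 1*M 1 4*M 2 2*M 3 5*M 4 3*M 5 0 + M 0 1*M 1 4*M 2 3*M 3 0*M 4 2*M 5 5 - M 0 1*M 1 4*M 2 3*M 3 0*M 4 5*M 5 2 - M 0 1*M 1 4*M 2 3*M 3 2*M 4 0*M 5 5 + M 0 1*M 1 4*M 2 3*M 3 2*M 4 5*M 5 0 + M 0 1*M 1 4*M 2 3*M 3 5*M 4 0*M 5 2 - M 0 1*M 1 4*M 2 3*M 3 5*M 4 2*M 5 0 - M 0 1*M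 1 4*M 2 5*M 3 0*M 4 2*M 5 3 + M 0 1*M 1 4*M 2 5*M 3 0*M 4 3*M 5 2 + M 0 1*M 1 4*M 2 5*M 3 2*M 4 0*M 5 3 - M 0 1*M 1 4*M 2 5*M 3 2*M 4 3*M 5 0 - M 0 1*M 1 4*M 2 5*M 3 3*M 4 0*M 5 2 + M 0 1*M 1 4*M 2 5*M 3 3*M 4 2*M 5 0 - M 0 1*M 1 5*M 2 0*M 3 2*M 4 3*M 5 4 + M 0 1*M 1 5*M 2 0*M 3 2*M 4 4*M 5 3 + M 0 1*M 1 5*M 2 0*M 3 3*M 4 2*M 5 4 - M 0 1*M 1 5*M 2 0*M 3 3*M 4 4*M 5 2 - M 0 1*M 1 5*M 2 0*M 3 4*M 4 2*M 5 3 + M 0 1*M 1 5*M 2 0*M 3 4*M 4 3*M 5 2 + M 0 1*M 1 5*M 2 2*M 3 0*M 4 3*M 5 4 - M 0 1*M 1 5*M 2 2*M 3 0*M 4 4*M 5 3 - M 0 1*M 1 5*M 2 2*M 3 3*M 4 0*M 5 4 + M 0 1*M 1 5*M 2 2*M 3 3*M 4 4*M 5 0 + M 0 1*M 1 5*M 2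 2*M 3 4*M 4 0*M 5 3 - M 0 1*M 1 5*M 2 2*M 3 4*M 4 3*M 5 0 - M 0 1*M 1 5*M 2 3*M 3 0*M 4 2*M 5 4 + M 0 1*M 1 5*M 2 3*M 3 0*M 4 4*M 5 2 + M 0 1*M 1 5*M 2 3*M 3 2*M 4 0*M 5 4 - M 0 1*M 1 5*M 2 3*M 3 2*M 4 4*M 5 0 - M 0 1*M 1 5*M 2 3*M 3 4*M 4 0*M 5 2 + M 0 1*M 1 5*M 2 3*M 3 4*M 4 2*M 5 0 + M 0 1*M 1 5*M 2 4*M 3 0*M 4 2*M 5 3 - M 0 1*M 1 5*M 2 4*M 3 0*M 4 3*M 5 2 - M 0 1*M 1 5*M 2 4*M 3 2*M 4 0*M 5 3 + M 0 1*M 1 5*M 2 4*M 3 2*M 4 3*M 5 0 + M 0 1*M 1 5*M 2 4*M 3 3*M 4 0*M 5 2 - M 0 1*M 1 5*M 2 4*M 3 3*M 4 2*M 5 0 + M 0 2*M 1 0*M 2 1*M 3 3*M 4 4*M 5 5 - M 0 2*M 1 0*M 2 1*M 3 3*M 4 5*M 5 4 - M 0 2*M 1 0*M 2 1*M 3 4*M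 4 3*M 5 5 + M 0 2*M 1 0*M 2 1*M 3 4*M 4 5*M 5 3 + M 0 2*M 1 0*M 2 1*M 3 5*M 4 3*M 5 4 - M 0 2*M 1 0*M 2 1*M 3 5*M 4 4*M 5 3 - M 0 2*M 1 0*M 2 3*M 3 1*M 4 4*M 5 5 + M 0 2*M 1 0*M 2 3*M 3 1*M 4 5*M 5 4 + M 0 2*M 1 0*M 2 3*M 3 4*M 4 1*M 5 5 - M 0 2*M 1 0*M 2 3*M 3 4*M 4 5*M 5 1 - M 0 2*M 1 0*M 2 3*M 3 5*M 4 1*M 5 4 + M 0 2*M 1 0*M 2 3*M 3 5*M 4 4*M 5 1 + M 0 2*M 1 0*M 2 4*M 3 1*M 4 3*M 5 5 - M 0 2*M 1 0*M 2 4*M 3 1*M 4 5*M 5 3 - M 0 2*M 1 0*M 2 4*M 3 3*M 4 1*M 5 5 + M 0 2*M 1 0*M 2 4*M 3 3*M 4 5*M 5 1 + M 0 2*M 1 0*M 2 4*M 3 5*M 4 1*M 5 3 - M 0 2*M 1 0*M 2 4*M 3 5*M 4 3*M 5 1 - M 0 2*M 1 0*M 2 5*M 3 1*M 4 3*M 5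 4 + M 0 2*M 1 0*M 2 5*M 3 1*M 4 4*M 5 3 + M 0 2*M 1 0*M 2 5*M 3 3*M 4 1*M 5 4 - M 0 2*M 1 0*M 2 5*M 3 3*M 4 4*M 5 1 - M 0 2*M 1 0*M 2 5*M 3 4*M 4 1*M 5 3 + M 0 2*M 1 0*M 2 5*M 3 4*M 4 3*M 5 1 - M 0 2*M 1 1*M 2 0*M 3 3*M 4 4*M 5 5 + M 0 2*M 1 1*M 2 0*M 3 3*M 4 5*M 5 4 + M 0 2*M 1 1*M 2 0*M 3 4*M 4 3*M 5 5 - M 0 2*M 1 1*M 2 0*M 3 4*M 4 5*M 5 3 - M 0 2*M 1 1*M 2 0*M 3 5*M 4 3*M 5 4 + M 0 2*M 1 1*M 2 0*M 3 5*M 4 4*M 5 3 + M 0 2*M 1 1*M 2 3*M 3 0*M 4 4*M 5 5 - M 0 2*M 1 1*M 2 3*M 3 0*M 4 5*M 5 4 - M 0 2*M 1 1*M 2 3*M 3 4*M 4 0*M 5 5 + M 0 2*M 1 1*M 2 3*M 3 4*M 4 5*M 5 0 + M 0 2*M 1 1*M 2 3*M 3 5*M 4 0*M 5 4 - M 0 2*M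 1 1*M 2 3*M 3 5*M 4 4*M 5 0 - M 0 2*M 1 1*M 2 4*M 3 0*M 4 3*M 5 5 + M 0 2*M 1 1*M 2 4*M 3 0*M 4 5*M 5 3 + M 0 2*M 1 1*M 2 4*M 3 3*M 4 0*M 5 5 - M 0 2*M 1 1*M 2 4*M 3 3*M 4 5*M 5 0 - M 0 2*M 1 1*M 2 4*M 3 5*M 4 0*M 5 3 + M 0 2*M 1 1*M 2 4*M 3 5*M 4 3*M 5 0 + M 0 2*M 1 1*M 2 5*M 3 0*M 4 3*M 5 4 - M 0 2*M 1 1*M 2 5*M 3 0*M 4 4*M 5 3 - M 0 2*M 1 1*M 2 5*M 3 3*M 4 0*M 5 4 + M 0 2*M 1 1*M 2 5*M 3 3*M 4 4*M 5 0 + M 0 2*M 1 1*M 2 5*M 3 4*M 4 0*M 5 3 - M 0 2*M 1 1*M 2 5*M 3 4*M 4 3*M 5 0 + M 0 2*M 1 3*M 2 0*M 3 1*M 4 4*M 5 5 - M 0 2*M 1 3*M 2 0*M 3 1*M 4 5*M 5 4 - M 0 2*M 1 3*M 2 0*M 3 4*M 4 1*M 5 5 + M 0 2*M 1 3*M 2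 0*M 3 4*M 4 5*M 5 1 + M 0 2*M 1 3*M 2 0*M 3 5*M 4 1*M 5 4 - M 0 2*M 1 3*M 2 0*M 3 5*M 4 4*M 5 1 - M 0 2*M 1 3*M 2 1*M 3 0*M 4 4*M 5 5 + M 0 2*M 1 3*M 2 1*M 3 0*M 4 5*M 5 4 + M 0 2*M 1 3*M 2 1*M 3 4*M 4 0*M 5 5 - M 0 2*M 1 3*M 2 1*M 3 4*M 4 5*M 5 0 - M 0 2*M 1 3*M 2 1*M 3 5*M 4 0*M 5 4 + M 0 2*M 1 3*M 2 1*M 3 5*M 4 4*M 5 0 + M 0 2*M 1 3*M 2 4*M 3 0*M 4 1*M 5 5 - M 0 2*M 1 3*M 2 4*M 3 0*M 4 5*M 5 1 - M 0 2*M 1 3*M 2 4*M 3 1*M 4 0*M 5 5 + M 0 2*M 1 3*M 2 4*M 3 1*M 4 5*M 5 0 + M 0 2*M 1 3*M 2 4*M 3 5*M 4 0*M 5 1 - M 0 2*M 1 3*M 2 4*M 3 5*M 4 1*M 5 0 - M 0 2*M 1 3*M 2 5*M 3 0*M 4 1*M 5 4 + M 0 2*M 1 3*M 2 5*M 3 0*M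 4 4*M 5 1 + M 0 2*M 1 3*M 2 5*M 3 1*M 4 0*M 5 4 - M 0 2*M 1 3*M 2 5*M 3 1*M 4 4*M 5 0 - M 0 2*M 1 3*M 2 5*M 3 4*M 4 0*M 5 1 + M 0 2*M 1 3*M 2 5*M 3 4*M 4 1*M 5 0 - M 0 2*M 1 4*M 2 0*M 3 1*M 4 3*M 5 5 + M 0 2*M 1 4*M 2 0*M 3 1*M 4 5*M 5 3 + M 0 2*M 1 4*M 2 0*M 3 3*M 4 1*M 5 5 - M 0 2*M 1 4*M 2 0*M 3 3*M 4 5*M 5 1 - M 0 2*M 1 4*M 2 0*M 3 5*M 4 1*M 5 3 + M 0 2*M 1 4*M 2 0*M 3 5*M 4 3*M 5 1 + M 0 2*M 1 4*M 2 1*M 3 0*M 4 3*M 5 5 - M 0 2*M 1 4*M 2 1*M 3 0*M 4 5*M 5 3 - M 0 2*M 1 4*M 2 1*M 3 3*M 4 0*M 5 5 + M 0 2*M 1 4*M 2 1*M 3 3*M 4 5*M 5 0 + M 0 2*M 1 4*M 2 1*M 3 5*M 4 0*M 5 3 - M 0 2*M 1 4*M 2 1*M 3 5*M 4 3*M 5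 0 - M 0 2*M 1 4*M 2 3*M 3 0*M 4 1*M 5 5 + M 0 2*M 1 4*M 2 3*M 3 0*M 4 5*M 5 1 + M 0 2*M 1 4*M 2 3*M 3 1*M 4 0*M 5 5 - M 0 2*M 1 4*M 2 3*M 3 1*M 4 5*M 5 0 - M 0 2*M 1 4*M 2 3*M 3 5*M 4 0*M 5 1 + M 0 2*M 1 4*M 2 3*M 3 5*M 4 1*M 5 0 + M 0 2*M 1 4*M 2 5*M 3 0*M 4 1*M 5 3 - M 0 2*M 1 4*M 2 5*M 3 0*M 4 3*M 5 1 - M 0 2*M 1 4*M 2 5*M 3 1*M 4 0*M 5 3 + M 0 2*M 1 4*M 2 5*M 3 1*M 4 3*M 5 0 + M 0 2*M 1 4*M 2 5*M 3 3*M 4 0*M 5 1 - M 0 2*M 1 4*M 2 5*M 3 3*M 4 1*M 5 0 + M 0 2*M 1 5*M 2 0*M 3 1*M 4 3*M 5 4 - M 0 2*M 1 5*M 2 0*M 3 1*M 4 4*M 5 3 - M 0 2*M 1 5*M 2 0*M 3 3*M 4 1*M 5 4 + M 0 2*M 1 5*M 2 0*M 3 3*M 4 4*M 5 1 + M 0 2*M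 1 5*M 2 0*M 3 4*M 4 1*M 5 3 - M 0 2*M 1 5*M 2 0*M 3 4*M 4 3*M 5 1 - M 0 2*M 1 5*M 2 1*M 3 0*M 4 3*M 5 4 + M 0 2*M 1 5*M 2 1*M 3 0*M 4 4*M 5 3 + M 0 2*M 1 5*M 2 1*M 3 3*M 4 0*M 5 4 - M 0 2*M 1 5*M 2 1*M 3 3*M 4 4*M 5 0 - M 0 2*M 1 5*M 2 1*M 3 4*M 4 0*M 5 3 + M 0 2*M 1 5*M 2 1*M 3 4*M 4 3*M 5 0 + M 0 2*M 1 5*M 2 3*M 3 0*M 4 1*M 5 4 - M 0 2*M 1 5*M 2 3*M 3 0*M 4 4*M 5 1 - M 0 2*M 1 5*M 2 3*M 3 1*M 4 0*M 5 4 + M 0 2*M 1 5*M 2 3*M 3 1*M 4 4*M 5 0 + M 0 2*M 1 5*M 2 3*M 3 4*M 4 0*M 5 1 - M 0 2*M 1 5*M 2 3*M 3 4*M 4 1*M 5 0 - M 0 2*M 1 5*M 2 4*M 3 0*M 4 1*M 5 3 + M 0 2*M 1 5*M 2 4*M 3 0*M 4 3*M 5 1 + M 0 2*M 1 5*M 2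 4*M 3 1*M 4 0*M 5 3 - M 0 2*M 1 5*M 2 4*M 3 1*M 4 3*M 5 0 - M 0 2*M 1 5*M 2 4*M 3 3*M 4 0*M 5 1 + M 0 2*M 1 5*M 2 4*M 3 3*M 4 1*M 5 0 - M 0 3*M 1 0*M 2 1*M 3 2*M 4 4*M 5 5 + M 0 3*M 1 0*M 2 1*M 3 2*M 4 5*M 5 4 + M 0 3*M 1 0*M 2 1*M 3 4*M 4 2*M 5 5 - M 0 3*M 1 0*M 2 1*M 3 4*M 4 5*M 5 2 - M 0 3*M 1 0*M 2 1*M 3 5*M 4 2*M 5 4 + M 0 3*M 1 0*M 2 1*M 3 5*M 4 4*M 5 2 + M 0 3*M 1 0*M 2 2*M 3 1*M 4 4*M 5 5 - M 0 3*M 1 0*M 2 2*M 3 1*M 4 5*M 5 4 - M 0 3*M 1 0*M 2 2*M 3 4*M 4 1*M 5 5 + M 0 3*M 1 0*M 2 2*M 3 4*M 4 5*M 5 1 + M 0 3*M 1 0*M 2 2*M 3 5*M 4 1*M 5 4 - M 0 3*M 1 0*M 2 2*M 3 5*M 4 4*M 5 1 - M 0 3*M 1 0*M 2 4*M 3 1*M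 4 2*M 5 5 + M 0 3*M 1 0*M 2 4*M 3 1*M 4 5*M 5 2 + M 0 3*M 1 0*M 2 4*M 3 2*M 4 1*M 5 5 - M 0 3*M 1 0*M 2 4*M 3 2*M 4 5*M 5 1 - M 0 3*M 1 0*M 2 4*M 3 5*M 4 1*M 5 2 + M 0 3*M 1 0*M 2 4*M 3 5*M 4 2*M 5 1 + M 0 3*M 1 0*M 2 5*M 3 1*M 4 2*M 5 4 - M 0 3*M 1 0*M 2 5*M 3 1*M 4 4*M 5 2 - M 0 3*M 1 0*M 2 5*M 3 2*M 4 1*M 5 4 + M 0 3*M 1 0*M 2 5*M 3 2*M 4 4*M 5 1 + M 0 3*M 1 0*M 2 5*M 3 4*M 4 1*M 5 2 - M 0 3*M 1 0*M 2 5*M 3 4*M 4 2*M 5 1 + M 0 3*M 1 1*M 2 0*M 3 2*M 4 4*M 5 5 - M 0 3*M 1 1*M 2 0*M 3 2*M 4 5*M 5 4 - M 0 3*M 1 1*M 2 0*M 3 4*M 4 2*M 5 5 + M 0 3*M 1 1*M 2 0*M 3 4*M 4 5*M 5 2 + M 0 3*M 1 1*M 2 0*M 3 5*M 4 2*M 5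 4 - M 0 3*M 1 1*M 2 0*M 3 5*M 4 4*M 5 2 - M 0 3*M 1 1*M 2 2*M 3 0*M 4 4*M 5 5 + M 0 3*M 1 1*M 2 2*M 3 0*M 4 5*M 5 4 + M 0 3*M 1 1*M 2 2*M 3 4*M 4 0*M 5 5 - M 0 3*M 1 1*M 2 2*M 3 4*M 4 5*M 5 0 - M 0 3*M 1 1*M 2 2*M 3 5*M 4 0*M 5 4 + M 0 3*M 1 1*M 2 2*M 3 5*M 4 4*M 5 0 + M 0 3*M 1 1*M 2 4*M 3 0*M 4 2*M 5 5 - M 0 3*M 1 1*M 2 4*M 3 0*M 4 5*M 5 2 - M 0 3*M 1 1*M 2 4*M 3 2*M 4 0*M 5 5 + M 0 3*M 1 1*M 2 4*M 3 2*M 4 5*M 5 0 + M 0 3*M 1 1*M 2 4*M 3 5*M 4 0*M 5 2 - M 0 3*M 1 1*M 2 4*M 3 5*M 4 2*M 5 0 - M 0 3*M 1 1*M 2 5*M 3 0*M 4 2*M 5 4 + M 0 3*M 1 1*M 2 5*M 3 0*M 4 4*M 5 2 + M 0 3*M 1 1*M 2 5*M 3 2*M 4 0*M 5 4 - M 0 3*M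 1 1*M 2 5*M 3 2*M 4 4*M 5 0 - M 0 3*M 1 1*M 2 5*M 3 4*M 4 0*M 5 2 + M 0 3*M 1 1*M 2 5*M 3 4*M 4 2*M 5 0 - M 0 3*M 1 2*M 2 0*M 3 1*M 4 4*M 5 5 + M 0 3*M 1 2*M 2 0*M 3 1*M 4 5*M 5 4 + M 0 3*M 1 2*M 2 0*M 3 4*M 4 1*M 5 5 - M 0 3*M 1 2*M 2 0*M 3 4*M 4 5*M 5 1 - M 0 3*M 1 2*M 2 0*M 3 5*M 4 1*M 5 4 + M 0 3*M 1 2*M 2 0*M 3 5*M 4 4*M 5 1 + M 0 3*M 1 2*M 2 1*M 3 0*M 4 4*M 5 5 - M 0 3*M 1 2*M 2 1*M 3 0*M 4 5*M 5 4 - M 0 3*M 1 2*M 2 1*M 3 4*M 4 0*M 5 5 + M 0 3*M 1 2*M 2 1*M 3 4*M 4 5*M 5 0 + M 0 3*M 1 2*M 2 1*M 3 5*M 4 0*M 5 4 - M 0 3*M 1 2*M 2 1*M 3 5*M 4 4*M 5 0 - M 0 3*M 1 2*M 2 4*M 3 0*M 4 1*M 5 5 + M 0 3*M 1 2*M 2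 4*M 3 0*M 4 5*M 5 1 + M 0 3*M 1 2*M 2 4*M 3 1*M 4 0*M 5 5 - M 0 3*M 1 2*M 2 4*M 3 1*M 4 5*M 5 0 - M 0 3*M 1 2*M 2 4*M 3 5*M 4 0*M 5 1 + M 0 3*M 1 2*M 2 4*M 3 5*M 4 1*M 5 0 + M 0 3*M 1 2*M 2 5*M 3 0*M 4 1*M 5 4 - M 0 3*M 1 2*M 2 5*M 3 0*M 4 4*M 5 1 - M 0 3*M 1 2*M 2 5*M 3 1*M 4 0*M 5 4 + M 0 3*M 1 2*M 2 5*M 3 1*M 4 4*M 5 0 + M 0 3*M 1 2*M 2 5*M 3 4*M 4 0*M 5 1 - M 0 3*M 1 2*M 2 5*M 3 4*M 4 1*M 5 0 + M 0 3*M 1 4*M 2 0*M 3 1*M 4 2*M 5 5 - M 0 3*M 1 4*M 2 0*M 3 1*M 4 5*M 5 2 - M 0 3*M 1 4*M 2 0*M 3 2*M 4 1*M 5 5 + M 0 3*M 1 4*M 2 0*M 3 2*M 4 5*M 5 1 + M 0 3*M 1 4*M 2 0*M 3 5*M 4 1*M 5 2 - M 0 3*M 1 4*M 2 0*M 3 5*M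 4 2*M 5 1 - M 0 3*M 1 4*M 2 1*M 3 0*M 4 2*M 5 5 + M 0 3*M 1 4*M 2 1*M 3 0*M 4 5*M 5 2 + M 0 3*M 1 4*M 2 1*M 3 2*M 4 0*M 5 5 - M 0 3*M 1 4*M 2 1*M 3 2*M 4 5*M 5 0 - M 0 3*M 1 4*M 2 1*M 3 5*M 4 0*M 5 2 + M 0 3*M 1 4*M 2 1*M 3 5*M 4 2*M 5 0 + M 0 3*M 1 4*M 2 2*M 3 0*M 4 1*M 5 5 - M 0 3*M 1 4*M 2 2*M 3 0*M 4 5*M 5 1 - M 0 3*M 1 4*M 2 2*M 3 1*M 4 0*M 5 5 + M 0 3*M 1 4*M 2 2*M 3 1*M 4 5*M 5 0 + M 0 3*M 1 4*M 2 2*M 3 5*M 4 0*M 5 1 - M 0 3*M 1 4*M 2 2*M 3 5*M 4 1*M 5 0 - M 0 3*M 1 4*M 2 5*M 3 0*M 4 1*M 5 2 + M 0 3*M 1 4*M 2 5*M 3 0*M 4 2*M 5 1 + M 0 3*M 1 4*M 2 5*M 3 1*M 4 0*M 5 2 - M 0 3*M 1 4*M 2 5*M 3 1*M 4 2*M 5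 0 - M 0 3*M 1 4*M 2 5*M 3 2*M 4 0*M 5 1 + M 0 3*M 1 4*M 2 5*M 3 2*M 4 1*M 5 0 - M 0 3*M 1 5*M 2 0*M 3 1*M 4 2*M 5 4 + M 0 3*M 1 5*M 2 0*M 3 1*M 4 4*M 5 2 + M 0 3*M 1 5*M 2 0*M 3 2*M 4 1*M 5 4 - M 0 3*M 1 5*M 2 0*M 3 2*M 4 4*M 5 1 - M 0 3*M 1 5*M 2 0*M 3 4*M 4 1*M 5 2 + M 0 3*M 1 5*M 2 0*M 3 4*M 4 2*M 5 1 + M 0 3*M 1 5*M 2 1*M 3 0*M 4 2*M 5 4 - M 0 3*M 1 5*M 2 1*M 3 0*M 4 4*M 5 2 - M 0 3*M 1 5*M 2 1*M 3 2*M 4 0*M 5 4 + M 0 3*M 1 5*M 2 1*M 3 2*M 4 4*M 5 0 + M 0 3*M 1 5*M 2 1*M 3 4*M 4 0*M 5 2 - M 0 3*M 1 5*M 2 1*M 3 4*M 4 2*M 5 0 - M 0 3*M 1 5*M 2 2*M 3 0*M 4 1*M 5 4 + M 0 3*M 1 5*M 2 2*M 3 0*M 4 4*M 5 1 + M 0 3*M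 1 5*M 2 2*M 3 1*M 4 0*M 5 4 - M 0 3*M 1 5*M 2 2*M 3 1*M 4 4*M 5 0 - M 0 3*M 1 5*M 2 2*M 3 4*M 4 0*M 5 1 + M 0 3*M 1 5*M 2 2*M 3 4*M 4 1*M 5 0 + M 0 3*M 1 5*M 2 4*M 3 0*M 4 1*M 5 2 - M 0 3*M 1 5*M 2 4*M 3 0*M 4 2*M 5 1 - M 0 3*M 1 5*M 2 4*M 3 1*M 4 0*M 5 2 + M 0 3*M 1 5*M 2 4*M 3 1*M 4 2*M 5 0 + M 0 3*M 1 5*M 2 4*M 3 2*M 4 0*M 5 1 - M 0 3*M 1 5*M 2 4*M 3 2*M 4 1*M 5 0 + M 0 4*M 1 0*M 2 1*M 3 2*M 4 3*M 5 5 - M 0 4*M 1 0*M 2 1*M 3 2*M 4 5*M 5 3 - M 0 4*M 1 0*M 2 1*M 3 3*M 4 2*M 5 5 + M 0 4*M 1 0*M 2 1*M 3 3*M 4 5*M 5 2 + M 0 4*M 1 0*M 2 1*M 3 5*M 4 2*M 5 3 - M 0 4*M 1 0*M 2 1*M 3 5*M 4 3*M 5 2 - M 0 4*M 1 0*M 2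 2*M 3 1*M 4 3*M 5 5 + M 0 4*M 1 0*M 2 2*M 3 1*M 4 5*M 5 3 + M 0 4*M 1 0*M 2 2*M 3 3*M 4 1*M 5 5 - M 0 4*M 1 0*M 2 2*M 3 3*M 4 5*M 5 1 - M 0 4*M 1 0*M 2 2*M 3 5*M 4 1*M 5 3 + M 0 4*M 1 0*M 2 2*M 3 5*M 4 3*M 5 1 + M 0 4*M 1 0*M 2 3*M 3 1*M 4 2*M 5 5 - M 0 4*M 1 0*M 2 3*M 3 1*M 4 5*M 5 2 - M 0 4*M 1 0*M 2 3*M 3 2*M 4 1*M 5 5 + M 0 4*M 1 0*M 2 3*M 3 2*M 4 5*M 5 1 + M 0 4*M 1 0*M 2 3*M 3 5*M 4 1*M 5 2 - M 0 4*M 1 0*M 2 3*M 3 5*M 4 2*M 5 1 - M 0 4*M 1 0*M 2 5*M 3 1*M 4 2*M 5 3 + M 0 4*M 1 0*M 2 5*M 3 1*M 4 3*M 5 2 + M 0 4*M 1 0*M 2 5*M 3 2*M 4 1*M 5 3 - M 0 4*M 1 0*M 2 5*M 3 2*M 4 3*M 5 1 - M 0 4*M 1 0*M 2 5*M 3 3*M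 4 1*M 5 2 + M 0 4*M 1 0*M 2 5*M 3 3*M 4 2*M 5 1 - M 0 4*M 1 1*M 2 0*M 3 2*M 4 3*M 5 5 + M 0 4*M 1 1*M 2 0*M 3 2*M 4 5*M 5 3 + M 0 4*M 1 1*M 2 0*M 3 3*M 4 2*M 5 5 - M 0 4*M 1 1*M 2 0*M 3 3*M 4 5*M 5 2 - M 0 4*M 1 1*M 2 0*M 3 5*M 4 2*M 5 3 + M 0 4*M 1 1*M 2 0*M 3 5*M 4 3*M 5 2 + M 0 4*M 1 1*M 2 2*M 3 0*M 4 3*M 5 5 - M 0 4*M 1 1*M 2 2*M 3 0*M 4 5*M 5 3 - M 0 4*M 1 1*M 2 2*M 3 3*M 4 0*M 5 5 + M 0 4*M 1 1*M 2 2*M 3 3*M 4 5*M 5 0 + M 0 4*M 1 1*M 2 2*M 3 5*M 4 0*M 5 3 - M 0 4*M 1 1*M 2 2*M 3 5*M 4 3*M 5 0 - M 0 4*M 1 1*M 2 3*M 3 0*M 4 2*M 5 5 + M 0 4*M 1 1*M 2 3*M 3 0*M 4 5*M 5 2 + M 0 4*M 1 1*M 2 3*M 3 2*M 4 0*M 5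 5 - M 0 4*M 1 1*M 2 3*M 3 2*M 4 5*M 5 0 - M 0 4*M 1 1*M 2 3*M 3 5*M 4 0*M 5 2 + M 0 4*M 1 1*M 2 3*M 3 5*M 4 2*M 5 0 + M 0 4*M 1 1*M 2 5*M 3 0*M 4 2*M 5 3 - M 0 4*M 1 1*M 2 5*M 3 0*M 4 3*M 5 2 - M 0 4*M 1 1*M 2 5*M 3 2*M 4 0*M 5 3 + M 0 4*M 1 1*M 2 5*M 3 2*M 4 3*M 5 0 + M 0 4*M 1 1*M 2 5*M 3 3*M 4 0*M 5 2 - M 0 4*M 1 1*M 2 5*M 3 3*M 4 2*M 5 0 + M 0 4*M 1 2*M 2 0*M 3 1*M 4 3*M 5 5 - M 0 4*M 1 2*M 2 0*M 3 1*M 4 5*M 5 3 - M 0 4*M 1 2*M 2 0*M 3 3*M 4 1*M 5 5 + M 0 4*M 1 2*M 2 0*M 3 3*M 4 5*M 5 1 + M 0 4*M 1 2*M 2 0*M 3 5*M 4 1*M 5 3 - M 0 4*M 1 2*M 2 0*M 3 5*M 4 3*M 5 1 - M 0 4*M 1 2*M 2 1*M 3 0*M 4 3*M 5 5 + M 0 4*M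 1 2*M 2 1*M 3 0*M 4 5*M 5 3 + M 0 4*M 1 2*M 2 1*M 3 3*M 4 0*M 5 5 - M 0 4*M 1 2*M 2 1*M 3 3*M 4 5*M 5 0 - M 0 4*M 1 2*M 2 1*M 3 5*M 4 0*M 5 3 + M 0 4*M 1 2*M 2 1*M 3 5*M 4 3*M 5 0 + M 0 4*M 1 2*M 2 3*M 3 0*M 4 1*M 5 5 - M 0 4*M 1 2*M 2 3*M 3 0*M 4 5*M 5 1 - M 0 4*M 1 2*M 2 3*M 3 1*M 4 0*M 5 5 + M 0 4*M 1 2*M 2 3*M 3 1*M 4 5*M 5 0 + M 0 4*M 1 2*M 2 3*M 3 5*M 4 0*M 5 1 - M 0 4*M 1 2*M 2 3*M 3 5*M 4 1*M 5 0 - M 0 4*M 1 2*M 2 5*M 3 0*M 4 1*M 5 3 + M 0 4*M 1 2*M 2 5*M 3 0*M 4 3*M 5 1 + M 0 4*M 1 2*M 2 5*M 3 1*M 4 0*M 5 3 - M 0 4*M 1 2*M 2 5*M 3 1*M 4 3*M 5 0 - M 0 4*M 1 2*M 2 5*M 3 3*M 4 0*M 5 1 + M 0 4*M 1 2*M 2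 5*M 3 3*M 4 1*M 5 0 - M 0 4*M 1 3*M 2 0*M 3 1*M 4 2*M 5 5 + M 0 4*M 1 3*M 2 0*M 3 1*M 4 5*M 5 2 + M 0 4*M 1 3*M 2 0*M 3 2*M 4 1*M 5 5 - M 0 4*M 1 3*M 2 0*M 3 2*M 4 5*M 5 1 - M 0 4*M 1 3*M 2 0*M 3 5*M 4 1*M 5 2 + M 0 4*M 1 3*M 2 0*M 3 5*M 4 2*M 5 1 + M 0 4*M 1 3*M 2 1*M 3 0*M 4 2*M 5 5 - M 0 4*M 1 3*M 2 1*M 3 0*M 4 5*M 5 2 - M 0 4*M 1 3*M 2 1*M 3 2*M 4 0*M 5 5 + M 0 4*M 1 3*M 2 1*M 3 2*M 4 5*M 5 0 + M 0 4*M 1 3*M 2 1*M 3 5*M 4 0*M 5 2 - M 0 4*M 1 3*M 2 1*M 3 5*M 4 2*M 5 0 - M 0 4*M 1 3*M 2 2*M 3 0*M 4 1*M 5 5 + M 0 4*M 1 3*M 2 2*M 3 0*M 4 5*M 5 1 + M 0 4*M 1 3*M 2 2*M 3 1*M 4 0*M 5 5 - M 0 4*M 1 3*M 2 2*M 3 1*M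 4 5*M 5 0 - M 0 4*M 1 3*M 2 2*M 3 5*M 4 0*M 5 1 + M 0 4*M 1 3*M 2 2*M 3 5*M 4 1*M 5 0 + M 0 4*M 1 3*M 2 5*M 3 0*M 4 1*M 5 2 - M 0 4*M 1 3*M 2 5*M 3 0*M 4 2*M 5 1 - M 0 4*M 1 3*M 2 5*M 3 1*M 4 0*M 5 2 + M 0 4*M 1 3*M 2 5*M 3 1*M 4 2*M 5 0 + M 0 4*M 1 3*M 2 5*M 3 2*M 4 0*M 5 1 - M 0 4*M 1 3*M 2 5*M 3 2*M 4 1*M 5 0 + M 0 4*M 1 5*M 2 0*M 3 1*M 4 2*M 5 3 - M 0 4*M 1 5*M 2 0*M 3 1*M 4 3*M 5 2 - M 0 4*M 1 5*M 2 0*M 3 2*M 4 1*M 5 3 + M 0 4*M 1 5*M 2 0*M 3 2*M 4 3*M 5 1 + M 0 4*M 1 5*M 2 0*M 3 3*M 4 1*M 5 2 - M 0 4*M 1 5*M 2 0*M 3 3*M 4 2*M 5 1 - M 0 4*M 1 5*M 2 1*M 3 0*M 4 2*M 5 3 + M 0 4*M 1 5*M 2 1*M 3 0*M 4 3*M 5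 2 + M 0 4*M 1 5*M 2 1*M 3 2*M 4 0*M 5 3 - M 0 4*M 1 5*M 2 1*M 3 2*M 4 3*M 5 0 - M 0 4*M 1 5*M 2 1*M 3 3*M 4 0*M 5 2 + M 0 4*M 1 5*M 2 1*M 3 3*M 4 2*M 5 0 + M 0 4*M 1 5*M 2 2*M 3 0*M 4 1*M 5 3 - M 0 4*M 1 5*M 2 2*M 3 0*M 4 3*M 5 1 - M 0 4*M 1 5*M 2 2*M 3 1*M 4 0*M 5 3 + M 0 4*M 1 5*M 2 2*M 3 1*M 4 3*M 5 0 + M 0 4*M 1 5*M 2 2*M 3 3*M 4 0*M 5 1 - M 0 4*M 1 5*M 2 2*M 3 3*M 4 1*M 5 0 - M 0 4*M 1 5*M 2 3*M 3 0*M 4 1*M 5 2 + M 0 4*M 1 5*M 2 3*M 3 0*M 4 2*M 5 1 + M 0 4*M 1 5*M 2 3*M 3 1*M 4 0*M 5 2 - M 0 4*M 1 5*M 2 3*M 3 1*M 4 2*M 5 0 - M 0 4*M 1 5*M 2 3*M 3 2*M 4 0*M 5 1 + M 0 4*M 1 5*M 2 3*M 3 2*M 4 1*M 5 0 - M 0 5*M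 1 0*M 2 1*M 3 2*M 4 3*M 5 4 + M 0 5*M 1 0*M 2 1*M 3 2*M 4 4*M 5 3 + M 0 5*M 1 0*M 2 1*M 3 3*M 4 2*M 5 4 - M 0 5*M 1 0*M 2 1*M 3 3*M 4 4*M 5 2 - M 0 5*M 1 0*M 2 1*M 3 4*M 4 2*M 5 3 + M 0 5*M 1 0*M 2 1*M 3 4*M 4 3*M 5 2 + M 0 5*M 1 0*M 2 2*M 3 1*M 4 3*M 5 4 - M 0 5*M 1 0*M 2 2*M 3 1*M 4 4*M 5 3 - M 0 5*M 1 0*M 2 2*M 3 3*M 4 1*M 5 4 + M 0 5*M 1 0*M 2 2*M 3 3*M 4 4*M 5 1 + M 0 5*M 1 0*M 2 2*M 3 4*M 4 1*M 5 3 - M 0 5*M 1 0*M 2 2*M 3 4*M 4 3*M 5 1 - M 0 5*M 1 0*M 2 3*M 3 1*M 4 2*M 5 4 + M 0 5*M 1 0*M 2 3*M 3 1*M 4 4*M 5 2 + M 0 5*M 1 0*M 2 3*M 3 2*M 4 1*M 5 4 - M 0 5*M 1 0*M 2 3*M 3 2*M 4 4*M 5 1 - M 0 5*M 1 0*M 2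 3*M 3 4*M 4 1*M 5 2 + M 0 5*M 1 0*M 2 3*M 3 4*M 4 2*M 5 1 + M 0 5*M 1 0*M 2 4*M 3 1*M 4 2*M 5 3 - M 0 5*M 1 0*M 2 4*M 3 1*M 4 3*M 5 2 - M 0 5*M 1 0*M 2 4*M 3 2*M 4 1*M 5 3 + M 0 5*M 1 0*M 2 4*M 3 2*M 4 3*M 5 1 + M 0 5*M 1 0*M 2 4*M 3 3*M 4 1*M 5 2 - M 0 5*M 1 0*M 2 4*M 3 3*M 4 2*M 5 1 + M 0 5*M 1 1*M 2 0*M 3 2*M 4 3*M 5 4 - M 0 5*M 1 1*M 2 0*M 3 2*M 4 4*M 5 3 - M 0 5*M 1 1*M 2 0*M 3 3*M 4 2*M 5 4 + M 0 5*M 1 1*M 2 0*M 3 3*M 4 4*M 5 2 + M 0 5*M 1 1*M 2 0*M 3 4*M 4 2*M 5 3 - M 0 5*M 1 1*M 2 0*M 3 4*M 4 3*M 5 2 - M 0 5*M 1 1*M 2 2*M 3 0*M 4 3*M 5 4 + M 0 5*M 1 1*M 2 2*M 3 0*M 4 4*M 5 3 + M 0 5*M 1 1*M 2 2*M 3 3*M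 4 0*M 5 4 - M 0 5*M 1 1*M 2 2*M 3 3*M 4 4*M 5 0 - M 0 5*M 1 1*M 2 2*M 3 4*M 4 0*M 5 3 + M 0 5*M 1 1*M 2 2*M 3 4*M 4 3*M 5 0 + M 0 5*M 1 1*M 2 3*M 3 0*M 4 2*M 5 4 - M 0 5*M 1 1*M 2 3*M 3 0*M 4 4*M 5 2 - M 0 5*M 1 1*M 2 3*M 3 2*M 4 0*M 5 4 + M 0 5*M 1 1*M 2 3*M 3 2*M 4 4*M 5 0 + M 0 5*M 1 1*M 2 3*M 3 4*M 4 0*M 5 2 - M 0 5*M 1 1*M 2 3*M 3 4*M 4 2*M 5 0 - M 0 5*M 1 1*M 2 4*M 3 0*M 4 2*M 5 3 + M 0 5*M 1 1*M 2 4*M 3 0*M 4 3*M 5 2 + M 0 5*M 1 1*M 2 4*M 3 2*M 4 0*M 5 3 - M 0 5*M 1 1*M 2 4*M 3 2*M 4 3*M 5 0 - M 0 5*M 1 1*M 2 4*M 3 3*M 4 0*M 5 2 + M 0 5*M 1 1*M 2 4*M 3 3*M 4 2*M 5 0 - M 0 5*M 1 2*M 2 0*M 3 1*M 4 3*M 5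 4 + M 0 5*M 1 2*M 2 0*M 3 1*M 4 4*M 5 3 + M 0 5*M 1 2*M 2 0*M 3 3*M 4 1*M 5 4 - M 0 5*M 1 2*M 2 0*M 3 3*M 4 4*M 5 1 - M 0 5*M 1 2*M 2 0*M 3 4*M 4 1*M 5 3 + M 0 5*M 1 2*M 2 0*M 3 4*M 4 3*M 5 1 + M 0 5*M 1 2*M 2 1*M 3 0*M 4 3*M 5 4 - M 0 5*M 1 2*M 2 1*M 3 0*M 4 4*M 5 3 - M 0 5*M 1 2*M 2 1*M 3 3*M 4 0*M 5 4 + M 0 5*M 1 2*M 2 1*M 3 3*M 4 4*M 5 0 + M 0 5*M 1 2*M 2 1*M 3 4*M 4 0*M 5 3 - M 0 5*M 1 2*M 2 1*M 3 4*M 4 3*M 5 0 - M 0 5*M 1 2*M 2 3*M 3 0*M 4 1*M 5 4 + M 0 5*M 1 2*M 2 3*M 3 0*M 4 4*M 5 1 + M 0 5*M 1 2*M 2 3*M 3 1*M 4 0*M 5 4 - M 0 5*M 1 2*M 2 3*M 3 1*M 4 4*M 5 0 - M 0 5*M 1 2*M 2 3*M 3 4*M 4 0*M 5 1 + M 0 5*M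 1 2*M 2 3*M 3 4*M 4 1*M 5 0 + M 0 5*M 1 2*M 2 4*M 3 0*M 4 1*M 5 3 - M 0 5*M 1 2*M 2 4*M 3 0*M 4 3*M 5 1 - M 0 5*M 1 2*M 2 4*M 3 1*M 4 0*M 5 3 + M 0 5*M 1 2*M 2 4*M 3 1*M 4 3*M 5 0 + M 0 5*M 1 2*M 2 4*M 3 3*M 4 0*M 5 1 - M 0 5*M 1 2*M 2 4*M 3 3*M 4 1*M 5 0 + M 0 5*M 1 3*M 2 0*M 3 1*M 4 2*M 5 4 - M 0 5*M 1 3*M 2 0*M 3 1*M 4 4*M 5 2 - M 0 5*M 1 3*M 2 0*M 3 2*M 4 1*M 5 4 + M 0 5*M 1 3*M 2 0*M 3 2*M 4 4*M 5 1 + M 0 5*M 1 3*M 2 0*M 3 4*M 4 1*M 5 2 - M 0 5*M 1 3*M 2 0*M 3 4*M 4 2*M 5 1 - M 0 5*M 1 3*M 2 1*M 3 0*M 4 2*M 5 4 + M 0 5*M 1 3*M 2 1*M 3 0*M 4 4*M 5 2 + M 0 5*M 1 3*M 2 1*M 3 2*M 4 0*M 5 4 - M 0 5*M 1 3*M 2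 1*M 3 2*M 4 4*M 5 0 - M 0 5*M 1 3*M 2 1*M 3 4*M 4 0*M 5 2 + M 0 5*M 1 3*M 2 1*M 3 4*M 4 2*M 5 0 + M 0 5*M 1 3*M 2 2*M 3 0*M 4 1*M 5 4 - M 0 5*M 1 3*M 2 2*M 3 0*M 4 4*M 5 1 - M 0 5*M 1 3*M 2 2*M 3 1*M 4 0*M 5 4 + M 0 5*M 1 3*M 2 2*M 3 1*M 4 4*M 5 0 + M 0 5*M 1 3*M 2 2*M 3 4*M 4 0*M 5 1 - M 0 5*M 1 3*M 2 2*M 3 4*M 4 1*M 5 0 - M 0 5*M 1 3*M 2 4*M 3 0*M 4 1*M 5 2 + M 0 5*M 1 3*M 2 4*M 3 0*M 4 2*M 5 1 + M 0 5*M 1 3*M 2 4*M 3 1*M 4 0*M 5 2 - M 0 5*M 1 3*M 2 4*M 3 1*M 4 2*M 5 0 - M 0 5*M 1 3*M 2 4*M 3 2*M 4 0*M 5 1 + M 0 5*M 1 3*M 2 4*M 3 2*M 4 1*M 5 0 - M 0 5*M 1 4*M 2 0*M 3 1*M 4 2*M 5 3 + M 0 5*M 1 4*M 2 0*M 3 1*M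 4 3*M 5 2 + M 0 5*M 1 4*M 2 0*M 3 2*M 4 1*M 5 3 - M 0 5*M 1 4*M 2 0*M 3 2*M 4 3*M 5 1 - M 0 5*M 1 4*M 2 0*M 3 3*M 4 1*M 5 2 + M 0 5*M 1 4*M 2 0*M 3 3*M 4 2*M 5 1 + M 0 5*M 1 4*M 2 1*M 3 0*M 4 2*M 5 3 - M 0 5*M 1 4*M 2 1*M 3 0*M 4 3*M 5 2 - M 0 5*M 1 4*M 2 1*M 3 2*M 4 0*M 5 3 + M 0 5*M 1 4*M 2 1*M 3 2*M 4 3*M 5 0 + M 0 5*M 1 4*M 2 1*M 3 3*M 4 0*M 5 2 - M 0 5*M 1 4*M 2 1*M 3 3*M 4 2*M 5 0 - M 0 5*M 1 4*M 2 2*M 3 0*M 4 1*M 5 3 + M 0 5*M 1 4*M 2 2*M 3 0*M 4 3*M 5 1 + M 0 5*M 1 4*M 2 2*M 3 1*M 4 0*M 5 3 - M 0 5*M 1 4*M 2 2*M 3 1*M 4 3*M 5 0 - M 0 5*M 1 4*M 2 2*M 3 3*M 4 0*M 5 1 + M 0 5*M 1 4*M 2 2*M 3 3*M 4 1*M 5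 0 + M 0 5*M 1 4*M 2 3*M 3 0*M 4 1*M 5 2 - M 0 5*M 1 4*M 2 3*M 3 0*M 4 2*M 5 1 - M 0 5*M 1 4*M 2 3*M 3 1*M 4 0*M 5 2 + M 0 5*M 1 4*M 2 3*M 3 1*M 4 2*M 5 0 + M 0 5*M 1 4*M 2 3*M 3 2*M 4 0*M 5 1 - M 0 5*M 1 4*M 2 3*M 3 2*M 4 1*M 5 0 := by
  rw [det_succ_row_zero, Fin.sum_univ_six]
  simp only [det_fin_five', submatrix_apply, sa6_0_0, sa6_0_1, sa6_0_2, sa6_0_3, sa6_0_4, sa6_1_0, sa6_1_1, sa6_1_2, sa6_1_3, sa6_1_4, sa6_2_0, sa6_2_1, sa6_2_2, sa6_2_3, sa6_2_4, sa6_3_0, sa6_3_1, sa6_3_2, sa6_3_3, sa6_3_4, sa6_4_0, sa6_4_1, sa6_4_2, sa6_4_3, sa6_4_4, sa6_5_0, sa6_5_1, sa6_5_2, sa6_5_3, sa6_5_4, fs6_0, fs6_1, fs6_2, fs6_3, fs6_4, fv6_0, fv6_1, fv6_2, fv6_3, fv6_4, fv6_5]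
  norm_num
  ring

end DetExpansion

private lemma cv6_0 {α : Type*} (x0 x1 x2 x3 x4 x5 : α) : (![x0,x1,x2,x3,x4,x5] : Fin 6 → α) 0 = x0 := rfl
private lemma cv6_1 {α : Type*} (x0 x1 x2 x3 x4 x5 : α) : (![x0,x1,x2,x3,x4,x5] : Fin 6 → α) 1 = x1 := rfl
private lemma cv6_2 {α : Type*} (x0 x1 x2 x3 x4 x5 : α) : (![x0,x1,x2,x3,x4,x5] : Fin 6 → α) 2 = x2 := rfl
private lemma cv6_3 {α : Type*} (x0 x1 x2 x3 x4 x5 : α) : (![x0,x1,x2,x3,x4,x5] : Fin 6 → α) 3 = x3 := rfl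
private lemma cv6_4 {α : Type*} (x0 x1 x2 x3 x4 x5 : α) : (![x0,x1,x2,x3,x4,x5] : Fin 6 → α) 4 = x4 := rfl
private lemma cv6_5 {α : Type*} (x0 x1 x2 x3 x4 x5 : α) : (![x0,x1,x2,x3,x4,x5] : Fin 6 → α) 5 = x5 := rfl
private lemma fmk0 (h : 0 < 6) : (⟨0, h⟩ : Fin 6) = 0 := rfl
private lemma fmk1 (h : 1 < 6) : (⟨1, h⟩ : Fin 6) = 1 := rfl
private lemma fmk2 (h : 2 < 6) : (⟨2, h⟩ : Fin 6) = 2 := rfl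
private lemma fmk3 (h : 3 < 6) : (⟨3, h⟩ : Fin 6) = 3 := rfl
private lemma fmk4 (h : 4 < 6) : (⟨4, h⟩ : Fin 6) = 4 := rfl
private lemma fmk5 (h : 5 < 6) : (⟨5, h⟩ : Fin 6) = 5 := rfl

set_option maxHeartbeats 10000000 in
set_option maxRecDepth 100000 in
private theorem det6_explicit (v00 v01 v02 v03 v04 v05 v10 v11 v12 v13 v14 v15 v20 v21 v22 v23 v24 v25 v30 v31 v32 v33 v34 v35 v40 v41 v42 v43 v44 v45 v50 v51 v52 v53 v54 v55 : ℂ) :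
    (Matrix.of ![![v00,v01,v02,v03,v04,v05],![v10,v11,v12,v13,v14,v15],![v20,v21,v22,v23,v24,v25],![v30,v31,v32,v33,v34,v35],![v40,v41,v42,v43,v44,v45],![v50,v51,v52,v53,v54,v55]]).det = v00*v11*v22*v33*v44*v55 - v00*v11*v22*v33*v45*v54 - v00*v11*v22*v34*v43*v55 + v00*v11*v22*v34*v45*v53 + v00*v11*v22*v35*v43*v54 - v00*v11*v22*v35*v44*v53 - v00*v11*v23*v32*v44*v55 + v00*v11*v23*v32*v45*v54 + v00*v11*v23*v34*v42*v55 - v00*v11*v23*v34*v45*v52 - v00*v11*v23*v35*v42*v54 + v00*v11*v23*v35*v44*v52 + v00*v11*v24*v32*v43*v55 - v00*v11*v24*v32*v45*v53 - v00*v11*v24*v33*v42*v55 + v00*v11*v24*v33*v45*v52 + v00*v11*v24*v35*v42*v53 - v00*v11*v24*v35*v43*v52 - v00*v11*v25*v32*v43*v54 + v00*v11*v25*v32*v44*v53 + v00*v11*v25*v33*v42*v54 - v00*v11*v25*v33*v44*v52 - v00*v11*v25*v34*v42*v53 + v00*v11*v25*v34*v43*v52 - v00*v12*v21*v33*v44*v55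 + v00*v12*v21*v33*v45*v54 + v00*v12*v21*v34*v43*v55 - v00*v12*v21*v34*v45*v53 - v00*v12*v21*v35*v43*v54 + v00*v12*v21*v35*v44*v53 + v00*v12*v23*v31*v44*v55 - v00*v12*v23*v31*v45*v54 - v00*v12*v23*v34*v41*v55 + v00*v12*v23*v34*v45*v51 + v00*v12*v23*v35*v41*v54 - v00*v12*v23*v35*v44*v51 - v00*v12*v24*v31*v43*v55 + v00*v12*v24*v31*v45*v53 + v00*v12*v24*v33*v41*v55 - v00*v12*v24*v33*v45*v51 - v00*v12*v24*v35*v41*v53 + v00*v12*v24*v35*v43*v51 + v00*v12*v25*v31*v43*v54 - v00*v12*v25*v31*v44*v53 - v00*v12*v25*v33*v41*v54 + v00*v12*v25*v33*v44*v51 + v00*v12*v25*v34*v41*v53 - v00*v12*v25*v34*v43*v51 + v00*v13*v21*v32*v44*v55 - v00*v13*v21*v32*v45*v54 - v00*v13*v21*v34*v42*v55 + v00*v13*v21*v34*v45*v52 + v00*v13*v21*v35*v42*v54 - v00*v13*v21*v35*v44*v52 - v00*v13*v22*v31*v44*v55 + v00*v13*v22*v31*v45*v54 + v00*v13*v22*v34*v41*v55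 - v00*v13*v22*v34*v45*v51 - v00*v13*v22*v35*v41*v54 + v00*v13*v22*v35*v44*v51 + v00*v13*v24*v31*v42*v55 - v00*v13*v24*v31*v45*v52 - v00*v13*v24*v32*v41*v55 + v00*v13*v24*v32*v45*v51 + v00*v13*v24*v35*v41*v52 - v00*v13*v24*v35*v42*v51 - v00*v13*v25*v31*v42*v54 + v00*v13*v25*v31*v44*v52 + v00*v13*v25*v32*v41*v54 - v00*v13*v25*v32*v44*v51 - v00*v13*v25*v34*v41*v52 + v00*v13*v25*v34*v42*v51 - v00*v14*v21*v32*v43*v55 + v00*v14*v21*v32*v45*v53 + v00*v14*v21*v33*v42*v55 - v00*v14*v21*v33*v45*v52 - v00*v14*v21*v35*v42*v53 + v00*v14*v21*v35*v43*v52 + v00*v14*v22*v31*v43*v55 - v00*v14*v22*v31*v45*v53 - v00*v14*v22*v33*v41*v55 + v00*v14*v22*v33*v45*v51 + v00*v14*v22*v35*v41*v53 - v00*v14*v22*v35*v43*v51 - v00*v14*v23*v31*v42*v55 + v00*v14*v23*v31*v45*v52 + v00*v14*v23*v32*v41*v55 - v00*v14*v23*v32*v45*v51 - v00*v14*v23*v35*v41*v52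 + v00*v14*v23*v35*v42*v51 + v00*v14*v25*v31*v42*v53 - v00*v14*v25*v31*v43*v52 - v00*v14*v25*v32*v41*v53 + v00*v14*v25*v32*v43*v51 + v00*v14*v25*v33*v41*v52 - v00*v14*v25*v33*v42*v51 + v00*v15*v21*v32*v43*v54 - v00*v15*v21*v32*v44*v53 - v00*v15*v21*v33*v42*v54 + v00*v15*v21*v33*v44*v52 + v00*v15*v21*v34*v42*v53 - v00*v15*v21*v34*v43*v52 - v00*v15*v22*v31*v43*v54 + v00*v15*v22*v31*v44*v53 + v00*v15*v22*v33*v41*v54 - v00*v15*v22*v33*v44*v51 - v00*v15*v22*v34*v41*v53 + v00*v15*v22*v34*v43*v51 + v00*v15*v23*v31*v42*v54 - v00*v15*v23*v31*v44*v52 - v00*v15*v23*v32*v41*v54 + v00*v15*v23*v32*v44*v51 + v00*v15*v23*v34*v41*v52 - v00*v15*v23*v34*v42*v51 - v00*v15*v24*v31*v42*v53 + v00*v15*v24*v31*v43*v52 + v00*v15*v24*v32*v41*v53 - v00*v15*v24*v32*v43*v51 - v00*v15*v24*v33*v41*v52 + v00*v15*v24*v33*v42*v51 - v01*v10*v22*v33*v44*v55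 + v01*v10*v22*v33*v45*v54 + v01*v10*v22*v34*v43*v55 - v01*v10*v22*v34*v45*v53 - v01*v10*v22*v35*v43*v54 + v01*v10*v22*v35*v44*v53 + v01*v10*v23*v32*v44*v55 - v01*v10*v23*v32*v45*v54 - v01*v10*v23*v34*v42*v55 + v01*v10*v23*v34*v45*v52 + v01*v10*v23*v35*v42*v54 - v01*v10*v23*v35*v44*v52 - v01*v10*v24*v32*v43*v55 + v01*v10*v24*v32*v45*v53 + v01*v10*v24*v33*v42*v55 - v01*v10*v24*v33*v45*v52 - v01*v10*v24*v35*v42*v53 + v01*v10*v24*v35*v43*v52 + v01*v10*v25*v32*v43*v54 - v01*v10*v25*v32*v44*v53 - v01*v10*v25*v33*v42*v54 + v01*v10*v25*v33*v44*v52 + v01*v10*v25*v34*v42*v53 - v01*v10*v25*v34*v43*v52 + v01*v12*v20*v33*v44*v55 - v01*v12*v20*v33*v45*v54 - v01*v12*v20*v34*v43*v55 + v01*v12*v20*v34*v45*v53 + v01*v12*v20*v35*v43*v54 - v01*v12*v20*v35*v44*v53 - v01*v12*v23*v30*v44*v55 + v01*v12*v23*v30*v45*v54 + v01*v12*v23*v34*v40*v55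 - v01*v12*v23*v34*v45*v50 - v01*v12*v23*v35*v40*v54 + v01*v12*v23*v35*v44*v50 + v01*v12*v24*v30*v43*v55 - v01*v12*v24*v30*v45*v53 - v01*v12*v24*v33*v40*v55 + v01*v12*v24*v33*v45*v50 + v01*v12*v24*v35*v40*v53 - v01*v12*v24*v35*v43*v50 - v01*v12*v25*v30*v43*v54 + v01*v12*v25*v30*v44*v53 + v01*v12*v25*v33*v40*v54 - v01*v12*v25*v33*v44*v50 - v01*v12*v25*v34*v40*v53 + v01*v12*v25*v34*v43*v50 - v01*v13*v20*v32*v44*v55 + v01*v13*v20*v32*v45*v54 + v01*v13*v20*v34*v42*v55 - v01*v13*v20*v34*v45*v52 - v01*v13*v20*v35*v42*v54 + v01*v13*v20*v35*v44*v52 + v01*v13*v22*v30*v44*v55 - v01*v13*v22*v30*v45*v54 - v01*v13*v22*v34*v40*v55 + v01*v13*v22*v34*v45*v50 + v01*v13*v22*v35*v40*v54 - v01*v13*v22*v35*v44*v50 - v01*v13*v24*v30*v42*v55 + v01*v13*v24*v30*v45*v52 + v01*v13*v24*v32*v40*v55 - v01*v13*v24*v32*v45*v50 - v01*v13*v24*v35*v40*v52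 + v01*v13*v24*v35*v42*v50 + v01*v13*v25*v30*v42*v54 - v01*v13*v25*v30*v44*v52 - v01*v13*v25*v32*v40*v54 + v01*v13*v25*v32*v44*v50 + v01*v13*v25*v34*v40*v52 - v01*v13*v25*v34*v42*v50 + v01*v14*v20*v32*v43*v55 - v01*v14*v20*v32*v45*v53 - v01*v14*v20*v33*v42*v55 + v01*v14*v20*v33*v45*v52 + v01*v14*v20*v35*v42*v53 - v01*v14*v20*v35*v43*v52 - v01*v14*v22*v30*v43*v55 + v01*v14*v22*v30*v45*v53 + v01*v14*v22*v33*v40*v55 - v01*v14*v22*v33*v45*v50 - v01*v14*v22*v35*v40*v53 + v01*v14*v22*v35*v43*v50 + v01*v14*v23*v30*v42*v55 - v01*v14*v23*v30*v45*v52 - v01*v14*v23*v32*v40*v55 + v01*v14*v23*v32*v45*v50 + v01*v14*v23*v35*v40*v52 - v01*v14*v23*v35*v42*v50 - v01*v14*v25*v30*v42*v53 + v01*v14*v25*v30*v43*v52 + v01*v14*v25*v32*v40*v53 - v01*v14*v25*v32*v43*v50 - v01*v14*v25*v33*v40*v52 + v01*v14*v25*v33*v42*v50 - v01*v15*v20*v32*v43*v54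 + v01*v15*v20*v32*v44*v53 + v01*v15*v20*v33*v42*v54 - v01*v15*v20*v33*v44*v52 - v01*v15*v20*v34*v42*v53 + v01*v15*v20*v34*v43*v52 + v01*v15*v22*v30*v43*v54 - v01*v15*v22*v30*v44*v53 - v01*v15*v22*v33*v40*v54 + v01*v15*v22*v33*v44*v50 + v01*v15*v22*v34*v40*v53 - v01*v15*v22*v34*v43*v50 - v01*v15*v23*v30*v42*v54 + v01*v15*v23*v30*v44*v52 + v01*v15*v23*v32*v40*v54 - v01*v15*v23*v32*v44*v50 - v01*v15*v23*v34*v40*v52 + v01*v15*v23*v34*v42*v50 + v01*v15*v24*v30*v42*v53 - v01*v15*v24*v30*v43*v52 - v01*v15*v24*v32*v40*v53 + v01*v15*v24*v32*v43*v50 + v01*v15*v24*v33*v40*v52 - v01*v15*v24*v33*v42*v50 + v02*v10*v21*v33*v44*v55 - v02*v10*v21*v33*v45*v54 - v02*v10*v21*v34*v43*v55 + v02*v10*v21*v34*v45*v53 + v02*v10*v21*v35*v43*v54 - v02*v10*v21*v35*v44*v53 - v02*v10*v23*v31*v44*v55 + v02*v10*v23*v31*v45*v54 + v02*v10*v23*v34*v41*v55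 - v02*v10*v23*v34*v45*v51 - v02*v10*v23*v35*v41*v54 + v02*v10*v23*v35*v44*v51 + v02*v10*v24*v31*v43*v55 - v02*v10*v24*v31*v45*v53 - v02*v10*v24*v33*v41*v55 + v02*v10*v24*v33*v45*v51 + v02*v10*v24*v35*v41*v53 - v02*v10*v24*v35*v43*v51 - v02*v10*v25*v31*v43*v54 + v02*v10*v25*v31*v44*v53 + v02*v10*v25*v33*v41*v54 - v02*v10*v25*v33*v44*v51 - v02*v10*v25*v34*v41*v53 + v02*v10*v25*v34*v43*v51 - v02*v11*v20*v33*v44*v55 + v02*v11*v20*v33*v45*v54 + v02*v11*v20*v34*v43*v55 - v02*v11*v20*v34*v45*v53 - v02*v11*v20*v35*v43*v54 + v02*v11*v20*v35*v44*v53 + v02*v11*v23*v30*v44*v55 - v02*v11*v23*v30*v45*v54 - v02*v11*v23*v34*v40*v55 + v02*v11*v23*v34*v45*v50 + v02*v11*v23*v35*v40*v54 - v02*v11*v23*v35*v44*v50 - v02*v11*v24*v30*v43*v55 + v02*v11*v24*v30*v45*v53 + v02*v11*v24*v33*v40*v55 - v02*v11*v24*v33*v45*v50 - v02*v11*v24*v35*v40*v53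 + v02*v11*v24*v35*v43*v50 + v02*v11*v25*v30*v43*v54 - v02*v11*v25*v30*v44*v53 - v02*v11*v25*v33*v40*v54 + v02*v11*v25*v33*v44*v50 + v02*v11*v25*v34*v40*v53 - v02*v11*v25*v34*v43*v50 + v02*v13*v20*v31*v44*v55 - v02*v13*v20*v31*v45*v54 - v02*v13*v20*v34*v41*v55 + v02*v13*v20*v34*v45*v51 + v02*v13*v20*v35*v41*v54 - v02*v13*v20*v35*v44*v51 - v02*v13*v21*v30*v44*v55 + v02*v13*v21*v30*v45*v54 + v02*v13*v21*v34*v40*v55 - v02*v13*v21*v34*v45*v50 - v02*v13*v21*v35*v40*v54 + v02*v13*v21*v35*v44*v50 + v02*v13*v24*v30*v41*v55 - v02*v13*v24*v30*v45*v51 - v02*v13*v24*v31*v40*v55 + v02*v13*v24*v31*v45*v50 + v02*v13*v24*v35*v40*v51 - v02*v13*v24*v35*v41*v50 - v02*v13*v25*v30*v41*v54 + v02*v13*v25*v30*v44*v51 + v02*v13*v25*v31*v40*v54 - v02*v13*v25*v31*v44*v50 - v02*v13*v25*v34*v40*v51 + v02*v13*v25*v34*v41*v50 - v02*v14*v20*v31*v43*v55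 + v02*v14*v20*v31*v45*v53 + v02*v14*v20*v33*v41*v55 - v02*v14*v20*v33*v45*v51 - v02*v14*v20*v35*v41*v53 + v02*v14*v20*v35*v43*v51 + v02*v14*v21*v30*v43*v55 - v02*v14*v21*v30*v45*v53 - v02*v14*v21*v33*v40*v55 + v02*v14*v21*v33*v45*v50 + v02*v14*v21*v35*v40*v53 - v02*v14*v21*v35*v43*v50 - v02*v14*v23*v30*v41*v55 + v02*v14*v23*v30*v45*v51 + v02*v14*v23*v31*v40*v55 - v02*v14*v23*v31*v45*v50 - v02*v14*v23*v35*v40*v51 + v02*v14*v23*v35*v41*v50 + v02*v14*v25*v30*v41*v53 - v02*v14*v25*v30*v43*v51 - v02*v14*v25*v31*v40*v53 + v02*v14*v25*v31*v43*v50 + v02*v14*v25*v33*v40*v51 - v02*v14*v25*v33*v41*v50 + v02*v15*v20*v31*v43*v54 - v02*v15*v20*v31*v44*v53 - v02*v15*v20*v33*v41*v54 + v02*v15*v20*v33*v44*v51 + v02*v15*v20*v34*v41*v53 - v02*v15*v20*v34*v43*v51 - v02*v15*v21*v30*v43*v54 + v02*v15*v21*v30*v44*v53 + v02*v15*v21*v33*v40*v54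 - v02*v15*v21*v33*v44*v50 - v02*v15*v21*v34*v40*v53 + v02*v15*v21*v34*v43*v50 + v02*v15*v23*v30*v41*v54 - v02*v15*v23*v30*v44*v51 - v02*v15*v23*v31*v40*v54 + v02*v15*v23*v31*v44*v50 + v02*v15*v23*v34*v40*v51 - v02*v15*v23*v34*v41*v50 - v02*v15*v24*v30*v41*v53 + v02*v15*v24*v30*v43*v51 + v02*v15*v24*v31*v40*v53 - v02*v15*v24*v31*v43*v50 - v02*v15*v24*v33*v40*v51 + v02*v15*v24*v33*v41*v50 - v03*v10*v21*v32*v44*v55 + v03*v10*v21*v32*v45*v54 + v03*v10*v21*v34*v42*v55 - v03*v10*v21*v34*v45*v52 - v03*v10*v21*v35*v42*v54 + v03*v10*v21*v35*v44*v52 + v03*v10*v22*v31*v44*v55 - v03*v10*v22*v31*v45*v54 - v03*v10*v22*v34*v41*v55 + v03*v10*v22*v34*v45*v51 + v03*v10*v22*v35*v41*v54 - v03*v10*v22*v35*v44*v51 - v03*v10*v24*v31*v42*v55 + v03*v10*v24*v31*v45*v52 + v03*v10*v24*v32*v41*v55 - v03*v10*v24*v32*v45*v51 - v03*v10*v24*v35*v41*v52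 + v03*v10*v24*v35*v42*v51 + v03*v10*v25*v31*v42*v54 - v03*v10*v25*v31*v44*v52 - v03*v10*v25*v32*v41*v54 + v03*v10*v25*v32*v44*v51 + v03*v10*v25*v34*v41*v52 - v03*v10*v25*v34*v42*v51 + v03*v11*v20*v32*v44*v55 - v03*v11*v20*v32*v45*v54 - v03*v11*v20*v34*v42*v55 + v03*v11*v20*v34*v45*v52 + v03*v11*v20*v35*v42*v54 - v03*v11*v20*v35*v44*v52 - v03*v11*v22*v30*v44*v55 + v03*v11*v22*v30*v45*v54 + v03*v11*v22*v34*v40*v55 - v03*v11*v22*v34*v45*v50 - v03*v11*v22*v35*v40*v54 + v03*v11*v22*v35*v44*v50 + v03*v11*v24*v30*v42*v55 - v03*v11*v24*v30*v45*v52 - v03*v11*v24*v32*v40*v55 + v03*v11*v24*v32*v45*v50 + v03*v11*v24*v35*v40*v52 - v03*v11*v24*v35*v42*v50 - v03*v11*v25*v30*v42*v54 + v03*v11*v25*v30*v44*v52 + v03*v11*v25*v32*v40*v54 - v03*v11*v25*v32*v44*v50 - v03*v11*v25*v34*v40*v52 + v03*v11*v25*v34*v42*v50 - v03*v12*v20*v31*v44*v55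 + v03*v12*v20*v31*v45*v54 + v03*v12*v20*v34*v41*v55 - v03*v12*v20*v34*v45*v51 - v03*v12*v20*v35*v41*v54 + v03*v12*v20*v35*v44*v51 + v03*v12*v21*v30*v44*v55 - v03*v12*v21*v30*v45*v54 - v03*v12*v21*v34*v40*v55 + v03*v12*v21*v34*v45*v50 + v03*v12*v21*v35*v40*v54 - v03*v12*v21*v35*v44*v50 - v03*v12*v24*v30*v41*v55 + v03*v12*v24*v30*v45*v51 + v03*v12*v24*v31*v40*v55 - v03*v12*v24*v31*v45*v50 - v03*v12*v24*v35*v40*v51 + v03*v12*v24*v35*v41*v50 + v03*v12*v25*v30*v41*v54 - v03*v12*v25*v30*v44*v51 - v03*v12*v25*v31*v40*v54 + v03*v12*v25*v31*v44*v50 + v03*v12*v25*v34*v40*v51 - v03*v12*v25*v34*v41*v50 + v03*v14*v20*v31*v42*v55 - v03*v14*v20*v31*v45*v52 - v03*v14*v20*v32*v41*v55 + v03*v14*v20*v32*v45*v51 + v03*v14*v20*v35*v41*v52 - v03*v14*v20*v35*v42*v51 - v03*v14*v21*v30*v42*v55 + v03*v14*v21*v30*v45*v52 + v03*v14*v21*v32*v40*v55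 - v03*v14*v21*v32*v45*v50 - v03*v14*v21*v35*v40*v52 + v03*v14*v21*v35*v42*v50 + v03*v14*v22*v30*v41*v55 - v03*v14*v22*v30*v45*v51 - v03*v14*v22*v31*v40*v55 + v03*v14*v22*v31*v45*v50 + v03*v14*v22*v35*v40*v51 - v03*v14*v22*v35*v41*v50 - v03*v14*v25*v30*v41*v52 + v03*v14*v25*v30*v42*v51 + v03*v14*v25*v31*v40*v52 - v03*v14*v25*v31*v42*v50 - v03*v14*v25*v32*v40*v51 + v03*v14*v25*v32*v41*v50 - v03*v15*v20*v31*v42*v54 + v03*v15*v20*v31*v44*v52 + v03*v15*v20*v32*v41*v54 - v03*v15*v20*v32*v44*v51 - v03*v15*v20*v34*v41*v52 + v03*v15*v20*v34*v42*v51 + v03*v15*v21*v30*v42*v54 - v03*v15*v21*v30*v44*v52 - v03*v15*v21*v32*v40*v54 + v03*v15*v21*v32*v44*v50 + v03*v15*v21*v34*v40*v52 - v03*v15*v21*v34*v42*v50 - v03*v15*v22*v30*v41*v54 + v03*v15*v22*v30*v44*v51 + v03*v15*v22*v31*v40*v54 - v03*v15*v22*v31*v44*v50 - v03*v15*v22*v34*v40*v51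 + v03*v15*v22*v34*v41*v50 + v03*v15*v24*v30*v41*v52 - v03*v15*v24*v30*v42*v51 - v03*v15*v24*v31*v40*v52 + v03*v15*v24*v31*v42*v50 + v03*v15*v24*v32*v40*v51 - v03*v15*v24*v32*v41*v50 + v04*v10*v21*v32*v43*v55 - v04*v10*v21*v32*v45*v53 - v04*v10*v21*v33*v42*v55 + v04*v10*v21*v33*v45*v52 + v04*v10*v21*v35*v42*v53 - v04*v10*v21*v35*v43*v52 - v04*v10*v22*v31*v43*v55 + v04*v10*v22*v31*v45*v53 + v04*v10*v22*v33*v41*v55 - v04*v10*v22*v33*v45*v51 - v04*v10*v22*v35*v41*v53 + v04*v10*v22*v35*v43*v51 + v04*v10*v23*v31*v42*v55 - v04*v10*v23*v31*v45*v52 - v04*v10*v23*v32*v41*v55 + v04*v10*v23*v32*v45*v51 + v04*v10*v23*v35*v41*v52 - v04*v10*v23*v35*v42*v51 - v04*v10*v25*v31*v42*v53 + v04*v10*v25*v31*v43*v52 + v04*v10*v25*v32*v41*v53 - v04*v10*v25*v32*v43*v51 - v04*v10*v25*v33*v41*v52 + v04*v10*v25*v33*v42*v51 - v04*v11*v20*v32*v43*v55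 + v04*v11*v20*v32*v45*v53 + v04*v11*v20*v33*v42*v55 - v04*v11*v20*v33*v45*v52 - v04*v11*v20*v35*v42*v53 + v04*v11*v20*v35*v43*v52 + v04*v11*v22*v30*v43*v55 - v04*v11*v22*v30*v45*v53 - v04*v11*v22*v33*v40*v55 + v04*v11*v22*v33*v45*v50 + v04*v11*v22*v35*v40*v53 - v04*v11*v22*v35*v43*v50 - v04*v11*v23*v30*v42*v55 + v04*v11*v23*v30*v45*v52 + v04*v11*v23*v32*v40*v55 - v04*v11*v23*v32*v45*v50 - v04*v11*v23*v35*v40*v52 + v04*v11*v23*v35*v42*v50 + v04*v11*v25*v30*v42*v53 - v04*v11*v25*v30*v43*v52 - v04*v11*v25*v32*v40*v53 + v04*v11*v25*v32*v43*v50 + v04*v11*v25*v33*v40*v52 - v04*v11*v25*v33*v42*v50 + v04*v12*v20*v31*v43*v55 - v04*v12*v20*v31*v45*v53 - v04*v12*v20*v33*v41*v55 + v04*v12*v20*v33*v45*v51 + v04*v12*v20*v35*v41*v53 - v04*v12*v20*v35*v43*v51 - v04*v12*v21*v30*v43*v55 + v04*v12*v21*v30*v45*v53 + v04*v12*v21*v33*v40*v55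 - v04*v12*v21*v33*v45*v50 - v04*v12*v21*v35*v40*v53 + v04*v12*v21*v35*v43*v50 + v04*v12*v23*v30*v41*v55 - v04*v12*v23*v30*v45*v51 - v04*v12*v23*v31*v40*v55 + v04*v12*v23*v31*v45*v50 + v04*v12*v23*v35*v40*v51 - v04*v12*v23*v35*v41*v50 - v04*v12*v25*v30*v41*v53 + v04*v12*v25*v30*v43*v51 + v04*v12*v25*v31*v40*v53 - v04*v12*v25*v31*v43*v50 - v04*v12*v25*v33*v40*v51 + v04*v12*v25*v33*v41*v50 - v04*v13*v20*v31*v42*v55 + v04*v13*v20*v31*v45*v52 + v04*v13*v20*v32*v41*v55 - v04*v13*v20*v32*v45*v51 - v04*v13*v20*v35*v41*v52 + v04*v13*v20*v35*v42*v51 + v04*v13*v21*v30*v42*v55 - v04*v13*v21*v30*v45*v52 - v04*v13*v21*v32*v40*v55 + v04*v13*v21*v32*v45*v50 + v04*v13*v21*v35*v40*v52 - v04*v13*v21*v35*v42*v50 - v04*v13*v22*v30*v41*v55 + v04*v13*v22*v30*v45*v51 + v04*v13*v22*v31*v40*v55 - v04*v13*v22*v31*v45*v50 - v04*v13*v22*v35*v40*v51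 + v04*v13*v22*v35*v41*v50 + v04*v13*v25*v30*v41*v52 - v04*v13*v25*v30*v42*v51 - v04*v13*v25*v31*v40*v52 + v04*v13*v25*v31*v42*v50 + v04*v13*v25*v32*v40*v51 - v04*v13*v25*v32*v41*v50 + v04*v15*v20*v31*v42*v53 - v04*v15*v20*v31*v43*v52 - v04*v15*v20*v32*v41*v53 + v04*v15*v20*v32*v43*v51 + v04*v15*v20*v33*v41*v52 - v04*v15*v20*v33*v42*v51 - v04*v15*v21*v30*v42*v53 + v04*v15*v21*v30*v43*v52 + v04*v15*v21*v32*v40*v53 - v04*v15*v21*v32*v43*v50 - v04*v15*v21*v33*v40*v52 + v04*v15*v21*v33*v42*v50 + v04*v15*v22*v30*v41*v53 - v04*v15*v22*v30*v43*v51 - v04*v15*v22*v31*v40*v53 + v04*v15*v22*v31*v43*v50 + v04*v15*v22*v33*v40*v51 - v04*v15*v22*v33*v41*v50 - v04*v15*v23*v30*v41*v52 + v04*v15*v23*v30*v42*v51 + v04*v15*v23*v31*v40*v52 - v04*v15*v23*v31*v42*v50 - v04*v15*v23*v32*v40*v51 + v04*v15*v23*v32*v41*v50 - v05*v10*v21*v32*v43*v54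 + v05*v10*v21*v32*v44*v53 + v05*v10*v21*v33*v42*v54 - v05*v10*v21*v33*v44*v52 - v05*v10*v21*v34*v42*v53 + v05*v10*v21*v34*v43*v52 + v05*v10*v22*v31*v43*v54 - v05*v10*v22*v31*v44*v53 - v05*v10*v22*v33*v41*v54 + v05*v10*v22*v33*v44*v51 + v05*v10*v22*v34*v41*v53 - v05*v10*v22*v34*v43*v51 - v05*v10*v23*v31*v42*v54 + v05*v10*v23*v31*v44*v52 + v05*v10*v23*v32*v41*v54 - v05*v10*v23*v32*v44*v51 - v05*v10*v23*v34*v41*v52 + v05*v10*v23*v34*v42*v51 + v05*v10*v24*v31*v42*v53 - v05*v10*v24*v31*v43*v52 - v05*v10*v24*v32*v41*v53 + v05*v10*v24*v32*v43*v51 + v05*v10*v24*v33*v41*v52 - v05*v10*v24*v33*v42*v51 + v05*v11*v20*v32*v43*v54 - v05*v11*v20*v32*v44*v53 - v05*v11*v20*v33*v42*v54 + v05*v11*v20*v33*v44*v52 + v05*v11*v20*v34*v42*v53 - v05*v11*v20*v34*v43*v52 - v05*v11*v22*v30*v43*v54 + v05*v11*v22*v30*v44*v53 + v05*v11*v22*v33*v40*v54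 - v05*v11*v22*v33*v44*v50 - v05*v11*v22*v34*v40*v53 + v05*v11*v22*v34*v43*v50 + v05*v11*v23*v30*v42*v54 - v05*v11*v23*v30*v44*v52 - v05*v11*v23*v32*v40*v54 + v05*v11*v23*v32*v44*v50 + v05*v11*v23*v34*v40*v52 - v05*v11*v23*v34*v42*v50 - v05*v11*v24*v30*v42*v53 + v05*v11*v24*v30*v43*v52 + v05*v11*v24*v32*v40*v53 - v05*v11*v24*v32*v43*v50 - v05*v11*v24*v33*v40*v52 + v05*v11*v24*v33*v42*v50 - v05*v12*v20*v31*v43*v54 + v05*v12*v20*v31*v44*v53 + v05*v12*v20*v33*v41*v54 - v05*v12*v20*v33*v44*v51 - v05*v12*v20*v34*v41*v53 + v05*v12*v20*v34*v43*v51 + v05*v12*v21*v30*v43*v54 - v05*v12*v21*v30*v44*v53 - v05*v12*v21*v33*v40*v54 + v05*v12*v21*v33*v44*v50 + v05*v12*v21*v34*v40*v53 - v05*v12*v21*v34*v43*v50 - v05*v12*v23*v30*v41*v54 + v05*v12*v23*v30*v44*v51 + v05*v12*v23*v31*v40*v54 - v05*v12*v23*v31*v44*v50 - v05*v12*v23*v34*v40*v51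 + v05*v12*v23*v34*v41*v50 + v05*v12*v24*v30*v41*v53 - v05*v12*v24*v30*v43*v51 - v05*v12*v24*v31*v40*v53 + v05*v12*v24*v31*v43*v50 + v05*v12*v24*v33*v40*v51 - v05*v12*v24*v33*v41*v50 + v05*v13*v20*v31*v42*v54 - v05*v13*v20*v31*v44*v52 - v05*v13*v20*v32*v41*v54 + v05*v13*v20*v32*v44*v51 + v05*v13*v20*v34*v41*v52 - v05*v13*v20*v34*v42*v51 - v05*v13*v21*v30*v42*v54 + v05*v13*v21*v30*v44*v52 + v05*v13*v21*v32*v40*v54 - v05*v13*v21*v32*v44*v50 - v05*v13*v21*v34*v40*v52 + v05*v13*v21*v34*v42*v50 + v05*v13*v22*v30*v41*v54 - v05*v13*v22*v30*v44*v51 - v05*v13*v22*v31*v40*v54 + v05*v13*v22*v31*v44*v50 + v05*v13*v22*v34*v40*v51 - v05*v13*v22*v34*v41*v50 - v05*v13*v24*v30*v41*v52 + v05*v13*v24*v30*v42*v51 + v05*v13*v24*v31*v40*v52 - v05*v13*v24*v31*v42*v50 - v05*v13*v24*v32*v40*v51 + v05*v13*v24*v32*v41*v50 - v05*v14*v20*v31*v42*v53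 + v05*v14*v20*v31*v43*v52 + v05*v14*v20*v32*v41*v53 - v05*v14*v20*v32*v43*v51 - v05*v14*v20*v33*v41*v52 + v05*v14*v20*v33*v42*v51 + v05*v14*v21*v30*v42*v53 - v05*v14*v21*v30*v43*v52 - v05*v14*v21*v32*v40*v53 + v05*v14*v21*v32*v43*v50 + v05*v14*v21*v33*v40*v52 - v05*v14*v21*v33*v42*v50 - v05*v14*v22*v30*v41*v53 + v05*v14*v22*v30*v43*v51 + v05*v14*v22*v31*v40*v53 - v05*v14*v22*v31*v43*v50 - v05*v14*v22*v33*v40*v51 + v05*v14*v22*v33*v41*v50 + v05*v14*v23*v30*v41*v52 - v05*v14*v23*v30*v42*v51 - v05*v14*v23*v31*v40*v52 + v05*v14*v23*v31*v42*v50 + v05*v14*v23*v32*v40*v51 - v05*v14*v23*v32*v41*v50 := by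
  rw [det_fin_six']
  simp only [Matrix.of_apply, cv6_0, cv6_1, cv6_2, cv6_3, cv6_4, cv6_5]

private theorem cross0 (u v : Fin 3 → ℂ) : (crossProduct u v) 0 = u 1 * v 2 - u 2 * v 1 := rfl
private theorem cross1 (u v : Fin 3 → ℂ) : (crossProduct u v) 1 = u 2 * v 0 - u 0 * v 2 := rfl
private theorem cross2 (u v : Fin 3 → ℂ) : (crossProduct u v) 2 = u 0 * v 1 - u 1 * v 0 := rfl

private theorem det3_explicit (u v w : Fin 3 → ℂ) :
    (Matrix.of ![u, v, w]).det = u 0 * v 1 * w 2 - u 0 * v 2 * w 1 - u 1 * v 0 * w 2 + u 1 * v 2 * w 0 + u 2 * v 0 * w 1 - u 2 * v 1 * w 0 := by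
  rw [Matrix.det_fin_three]
  ring_nf
  rfl

noncomputable def ver (p : Fin 3 → ℂ) : Fin 6 → ℂ := ![p 0^2, p 1^2, p 2^2, p 0*p 1, p 0*p 2, p 1*p 2]

set_option maxHeartbeats 10000000 in
set_option maxRecDepth 100000 in
private theorem pascal_key (A B C a b c : Fin 3 → ℂ) :
    Matrix.det (Matrix.of ![crossProduct (crossProduct A a) (crossProduct b C),
      crossProduct (crossProduct B b) (crossProduct c A),
      crossProduct (crossProduct C c) (crossProduct a B)]) =
    - Matrix.det (Matrix.of ![ver A, ver B, ver C, ver a, ver b, ver c]) := by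
  rw [det3_explicit]
  simp only [ver]
  rw [det6_explicit]
  simp only [cross0, cross1, cross2]
  ring


noncomputable def m200 : Fin 3 →₀ ℕ := Finsupp.single 0 2
noncomputable def m020 : Fin 3 →₀ ℕ := Finsupp.single 1 2
noncomputable def m002 : Fin 3 →₀ ℕ := Finsupp.single 2 2
noncomputable def m110 : Fin 3 →₀ ℕ := Finsupp.single 0 1 + Finsupp.single 1 1
noncomputable def m101 : Fin 3 →₀ ℕ := Finsupp.single 0 1 + Finsupp.single 2 1
noncomputable def m011 : Fin 3 →₀ ℕ := Finsupp.single 1 1 + Finsupp.single 2 1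

lemma mem_deg2 (d : Fin 3 →₀ ℕ) (hd : d.degree = 2) :
    d = m200 ∨ d = m020 ∨ d = m002 ∨ d = m110 ∨ d = m101 ∨ d = m011 := by
  have hsum : d 0 + d 1 + d 2 = 2 := by
    have h : d.degree = ∑ i : Fin 3, d i :=
      Finset.sum_subset (Finset.subset_univ _)
        (fun i _ hi => Finsupp.notMem_support_iff.mp hi)
    rw [h, Fin.sum_univ_three] at hd
    exact hd
  have hext : ∀ e : Fin 3 →₀ ℕ, d 0 = e 0 → d 1 = e 1 → d 2 = e 2 → d = e := by
    intro e h0 h1 h2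
    ext i; fin_cases i <;> assumption
  have h0 : d 0 ≤ 2 := by omega
  have h1 : d 1 ≤ 2 := by omega
  interval_cases hd0 : d 0 <;> interval_cases hd1 : d 1 <;>
    first
    | (left; apply hext <;> simp [m200, Finsupp.single_apply] <;> omega)
    | (right; left; apply hext <;> simp [m020, Finsupp.single_apply] <;> omega)
    | (right; right; left; apply hext <;> simp [m002, Finsupp.single_apply] <;> omega)
    | (right; right; right; left; apply hext <;>
        simp [m110, Finsupp.add_apply, Finsupp.single_apply] <;> omega)
    | (right; right; right; right; left; apply hext <;>
        simp [m101, Finsupp.add_apply, Finsupp.single_apply] <;> omega)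
    | (right; right; right; right; right; apply hext <;>
        simp [m011, Finsupp.add_apply, Finsupp.single_apply] <;> omega)
    | omega

lemma mapp : (m200 0 = 2 ∧ m200 1 = 0 ∧ m200 2 = 0) ∧ (m020 0 = 0 ∧ m020 1 = 2 ∧ m020 2 = 0)
    ∧ (m002 0 = 0 ∧ m002 1 = 0 ∧ m002 2 = 2) ∧ (m110 0 = 1 ∧ m110 1 = 1 ∧ m110 2 = 0)
    ∧ (m101 0 = 1 ∧ m101 1 = 0 ∧ m101 2 = 1) ∧ (m011 0 = 0 ∧ m011 1 = 1 ∧ m011 2 = 1) := by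
  refine ⟨⟨?_,?_,?_⟩,⟨?_,?_,?_⟩,⟨?_,?_,?_⟩,⟨?_,?_,?_⟩,⟨?_,?_,?_⟩,⟨?_,?_,?_⟩⟩ <;>
    simp [m200, m020, m002, m110, m101, m011, Finsupp.single_apply]

lemma eval_homog2 (Q : MvPolynomial (Fin 3) ℂ) (hQ : Q.IsHomogeneous 2) (p : Fin 3 → ℂ) :
    eval p Q = coeff m200 Q * p 0^2 + coeff m020 Q * p 1^2 + coeff m002 Q * p 2^2
      + coeff m110 Q * (p 0 * p 1) + coeff m101 Q * (p 0 * p 2) + coeff m011 Q * (p 1 * p 2) := by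
  classical
  obtain ⟨⟨a1,a2,a3⟩,⟨b1,b2,b3⟩,⟨c1,c2,c3⟩,⟨d1,d2,d3⟩,⟨e1,e2,e3⟩,⟨f1,f2,f3⟩⟩ := mapp
  have hne : m200 ≠ m020 ∧ m200 ≠ m002 ∧ m200 ≠ m110 ∧ m200 ≠ m101 ∧ m200 ≠ m011
      ∧ m020 ≠ m002 ∧ m020 ≠ m110 ∧ m020 ≠ m101 ∧ m020 ≠ m011
      ∧ m002 ≠ m110 ∧ m002 ≠ m101 ∧ m002 ≠ m011
      ∧ m110 ≠ m101 ∧ m110 ≠ m011 ∧ m101 ≠ m011 := by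
    refine ⟨?_,?_,?_,?_,?_,?_,?_,?_,?_,?_,?_,?_,?_,?_,?_⟩ <;> intro h <;>
      first
      | (have := DFunLike.congr_fun h 0; omega)
      | (have := DFunLike.congr_fun h 1; omega)
      | (have := DFunLike.congr_fun h 2; omega)
  obtain ⟨n1,n2,n3,n4,n5,n6,n7,n8,n9,n10,n11,n12,n13,n14,n15⟩ := hne
  rw [eval_eq']
  have hsub : Q.support ⊆ ({m200, m020, m002, m110, m101, m011} : Finset (Fin 3 →₀ ℕ)) := by
    intro d hd
    have hdeg : d.degree = 2 := by
      by_contra h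
      exact (MvPolynomial.mem_support_iff.mp hd) (hQ.coeff_eq_zero h)
    rcases mem_deg2 d hdeg with h|h|h|h|h|h <;> subst h <;>
      simp [Finset.mem_insert]
  rw [Finset.sum_subset hsub (fun d _ hd => by
    rw [MvPolynomial.notMem_support_iff.mp hd, zero_mul])]
  rw [show ({m200, m020, m002, m110, m101, m011} : Finset (Fin 3 →₀ ℕ))
      = insert m200 (insert m020 (insert m002 (insert m110 (insert m101 {m011})))) from rfl]
  rw [Finset.sum_insert (by simp [n1,n2,n3,n4,n5]),
      Finset.sum_insert (by simp [n6,n7,n8,n9]),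
      Finset.sum_insert (by simp [n10,n11,n12]),
      Finset.sum_insert (by simp [n13,n14]),
      Finset.sum_insert (by simp [n15]),
      Finset.sum_singleton]
  rw [Fin.prod_univ_three, Fin.prod_univ_three, Fin.prod_univ_three,
      Fin.prod_univ_three, Fin.prod_univ_three, Fin.prod_univ_three]
  rw [a1,a2,a3,b1,b2,b3,c1,c2,c3,d1,d2,d3,e1,e2,e3,f1,f2,f3]
  ring


/-- Pascal's theorem: if `A, B, C, a, b, c` are six distinct points on an irreducible
conic in ℙ²(ℂ), then the three intersection points `Aa ∩ bC`, `Bb ∩ cA`, `Cc ∩ aB`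
(assumed to be genuine points lying off the conic; lines and intersections are
computed by cross products of homogeneous coordinates) are collinear. -/
theorem pascal_theorem
    (Q : MvPolynomial (Fin 3) ℂ) (hQ : Q.IsHomogeneous 2) (hQirr : Irreducible Q)
    (A B C a b c : Fin 3 → ℂ)
    (hA : A ≠ 0) (hB : B ≠ 0) (hC : C ≠ 0) (ha : a ≠ 0) (hb : b ≠ 0) (hc : c ≠ 0)
    (hdist : ∀ u v : Fin 3 → ℂ, u ∈ ({A, B, C, a, b, c} : Set (Fin 3 → ℂ)) →
      v ∈ ({A, B, C, a, b, c} : Set (Fin 3 → ℂ)) → u ≠ v → ∀ t : ℂ, v ≠ t • u)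
    (hQA : eval A Q = 0) (hQB : eval B Q = 0) (hQC : eval C Q = 0)
    (hQa : eval a Q = 0) (hQb : eval b Q = 0) (hQc : eval c Q = 0)
    -- the three pairwise intersection points of the cross lines
    (X Y Z : Fin 3 → ℂ)
    (hX : X = crossProduct (crossProduct A a) (crossProduct b C))
    (hY : Y = crossProduct (crossProduct B b) (crossProduct c A))
    (hZ : Z = crossProduct (crossProduct C c) (crossProduct a B))
    (hX0 : X ≠ 0) (hY0 : Y ≠ 0) (hZ0 : Z ≠ 0)
    (hXQ : eval X Q ≠ 0) (hYQ : eval Y Q ≠ 0) (hZQ : eval Z Q ≠ 0) :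
    Matrix.det (Matrix.of ![X, Y, Z]) = 0 := by
  classical
  set q : Fin 6 → ℂ := ![coeff m200 Q, coeff m020 Q, coeff m002 Q,
    coeff m110 Q, coeff m101 Q, coeff m011 Q] with hqdef
  have hq0 : q ≠ 0 := by
    intro h
    have hc6 : ∀ j : Fin 6, q j = 0 := fun j => congrFun h j
    have hQ0 : Q = 0 := by
      ext d
      rw [MvPolynomial.coeff_zero]
      by_cases hdeg : d.degree = 2
      · rcases mem_deg2 d hdeg with h'|h'|h'|h'|h'|h' <;> subst h'
        · simpa [hqdef] using hc6 0
        · simpa [hqdef] using hc6 1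
        · simpa [hqdef] using hc6 2
        · simpa [hqdef] using hc6 3
        · simpa [hqdef] using hc6 4
        · simpa [hqdef] using hc6 5
      · exact hQ.coeff_eq_zero hdeg
    exact not_irreducible_zero (hQ0 ▸ hQirr)
  have hker : (Matrix.of ![ver A, ver B, ver C, ver a, ver b, ver c]).mulVec q = 0 := by
    funext i
    fin_cases i <;>
      simp only [Matrix.mulVec, dotProduct, Fin.sum_univ_six, Matrix.of_apply, hqdef, ver,
        fmk0, fmk1, fmk2, fmk3, fmk4, fmk5, cv6_0, cv6_1, cv6_2, cv6_3, cv6_4, cv6_5,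
        Pi.zero_apply] <;>
      [ linear_combination hQA - eval_homog2 Q hQ A;
        linear_combination hQB - eval_homog2 Q hQ B;
        linear_combination hQC - eval_homog2 Q hQ C;
        linear_combination hQa - eval_homog2 Q hQ a;
        linear_combination hQb - eval_homog2 Q hQ b;
        linear_combination hQc - eval_homog2 Q hQ c ]
  have hdetV : (Matrix.of ![ver A, ver B, ver C, ver a, ver b, ver c]).det = 0 := by
    rw [← Matrix.exists_mulVec_eq_zero_iff]
    exact ⟨q, hq0, hker⟩
  rw [hX, hY, hZ, pascal_key A B C a b c, hdetV, neg_zero]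
end

section
/- Braikenridge–Maclaurin theorem: Suppose three red lines meet three blue lines in ℙ²(ℂ) in 9 distinct points, and 3 of these points lie on a line L not containing any of the other 6 points. Then the remaining 6 points lie on a (possibly degenerate) conic. -/
/-!
Let `F₁ = ∏ lᵢ` and `F₂ = ∏ mⱼ`. On the line `L ≅ ℙ¹` both cubics vanish at the three points of
`s`, and binary cubics with three common zeros are proportional, so some member `G ≠ 0` of the
pencil spanned by `F₁` and `F₂` vanishes on `L`. Then `G = L * Q`, and `Q` is the conic, because
`L` contains none of the other six points. The only obstruction is `F₂ ∈ ℂ F₁`: then every red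
line is a blue line, and the distinctness of the nine points forces all blue lines to coincide,
so that the double line `m₀²` passes through all nine points.
-/

open MvPolynomial

theorem linearIndependent_pair_iff_det_ne_zero {K : Type*} [Field K] (p q : Fin 2 → K) :
    LinearIndependent K ![p, q] ↔ p 0 * q 1 - p 1 * q 0 ≠ 0 := by
  rw [← Matrix.det_fin_two_of, ← isUnit_iff_ne_zero, ← Matrix.isUnit_iff_isUnit_det,
    ← Matrix.linearIndependent_rows_iff_isUnit]
  convert Iff.rfl using 2
  ext i j; fin_cases i <;> fin_cases j <;> rfl

namespace MvPolynomial

section CommRing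

variable {σ R : Type*} [CommRing R] {φ ψ : MvPolynomial σ R} {m n : ℕ}

theorem IsHomogeneous.eval_smul (hφ : φ.IsHomogeneous n) (c : R) (x : σ → R) :
    eval (c • x) φ = c ^ n * eval x φ := by
  simp only [eval_eq, Finset.mul_sum]
  refine Finset.sum_congr rfl fun d hd => ?_
  simp only [Pi.smul_apply, smul_eq_mul, mul_pow, Finset.prod_mul_distrib,
    Finset.prod_pow_eq_pow_sum, ← hφ.degree_eq_sum_deg_support hd]
  ring

theorem IsHomogeneous.eq_C_coeff_zero (hφ : φ.IsHomogeneous 0) : φ = C (coeff 0 φ) :=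
  totalDegree_eq_zero_iff_eq_C.1 ((totalDegree_zero_iff_isHomogeneous _).2 hφ)

attribute [local instance] gradedAlgebra in
theorem IsHomogeneous.of_mul_left [IsDomain R] (hφ : φ.IsHomogeneous m) (hφ0 : φ ≠ 0)
    (h : (φ * ψ).IsHomogeneous (m + n)) : ψ.IsHomogeneous n := by
  have hcomp : homogeneousComponent (m + n) (φ * ψ) = φ * homogeneousComponent n ψ := by
    have := DirectSum.coe_decompose_mul_add_of_left_mem (homogeneousSubmodule σ R) (j := n)
      ((mem_homogeneousSubmodule m φ).2 hφ) (b := ψ)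
    erw [decomposition.decompose'_apply, decomposition.decompose'_apply] at this
    exact this
  rw [homogeneousComponent_eq_self h] at hcomp
  rw [mul_left_cancel₀ hφ0 hcomp]
  exact homogeneousComponent_isHomogeneous n ψ

end CommRing

section Field

open Matrix

variable {σ K : Type*} [Field K]

theorem prime_of_isHomogeneous_one {ℓ : MvPolynomial σ K} (hℓ : ℓ.IsHomogeneous 1)
    (hℓ0 : ℓ ≠ 0) : Prime ℓ :=
  (irreducible_of_totalDegree_eq_one (hℓ.totalDegree hℓ0) fun r hr =>
    isUnit_iff_ne_zero.2 fun h0 => hℓ0 <| MvPolynomial.ext _ _ fun d => by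
      simpa [h0] using hr d).prime

theorem _root_.Associated.eval_eq_zero_iff {p q : MvPolynomial σ K} (h : Associated p q)
    (x : σ → K) : eval x p = 0 ↔ eval x q = 0 := by
  obtain ⟨u, rfl⟩ := h
  simp [(u.isUnit.map (eval x)).ne_zero]

theorem exists_associated_of_dvd_prod {ι : Type*} [Fintype ι] {ℓ : MvPolynomial σ K}
    (hℓ : ℓ.IsHomogeneous 1) (hℓ0 : ℓ ≠ 0) {m : ι → MvPolynomial σ K}
    (hm : ∀ j, (m j).IsHomogeneous 1) (hm0 : ∀ j, m j ≠ 0) (h : ℓ ∣ ∏ j, m j) :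
    ∃ j, Associated ℓ (m j) := by
  obtain ⟨j, -, hj⟩ := ((prime_of_isHomogeneous_one hℓ hℓ0).dvd_finsetProd_iff m).1 h
  exact ⟨j, (prime_of_isHomogeneous_one hℓ hℓ0).associated_of_dvd
    (prime_of_isHomogeneous_one (hm j) (hm0 j)) hj⟩

theorem dvd_of_forall_eval_eq_zero [IsAlgClosed K] [Finite σ] {p q : MvPolynomial σ K}
    (hp : Prime p) (h : ∀ x, eval x p = 0 → eval x q = 0) : p ∣ q := by
  have : (Ideal.span {p}).IsPrime := (Ideal.span_singleton_prime hp.ne_zero).2 hp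
  rw [← Ideal.mem_span_singleton,
    ← IsPrime.vanishingIdeal_zeroLocus (Ideal.span {p}) (K := K)]
  exact fun x hx => by simpa using h x (by simpa using hx p (Ideal.mem_span_singleton_self p))

noncomputable def substLinear {τ : Type*} [Fintype τ] (M : Matrix σ τ K) :
    MvPolynomial σ K →ₐ[K] MvPolynomial τ K :=
  aeval fun i => ∑ j, C (M i j) * X j

theorem eval_substLinear {τ : Type*} [Fintype τ] (M : Matrix σ τ K) (G : MvPolynomial σ K)
    (p : τ → K) : eval p (substLinear M G) = eval (M *ᵥ p) G := by
  induction G using MvPolynomial.induction_on <;> simp_all [substLinear, mulVec, dotProduct]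

theorem IsHomogeneous.substLinear {τ : Type*} [Fintype τ] {G : MvPolynomial σ K} {n : ℕ}
    (hG : G.IsHomogeneous n) (M : Matrix σ τ K) : (substLinear M G).IsHomogeneous n := by
  simpa [MvPolynomial.substLinear] using
    hG.aeval _ fun i => IsHomogeneous.sum _ _ _ fun j _ => isHomogeneous_C_mul_X (M i j) j

end Field

section BinaryForm

variable {K : Type*} [Field K]

noncomputable def detForm (p : Fin 2 → K) : MvPolynomial (Fin 2) K :=
  C (p 0) * X 1 - C (p 1) * X 0

theorem eval_detForm (p q : Fin 2 → K) : eval q (detForm p) = p 0 * q 1 - p 1 * q 0 := by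
  simp [detForm]

theorem isHomogeneous_detForm (p : Fin 2 → K) : (detForm p).IsHomogeneous 1 :=
  (isHomogeneous_C_mul_X _ _).sub (isHomogeneous_C_mul_X _ _)

theorem detForm_ne_zero {p : Fin 2 → K} (hp : p ≠ 0) : detForm p ≠ 0 := by
  intro h
  apply hp
  have h0 := congrArg (eval ![1, 0]) h
  have h1 := congrArg (eval ![0, 1]) h
  simp [eval_detForm] at h0 h1
  ext i; fin_cases i <;> simp [h0, h1]

variable [IsAlgClosed K] {ι : Type*} {f g : MvPolynomial (Fin 2) K} {n : ℕ} {s : Finset ι}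
  {y : ι → Fin 2 → K}

theorem IsHomogeneous.exists_eq_detForm_mul [DecidableEq ι] (hf : f.IsHomogeneous (n + 1))
    (hy : (s : Set ι).Pairwise fun i j => LinearIndependent K ![y i, y j])
    {i : ι} (hi : i ∈ s) (hyi : y i ≠ 0) (hfy : ∀ j ∈ s, eval (y j) f = 0) :
    ∃ g, g.IsHomogeneous n ∧ f = detForm (y i) * g ∧
      ∀ j ∈ s.erase i, eval (y j) g = 0 := by
  have hℓ := isHomogeneous_detForm (y i)
  have hℓ0 := detForm_ne_zero hyi
  obtain ⟨g, rfl⟩ : detForm (y i) ∣ f := by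
    refine dvd_of_forall_eval_eq_zero (prime_of_isHomogeneous_one hℓ hℓ0) fun z hz => ?_
    -- the zeros of `detForm (y i)` are the multiples of `y i`, where `f` vanishes by homogeneity
    obtain ⟨a, rfl⟩ : ∃ a : K, a • y i = z := by
      by_contra! h
      rw [eval_detForm] at hz
      exact (linearIndependent_pair_iff_det_ne_zero _ _).1
        ((LinearIndependent.pair_iff' hyi).2 h) hz
    rw [hf.eval_smul, hfy i hi, mul_zero]
  refine ⟨g, hℓ.of_mul_left hℓ0 (by rwa [add_comm] at hf), rfl, fun j hj => ?_⟩
  obtain ⟨hji, hj⟩ := Finset.mem_erase.1 hj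
  have hdet := (linearIndependent_pair_iff_det_ne_zero _ _).1 (hy hi hj hji.symm)
  rw [← eval_detForm] at hdet
  simpa [hdet] using hfy j hj

theorem IsHomogeneous.eq_zero_of_lt_card (hf : f.IsHomogeneous n)
    (hy : (s : Set ι).Pairwise fun i j => LinearIndependent K ![y i, y j])
    (hs : n < s.card) (hfy : ∀ i ∈ s, eval (y i) f = 0) : f = 0 := by
  classical
  induction n generalizing f s with
  | zero =>
    obtain ⟨i, hi⟩ := Finset.card_pos.1 hs
    rw [hf.eq_C_coeff_zero] at hfy ⊢
    simpa using hfy i hi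
  | succ n ih =>
    obtain ⟨i, hi, j, hj, hij⟩ := Finset.one_lt_card.1 (show 1 < s.card by omega)
    obtain ⟨g, hg, rfl, hgy⟩ := hf.exists_eq_detForm_mul hy hi ((hy hi hj hij).ne_zero 0) hfy
    rw [ih hg (hy.mono (by simp)) (by rw [Finset.card_erase_of_mem hi]; omega) hgy, mul_zero]

theorem IsHomogeneous.exists_eq_C_mul_of_le_card (hf : f.IsHomogeneous n)
    (hg : g.IsHomogeneous n) (hf0 : f ≠ 0)
    (hy : (s : Set ι).Pairwise fun i j => LinearIndependent K ![y i, y j])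
    (hy0 : ∀ i ∈ s, y i ≠ 0) (hs : n ≤ s.card) (hfy : ∀ i ∈ s, eval (y i) f = 0)
    (hgy : ∀ i ∈ s, eval (y i) g = 0) : ∃ c, g = C c * f := by
  classical
  induction n generalizing f g s with
  | zero =>
    obtain ⟨a, rfl⟩ : ∃ a, f = C a := ⟨_, hf.eq_C_coeff_zero⟩
    obtain ⟨b, rfl⟩ : ∃ b, g = C b := ⟨_, hg.eq_C_coeff_zero⟩
    have ha : a ≠ 0 := by rintro rfl; simp at hf0
    exact ⟨b / a, by rw [← MvPolynomial.C_mul, div_mul_cancel₀ b ha]⟩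
  | succ n ih =>
    obtain ⟨i, hi⟩ := Finset.card_pos.1 (show 0 < s.card by omega)
    obtain ⟨f', hf', rfl, hfy'⟩ := hf.exists_eq_detForm_mul hy hi (hy0 i hi) hfy
    obtain ⟨g', hg', rfl, hgy'⟩ := hg.exists_eq_detForm_mul hy hi (hy0 i hi) hgy
    obtain ⟨c, rfl⟩ := ih hf' hg' (right_ne_zero_of_mul hf0) (hy.mono (by simp))
      (fun j hj => hy0 j (Finset.mem_of_mem_erase hj))
      (by rw [Finset.card_erase_of_mem hi]; omega) hfy' hgy'
    exact ⟨c, by ring⟩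

end BinaryForm

section ProjectivePlane

open Matrix

variable {K : Type*} [Field K]

theorem exists_mulVec_eq_of_eval_eq_zero [Infinite K] {n : ℕ}
    {ℓ : MvPolynomial (Fin (n + 1)) K} (hℓ : ℓ.IsHomogeneous 1) (hℓ0 : ℓ ≠ 0) :
    ∃ M : Matrix (Fin (n + 1)) (Fin n) K, ∀ z, eval z ℓ = 0 → ∃ p, M *ᵥ p = z := by
  obtain ⟨c, hc⟩ := (Submodule.mem_span_range_iff_exists_fun K).1
    (by rw [← homogeneousSubmodule_one_eq_span_X]; exact hℓ)
  let f : Module.Dual K (Fin (n + 1) → K) := Fintype.linearCombination K c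
  have hf : ∀ z, f z = eval z ℓ := fun z => by
    simp [f, ← hc, Fintype.linearCombination_apply, mul_comm]
  have hf0 : f ≠ 0 := fun h => hℓ0 (MvPolynomial.funext fun z => by simp [← hf, h])
  have hker : Module.finrank K (LinearMap.ker f) = n := by
    have := Module.Dual.finrank_ker_add_one_of_ne_zero hf0
    simpa using this
  let b := Module.finBasisOfFinrankEq K (LinearMap.ker f) hker
  refine ⟨LinearMap.toMatrix' ((LinearMap.ker f).subtype ∘ₗ b.equivFun.symm.toLinearMap),
    fun z hz => ⟨b.equivFun ⟨z, by simp [hf, hz]⟩, by simp [LinearMap.toMatrix'_mulVec]⟩⟩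

variable [IsAlgClosed K] {ι : Type*} {ℓ : MvPolynomial (Fin 3) K} {s : Finset ι}
  {x : ι → Fin 3 → K}

theorem exists_coordinates_on_line (hℓ : ℓ.IsHomogeneous 1) (hℓ0 : ℓ ≠ 0)
    (hx : (s : Set ι).Pairwise fun i j => LinearIndependent K ![x i, x j])
    (hxℓ : ∀ i ∈ s, eval (x i) ℓ = 0) :
    ∃ (M : Matrix (Fin 3) (Fin 2) K) (y : ι → Fin 2 → K),
      (s : Set ι).Pairwise (fun i j => LinearIndependent K ![y i, y j]) ∧
      (∀ i ∈ s, M *ᵥ y i = x i) ∧ ∀ G, substLinear M G = 0 → ℓ ∣ G := by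
  obtain ⟨M, hM⟩ := exists_mulVec_eq_of_eval_eq_zero hℓ hℓ0
  choose! y hy using fun i (hi : i ∈ s) => hM (x i) (hxℓ i hi)
  refine ⟨M, y, fun i hi j hj hij => ?_, hy, fun G hG => ?_⟩
  · refine LinearIndependent.of_comp M.mulVecLin ?_
    convert hx hi hj hij using 1
    ext k : 1
    fin_cases k <;> simp [hy i hi, hy j hj]
  · refine dvd_of_forall_eval_eq_zero (prime_of_isHomogeneous_one hℓ hℓ0) fun z hz => ?_
    obtain ⟨p, rfl⟩ := hM z hz
    rw [← eval_substLinear, hG, map_zero]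

theorem dvd_of_lt_card (hℓ : ℓ.IsHomogeneous 1) (hℓ0 : ℓ ≠ 0) {G : MvPolynomial (Fin 3) K}
    {n : ℕ} (hG : G.IsHomogeneous n)
    (hx : (s : Set ι).Pairwise fun i j => LinearIndependent K ![x i, x j])
    (hs : n < s.card) (hxℓ : ∀ i ∈ s, eval (x i) ℓ = 0)
    (hxG : ∀ i ∈ s, eval (x i) G = 0) : ℓ ∣ G := by
  obtain ⟨M, y, hy, hMy, hdvd⟩ := exists_coordinates_on_line hℓ hℓ0 hx hxℓ
  exact hdvd G <| (hG.substLinear M).eq_zero_of_lt_card hy hs fun i hi => by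
    rw [eval_substLinear, hMy i hi, hxG i hi]

theorem dvd_or_exists_dvd_sub_C_mul (hℓ : ℓ.IsHomogeneous 1) (hℓ0 : ℓ ≠ 0)
    {F₁ F₂ : MvPolynomial (Fin 3) K} {n : ℕ} (hF₁ : F₁.IsHomogeneous n)
    (hF₂ : F₂.IsHomogeneous n)
    (hx : (s : Set ι).Pairwise fun i j => LinearIndependent K ![x i, x j])
    (hx0 : ∀ i ∈ s, x i ≠ 0) (hs : n ≤ s.card) (hxℓ : ∀ i ∈ s, eval (x i) ℓ = 0)
    (hxF₁ : ∀ i ∈ s, eval (x i) F₁ = 0) (hxF₂ : ∀ i ∈ s, eval (x i) F₂ = 0) :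
    ℓ ∣ F₁ ∨ ∃ c, ℓ ∣ F₂ - C c * F₁ := by
  obtain ⟨M, y, hy, hMy, hdvd⟩ := exists_coordinates_on_line hℓ hℓ0 hx hxℓ
  by_cases h₁ : substLinear M F₁ = 0
  · exact .inl (hdvd F₁ h₁)
  obtain ⟨c, hc⟩ := (hF₁.substLinear M).exists_eq_C_mul_of_le_card (hF₂.substLinear M) h₁
    hy (fun i hi h => hx0 i hi (by rw [← hMy i hi, h, mulVec_zero])) hs
    (fun i hi => by rw [eval_substLinear, hMy i hi, hxF₁ i hi])
    (fun i hi => by rw [eval_substLinear, hMy i hi, hxF₂ i hi])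
  exact .inr ⟨c, hdvd _ (by simp [hc])⟩

theorem associated_of_eval_eq_zero {ℓ' : MvPolynomial (Fin 3) K} (hℓ : ℓ.IsHomogeneous 1)
    (hℓ0 : ℓ ≠ 0) (hℓ' : ℓ'.IsHomogeneous 1) (hℓ'0 : ℓ' ≠ 0) {p q : Fin 3 → K}
    (hpq : LinearIndependent K ![p, q]) (hp : eval p ℓ = 0) (hq : eval q ℓ = 0)
    (hp' : eval p ℓ' = 0) (hq' : eval q ℓ' = 0) : Associated ℓ ℓ' := by
  refine (prime_of_isHomogeneous_one hℓ hℓ0).irreducible.associated_of_dvd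
    (prime_of_isHomogeneous_one hℓ' hℓ'0).irreducible
    (dvd_of_lt_card hℓ hℓ0 hℓ' (s := Finset.univ) (x := ![p, q]) ?_ (by simp) ?_ ?_)
  · intro i _ j _ hij
    fin_cases i <;> fin_cases j
    · exact absurd rfl hij
    · simpa using hpq
    · simpa using LinearIndependent.pair_symm_iff.1 hpq
    · exact absurd rfl hij
  all_goals intro i _; fin_cases i <;> simpa

theorem associated_of_prod_eq_C_mul_prod {ι : Type*} [Fintype ι]
    {l m : ι → MvPolynomial (Fin 3) K} (hl : ∀ i, (l i).IsHomogeneous 1)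
    (hm : ∀ j, (m j).IsHomogeneous 1) (hl0 : ∀ i, l i ≠ 0) (hm0 : ∀ j, m j ≠ 0)
    {P : ι → ι → Fin 3 → K} (hPl : ∀ i j, eval (P i j) (l i) = 0)
    (hPm : ∀ i j, eval (P i j) (m j) = 0)
    (hP : Pairwise fun p q : ι × ι => LinearIndependent K ![P p.1 p.2, P q.1 q.2])
    {c : K} (h : ∏ j, m j = C c * ∏ i, l i) (j₀ j₁ : ι) : Associated (m j₁) (m j₀) := by
  by_contra hne
  have hlm : ∀ i, ∃ j, Associated (l i) (m j) := fun i =>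
    exists_associated_of_dvd_prod (hl i) (hl0 i) hm hm0
      (h ▸ (Finset.dvd_prod_of_mem l (Finset.mem_univ i)).mul_left _)
  choose ρ hρ using hlm
  -- Two red lines equal to the same blue line would both contain the points of a column whose
  -- blue line differs from them; so `ρ` is a bijection, and then the distinct blue lines
  -- `m j₀`, `m j₁` would share two grid points.
  have hρ_inj : ρ.Injective := by
    intro i i' hii'
    by_contra hi
    obtain ⟨j, hj⟩ : ∃ j, ¬Associated (l i) (m j) := by
      by_contra! h
      exact hne ((h j₁).symm.trans (h j₀))
    have hll : Associated (l i') (l i) := (hρ i').trans (hii' ▸ hρ i).symm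
    exact hj <| associated_of_eval_eq_zero (hl i) (hl0 i) (hm j) (hm0 j)
      (hP (show (i, j) ≠ (i', j) by simp [hi])) (hPl i j)
      ((hll.eval_eq_zero_iff _).1 (hPl i' j)) (hPm i j) (hPm i' j)
  obtain ⟨a₀, rfl⟩ := (Finite.injective_iff_surjective.1 hρ_inj) j₀
  obtain ⟨a₁, rfl⟩ := (Finite.injective_iff_surjective.1 hρ_inj) j₁
  have ha : ρ a₀ ≠ ρ a₁ := fun h => hne (h ▸ Associated.refl _)
  exact hne <| associated_of_eval_eq_zero (hm _) (hm0 _) (hm _) (hm0 _)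
    (hP (show (a₀, ρ a₁) ≠ (a₁, ρ a₀) by simp [ha.symm])) (hPm _ _)
    (((hρ a₁).eval_eq_zero_iff _).1 (hPl _ _)) (((hρ a₀).eval_eq_zero_iff _).1 (hPl _ _))
    (hPm _ _)

end ProjectivePlane

end MvPolynomial

/-- Braikenridge–Maclaurin theorem: if three red lines meet three blue lines in
9 distinct points of ℙ²(ℂ), and exactly 3 of these points lie on a line `L`
(which contains none of the other 6 points), then the remaining 6 points lie on a
(possibly degenerate) conic. -/
theorem braikenridge_maclaurin
    (l m : Fin 3 → MvPolynomial (Fin 3) ℂ)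
    (hl : ∀ i, (l i).IsHomogeneous 1) (hm : ∀ j, (m j).IsHomogeneous 1)
    (hl0 : ∀ i, l i ≠ 0) (hm0 : ∀ j, m j ≠ 0)
    (P : Fin 3 → Fin 3 → (Fin 3 → ℂ))
    (hP0 : ∀ i j, P i j ≠ 0)
    (hPl : ∀ i j, eval (P i j) (l i) = 0)
    (hPm : ∀ i j, eval (P i j) (m j) = 0)
    (hPdist : ∀ i j i' j', (i, j) ≠ (i', j') → ∀ c : ℂ, P i' j' ≠ c • P i j)
    (L : MvPolynomial (Fin 3) ℂ) (hL : L.IsHomogeneous 1) (hL0 : L ≠ 0)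
    (s : Finset (Fin 3 × Fin 3)) (hs : s.card = 3)
    (honL : ∀ p : Fin 3 × Fin 3, eval (P p.1 p.2) L = 0 ↔ p ∈ s) :
    ∃ Q : MvPolynomial (Fin 3) ℂ, Q ≠ 0 ∧ Q.IsHomogeneous 2 ∧
      ∀ p : Fin 3 × Fin 3, p ∉ s → eval (P p.1 p.2) Q = 0 := by
  have hP : Pairwise fun p q : Fin 3 × Fin 3 => LinearIndependent ℂ ![P p.1 p.2, P q.1 q.2] :=
    fun p q hpq => (LinearIndependent.pair_iff' (hP0 _ _)).2 fun c h =>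
      hPdist p.1 p.2 q.1 q.2 hpq c h.symm
  by_cases hblue : ∀ j, Associated (m j) (m 0)
  · refine ⟨m 0 * m 0, mul_ne_zero (hm0 0) (hm0 0), (hm 0).mul (hm 0), fun p _ => ?_⟩
    rw [eval_mul, ((hblue p.2).eval_eq_zero_iff _).1 (hPm _ _), zero_mul]
  set F₁ := ∏ i, l i
  set F₂ := ∏ j, m j
  have hF₁ : F₁.IsHomogeneous 3 := by
    simpa [F₁] using IsHomogeneous.prod Finset.univ l (fun _ => 1) fun i _ => hl i
  have hF₂ : F₂.IsHomogeneous 3 := by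
    simpa [F₂] using IsHomogeneous.prod Finset.univ m (fun _ => 1) fun j _ => hm j
  have hF₁P : ∀ i j, eval (P i j) F₁ = 0 := fun i j => by
    simpa [F₁, Finset.prod_eq_zero_iff] using ⟨i, hPl i j⟩
  have hF₂P : ∀ i j, eval (P i j) F₂ = 0 := fun i j => by
    simpa [F₂, Finset.prod_eq_zero_iff] using ⟨j, hPm i j⟩
  obtain ⟨G, hG, hG0, ⟨Q, rfl⟩, hGP⟩ : ∃ G : MvPolynomial (Fin 3) ℂ,
      G.IsHomogeneous 3 ∧ G ≠ 0 ∧ L ∣ G ∧ ∀ i j, eval (P i j) G = 0 := by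
    rcases dvd_or_exists_dvd_sub_C_mul hL hL0 hF₁ hF₂ (hP.set_pairwise s) (fun _ _ => hP0 _ _)
      hs.ge (fun p hp => (honL p).2 hp) (fun _ _ => hF₁P _ _) (fun _ _ => hF₂P _ _)
      with h | ⟨c, h⟩
    · exact ⟨F₁, hF₁, Finset.prod_ne_zero_iff.2 fun i _ => hl0 i, h, hF₁P⟩
    refine ⟨_, hF₂.sub (hF₁.C_mul c), fun h0 => hblue fun j => ?_, h, fun i j => by
      simp [hF₁P, hF₂P]⟩
    exact associated_of_prod_eq_C_mul_prod hl hm hl0 hm0 hPl hPm hP (sub_eq_zero.1 h0) 0 j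
  refine ⟨Q, right_ne_zero_of_mul hG0, hL.of_mul_left hL0 hG, fun p hp => ?_⟩
  have hLQ := hGP p.1 p.2
  rw [eval_mul] at hLQ
  exact (mul_eq_zero.1 hLQ).resolve_left (mt (honL p).1 hp)
end
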